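/- arXiv:2508.06375 — 13 statements merged into one kernel-verified Lean document; each statement's English description precedes it below -/
import Mathlib

section
/- Let β > 0 and let h : (0,∞) → [0,∞) be continuous with lim_{s→0⁺} h(s) = +∞, lim_{s→0⁺} ∫_s^1 √(h(t)) dt = +∞, and lim_{s→0⁺} √(h(s))·exp(−∫_s^1 √(h(t)) dt) = h₀ for some h₀ ≥ 0. Then the function σ defined by σ(s) = exp(−∫_s^1 √(h(t)) dt) for s > 0 and σ(0) = 0 is continuously differentiable on [0,∞); more precisely: σ is differentiable on (0,∞) with σ′(s) = √(h(s))·σ(s), lim_{s→0⁺} σ(s) = 0, σ is differentiable at 0 with σ′(0) = h₀, and lim_{s→0⁺} σ′(s) = h₀. -/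
open Real Filter Set Topology MeasureTheory

/-- Under conditions (contador) and (pereiro), the function
`σ(s) = exp(−∫_s^1 √(h(t)) dt)` for `s > 0`, `σ(0) = 0`, is continuously
differentiable on `[0,∞)`: it is differentiable on `(0,∞)` with
`σ′(s) = √(h(s))·σ(s)`, `σ(s) → 0` as `s → 0⁺`, it is differentiable at `0`
(from the right) with derivative `h₀`, and `σ′(s) → h₀` as `s → 0⁺`. -/
theorem stmt0 (β : ℝ) (hβ : 0 < β) (h : ℝ → ℝ) (h₀ : ℝ) (hh₀ : 0 ≤ h₀)
    (hcont : ContinuousOn h (Set.Ioi 0))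
    (hnonneg : ∀ s > (0 : ℝ), 0 ≤ h s)
    (hlim1 : Tendsto h (𝓝[>] (0 : ℝ)) atTop)
    (hlim2 : Tendsto (fun s => ∫ t in s..1, Real.sqrt (h t)) (𝓝[>] (0 : ℝ)) atTop)
    (hlim3 : Tendsto
      (fun s => Real.sqrt (h s) * Real.exp (-(∫ t in s..1, Real.sqrt (h t))))
      (𝓝[>] (0 : ℝ)) (𝓝 h₀))
    (σ : ℝ → ℝ)
    (hσ : ∀ s > (0 : ℝ), σ s = Real.exp (-(∫ t in s..1, Real.sqrt (h t))))
    (hσ0 : σ 0 = 0) :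
    (∀ s > (0 : ℝ), HasDerivAt σ (Real.sqrt (h s) * σ s) s) ∧
    Tendsto σ (𝓝[>] (0 : ℝ)) (𝓝 0) ∧
    HasDerivWithinAt σ h₀ (Set.Ici 0) 0 ∧
    Tendsto (fun s => Real.sqrt (h s) * σ s) (𝓝[>] (0 : ℝ)) (𝓝 h₀) := by
  set g : ℝ → ℝ := fun t => Real.sqrt (h t) with hg
  have hgcont : ContinuousOn g (Set.Ioi 0) := Real.continuous_sqrt.comp_continuousOn hcont
  set F : ℝ → ℝ := fun s => ∫ t in s..1, g t with hF
  set τ : ℝ → ℝ := fun s => Real.exp (-(F s)) with hτ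
  -- σ agrees with τ on Ioi 0
  have hagree : ∀ s > (0 : ℝ), σ s = τ s := fun s hs => hσ s hs
  have heq : ∀ s > (0 : ℝ), σ =ᶠ[𝓝 s] τ := by
    intro s hs
    filter_upwards [Ioi_mem_nhds hs] with x hx using hagree x hx
  -- derivative on (0, ∞)
  have hderivτ : ∀ s > (0 : ℝ), HasDerivAt τ (g s * τ s) s := by
    intro s hs
    have hsub : Set.uIcc s 1 ⊆ Set.Ioi 0 := by
      intro x hx
      have := hx.1
      rcases le_total s 1 with h1 | h1
      · simp [Set.uIcc_of_le h1] at hx; exact lt_of_lt_of_le hs hx.1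
      · simp [Set.uIcc_of_ge h1] at hx; exact lt_of_lt_of_le one_pos hx.1
    have hint : IntervalIntegrable g MeasureTheory.volume s 1 :=
      (hgcont.mono hsub).intervalIntegrable
    have hmeas : StronglyMeasurableAtFilter g (𝓝 s) :=
      ContinuousOn.stronglyMeasurableAtFilter isOpen_Ioi hgcont s hs
    have hca : ContinuousAt g s := hgcont.continuousAt (Ioi_mem_nhds hs)
    have hFd : HasDerivAt F (-(g s)) s := by
      simpa using intervalIntegral.integral_hasDerivAt_left hint hmeas hca
    have : HasDerivAt τ (Real.exp (-(F s)) * (-(-(g s)))) s :=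
      (hFd.neg.exp)
    simpa [hτ, mul_comm] using this
  have part1 : ∀ s > (0 : ℝ), HasDerivAt σ (Real.sqrt (h s) * σ s) s := by
    intro s hs
    have := (hderivτ s hs).congr_of_eventuallyEq (heq s hs)
    simpa [hagree s hs, hg] using this
  -- tendsto 0
  have hτlim : Tendsto τ (𝓝[>] (0 : ℝ)) (𝓝 0) :=
    Real.tendsto_exp_atBot.comp (tendsto_neg_atTop_atBot.comp hlim2)
  have heq' : σ =ᶠ[𝓝[>] (0 : ℝ)] τ := by
    filter_upwards [self_mem_nhdsWithin] with x hx using hagree x hx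
  have part2 : Tendsto σ (𝓝[>] (0 : ℝ)) (𝓝 0) := hτlim.congr' heq'.symm
  -- σ' → h₀
  have part4 : Tendsto (fun s => Real.sqrt (h s) * σ s) (𝓝[>] (0 : ℝ)) (𝓝 h₀) := by
    refine hlim3.congr' ?_
    filter_upwards [self_mem_nhdsWithin] with x hx
    rw [hagree x hx]
  -- derivative at 0 within Ici 0
  have part3 : HasDerivWithinAt σ h₀ (Set.Ici 0) 0 := by
    apply hasDerivWithinAt_Ici_of_tendsto_deriv (s := Set.Ioi (0:ℝ))
    · intro x hx
      exact (part1 x hx).differentiableAt.differentiableWithinAt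
    · rw [ContinuousWithinAt, hσ0]
      exact part2
    · exact self_mem_nhdsWithin
    · refine part4.congr' ?_
      filter_upwards [self_mem_nhdsWithin] with x hx
      exact ((part1 x hx).deriv).symm
  exact ⟨part1, part2, part3, part4⟩
end

section
/- Let β > 0 and let h : (0,∞) → [0,∞) be continuous with lim_{s→0⁺} h(s) = +∞, lim_{s→0⁺} ∫_s^1 √(h(t)) dt = +∞, lim_{s→0⁺} √(h(s))·exp(−∫_s^1 √(h(t)) dt) = h₀ for some h₀ ≥ 0, and h(s) = 0 for all s ≥ 1. Then the function φ defined by φ(s) = (∫_0^s G(t)·σ′(t)² dt)/G(s) for s > 0 and φ(0) = 0 is continuously differentiable on [0,∞), satisfies φ(0) = 0 and φ′(0) = 0, and satisfies the ordinary differential equation φ′(s) + (h(s)/β)·φ(s) = σ′(s)² for every s > 0. -/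
open Real Filter Set Topology MeasureTheory

set_option maxHeartbeats 2000000 in
/-- Under conditions (contador), (pereiro) and `h ≡ 0` on `[1,∞)`,
the function `φ(s) = (∫_0^s G(t)·σ′(t)² dt)/G(s)` for `s > 0`, `φ(0) = 0`,
is continuously differentiable on `[0,∞)`, satisfies `φ(0) = 0`, `φ′(0) = 0`,
and solves the ODE `φ′(s) + (h(s)/β)·φ(s) = σ′(s)²` for every `s > 0`. -/
theorem stmt2 (β : ℝ) (hβ : 0 < β) (h : ℝ → ℝ) (h₀ : ℝ) (hh₀ : 0 ≤ h₀)
    (hcont : ContinuousOn h (Set.Ioi 0))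
    (hnonneg : ∀ s > (0 : ℝ), 0 ≤ h s)
    (hlim1 : Tendsto h (𝓝[>] (0 : ℝ)) atTop)
    (hlim2 : Tendsto (fun s => ∫ t in s..1, Real.sqrt (h t)) (𝓝[>] (0 : ℝ)) atTop)
    (hlim3 : Tendsto
      (fun s => Real.sqrt (h s) * Real.exp (-(∫ t in s..1, Real.sqrt (h t))))
      (𝓝[>] (0 : ℝ)) (𝓝 h₀))
    (hone : ∀ s ≥ (1 : ℝ), h s = 0)
    (G σ σ' φ : ℝ → ℝ)
    (hG : ∀ s > (0 : ℝ), G s = Real.exp (-(1 / β) * ∫ t in s..1, h t))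
    (hG0 : G 0 = 0)
    (hσ : ∀ s > (0 : ℝ), σ s = Real.exp (-(∫ t in s..1, Real.sqrt (h t))))
    (hσ0 : σ 0 = 0)
    (hσ' : ∀ s > (0 : ℝ), σ' s = Real.sqrt (h s) * σ s)
    (hσ'0 : σ' 0 = h₀)
    (hφ : ∀ s > (0 : ℝ), φ s = (∫ t in (0 : ℝ)..s, G t * (σ' t) ^ 2) / G s)
    (hφ0 : φ 0 = 0) :
    ∃ φ' : ℝ → ℝ,
      ContinuousOn φ' (Set.Ici 0) ∧
      (∀ s ∈ Set.Ici (0 : ℝ), HasDerivWithinAt φ (φ' s) (Set.Ici 0) s) ∧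
      φ 0 = 0 ∧ φ' 0 = 0 ∧
      (∀ s > (0 : ℝ), φ' s + (h s / β) * φ s = (σ' s) ^ 2) := by
  classical
  set f : ℝ → ℝ := fun t => G t * (σ' t) ^ 2 with hfdef
  set A : ℝ → ℝ := fun s => ∫ t in (0 : ℝ)..s, f t with hAdef
  have hφA : ∀ s > (0 : ℝ), φ s = A s / G s := hφ
  -- basic subset fact
  have hsub : ∀ s > (0 : ℝ), Set.uIcc s 1 ⊆ Set.Ioi 0 := fun s hs x hx =>
    lt_of_lt_of_le (lt_min hs one_pos) hx.1
  have hsubIcc : ∀ δ s : ℝ, 0 < δ → Set.uIcc δ s ⊆ Set.Ioi 0 → True := fun _ _ _ _ => trivial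
  -- continuity of sqrt ∘ h
  have hsq : ContinuousOn (fun t => Real.sqrt (h t)) (Set.Ioi 0) :=
    Real.continuous_sqrt.comp_continuousOn hcont
  -- derivative of s ↦ ∫_s^1 √h
  have hI1 : ∀ s > (0 : ℝ), HasDerivAt (fun u => ∫ t in u..1, Real.sqrt (h t))
      (-Real.sqrt (h s)) s := fun s hs =>
    intervalIntegral.integral_hasDerivAt_left
      ((hsq.mono (hsub s hs)).intervalIntegrable)
      (hsq.stronglyMeasurableAtFilter isOpen_Ioi s hs)
      (hsq.continuousAt (Ioi_mem_nhds hs))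
  have hI2 : ∀ s > (0 : ℝ), HasDerivAt (fun u => ∫ t in u..1, h t) (-(h s)) s := fun s hs =>
    intervalIntegral.integral_hasDerivAt_left
      ((hcont.mono (hsub s hs)).intervalIntegrable)
      (hcont.stronglyMeasurableAtFilter isOpen_Ioi s hs)
      (hcont.continuousAt (Ioi_mem_nhds hs))
  -- positivity
  have hGpos : ∀ s > (0 : ℝ), 0 < G s := fun s hs => by rw [hG s hs]; exact Real.exp_pos _
  have hσpos : ∀ s > (0 : ℝ), 0 < σ s := fun s hs => by rw [hσ s hs]; exact Real.exp_pos _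
  have hσ'nonneg : ∀ s > (0 : ℝ), 0 ≤ σ' s := fun s hs => by
    rw [hσ' s hs]; exact mul_nonneg (Real.sqrt_nonneg _) (hσpos s hs).le
  -- derivative of σ
  have hσderiv : ∀ s > (0 : ℝ), HasDerivAt σ (σ' s) s := by
    intro s hs
    have h1 : HasDerivAt (fun u => Real.exp (-(∫ t in u..1, Real.sqrt (h t))))
        (Real.exp (-(∫ t in s..1, Real.sqrt (h t))) * (-(-Real.sqrt (h s)))) s :=
      ((hI1 s hs).neg).exp
    have h2 : σ' s = Real.exp (-(∫ t in s..1, Real.sqrt (h t))) * (-(-Real.sqrt (h s))) := by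
      rw [hσ' s hs, hσ s hs]; ring
    rw [h2]
    exact h1.congr_of_eventuallyEq <|
      Filter.eventuallyEq_of_mem (Ioi_mem_nhds hs) fun x hx => hσ x hx
  -- derivative of G
  have hGderiv : ∀ s > (0 : ℝ), HasDerivAt G (h s / β * G s) s := by
    intro s hs
    have h1 : HasDerivAt (fun u => Real.exp (-(1 / β) * ∫ t in u..1, h t))
        (Real.exp (-(1 / β) * ∫ t in s..1, h t) * (-(1 / β) * -(h s))) s :=
      (((hI2 s hs).const_mul (-(1 / β)))).exp
    have h2 : h s / β * G s = Real.exp (-(1 / β) * ∫ t in s..1, h t) * (-(1 / β) * -(h s)) := by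
      rw [hG s hs]; ring
    rw [h2]
    exact h1.congr_of_eventuallyEq <|
      Filter.eventuallyEq_of_mem (Ioi_mem_nhds hs) fun x hx => hG x hx
  -- continuity on Ioi 0
  have hGcont : ContinuousOn G (Set.Ioi 0) := fun s hs =>
    ((hGderiv s hs).continuousAt).continuousWithinAt
  have hσcont : ContinuousOn σ (Set.Ioi 0) := fun s hs =>
    ((hσderiv s hs).continuousAt).continuousWithinAt
  have hσ'cont : ContinuousOn σ' (Set.Ioi 0) :=
    (hsq.mul hσcont).congr fun s hs => hσ' s hs
  have hfcont : ContinuousOn f (Set.Ioi 0) := hGcont.mul (hσ'cont.pow 2)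
  -- limits at 0⁺
  have htσ' : Tendsto σ' (𝓝[>] (0 : ℝ)) (𝓝 h₀) := by
    apply hlim3.congr'
    filter_upwards [self_mem_nhdsWithin] with s hs
    rw [hσ' s hs, hσ s hs]
  have htσ : Tendsto σ (𝓝[>] (0 : ℝ)) (𝓝 0) := by
    have : Tendsto (fun s => Real.exp (-(∫ t in s..1, Real.sqrt (h t)))) (𝓝[>] (0 : ℝ)) (𝓝 0) :=
      Real.tendsto_exp_atBot.comp (tendsto_neg_atTop_atBot.comp hlim2)
    apply this.congr'
    filter_upwards [self_mem_nhdsWithin] with s hs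
    exact (hσ s hs).symm
  -- G ≤ 1
  have hintnonneg : ∀ s > (0 : ℝ), 0 ≤ ∫ t in s..1, h t := by
    intro s hs
    rcases le_total s 1 with hs1 | hs1
    · exact intervalIntegral.integral_nonneg hs1 fun t ht => hnonneg t (lt_of_lt_of_le hs ht.1)
    · have : ∫ t in (1 : ℝ)..s, h t = 0 := by
        rw [← intervalIntegral.integral_zero (a := (1:ℝ)) (b := s)]
        apply intervalIntegral.integral_congr
        intro t ht
        rw [Set.uIcc_of_le hs1] at ht
        exact hone t ht.1
      rw [intervalIntegral.integral_symm, this, neg_zero]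
  have hGle : ∀ s > (0 : ℝ), G s ≤ 1 := by
    intro s hs
    rw [hG s hs]
    apply Real.exp_le_one_iff.2
    have := hintnonneg s hs
    have hb : 0 ≤ 1 / β := by positivity
    nlinarith
  -- bound for f on (0, R]
  have hfbound : ∀ R > (0 : ℝ), ∃ C : ℝ, 0 ≤ C ∧ ∀ t ∈ Set.Ioc (0 : ℝ) R, |f t| ≤ C := by
    intro R hR
    have hev : ∀ᶠ t in 𝓝[>] (0 : ℝ), σ' t ≤ h₀ + 1 := by
      filter_upwards [htσ'.eventually (eventually_le_nhds (show h₀ < h₀ + 1 by linarith))] with t ht using ht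
    rw [eventually_nhdsWithin_iff] at hev
    rcases Metric.eventually_nhds_iff.1 hev with ⟨δ, hδpos, hδ⟩
    have hK : ContinuousOn f (Set.Icc (δ / 2) R) := by
      apply hfcont.mono
      intro x hx
      exact lt_of_lt_of_le (by linarith) hx.1
    rcases (isCompact_Icc).exists_bound_of_continuousOn hK with ⟨C₁, hC₁⟩
    refine ⟨max C₁ ((h₀ + 1) ^ 2), le_trans (by positivity) (le_max_right _ _), ?_⟩
    intro t ht
    rcases lt_or_ge t δ with htδ | htδ
    · have ht0 : (0:ℝ) < t := ht.1
      have hσ't : σ' t ≤ h₀ + 1 := by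
        have : dist t 0 < δ := by rw [Real.dist_eq, sub_zero, abs_of_pos ht0]; exact htδ
        exact hδ this ht0
      have h1 : |f t| = G t * σ' t ^ 2 := by
        rw [abs_of_nonneg (mul_nonneg (hGpos t ht0).le (sq_nonneg _))]
      rw [h1]
      refine le_trans ?_ (le_max_right _ _)
      have := hGle t ht0
      have := hGpos t ht0
      have h2 : σ' t ^ 2 ≤ (h₀ + 1) ^ 2 := by
        apply sq_le_sq' (by nlinarith [hσ'nonneg t ht0]) hσ't
      nlinarith [sq_nonneg (σ' t)]
    · have : t ∈ Set.Icc (δ / 2) R := ⟨by linarith, ht.2⟩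
      exact le_trans (le_of_eq (Real.norm_eq_abs _).symm) (le_trans (hC₁ t this) (le_max_left _ _))
  -- interval integrability of f on [0, s]
  have hfae : ∀ s > (0 : ℝ), IntervalIntegrable f volume 0 s := by
    intro s hs
    rcases hfbound s hs with ⟨C, hC0, hC⟩
    rw [intervalIntegrable_iff_integrableOn_Ioc_of_le hs.le]
    apply Integrable.mono' (integrable_const C)
    · exact (hfcont.mono fun x hx => hx.1).aestronglyMeasurable measurableSet_Ioc
    · exact (ae_restrict_iff' measurableSet_Ioc).2 (ae_of_all _ fun t ht => by
        rw [Real.norm_eq_abs]; exact hC t ht)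
  -- derivative of A
  have hAderiv : ∀ s > (0 : ℝ), HasDerivAt A (f s) s := fun s hs =>
    intervalIntegral.integral_hasDerivAt_right (hfae s hs)
      (hfcont.stronglyMeasurableAtFilter isOpen_Ioi s hs)
      (hfcont.continuousAt (Ioi_mem_nhds hs))
  -- A tends to 0 at 0⁺
  have hA0 : Tendsto A (𝓝[>] (0 : ℝ)) (𝓝 0) := by
    rcases hfbound 1 one_pos with ⟨C, hC0, hC⟩
    apply squeeze_zero_norm' (a := fun s => C * s)
    · filter_upwards [Ioo_mem_nhdsGT_of_mem (Set.left_mem_Ico.2 one_pos)] with s hs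
      have : ‖A s‖ ≤ C * |s - 0| := by
        apply intervalIntegral.norm_integral_le_of_norm_le_const
        intro x hx
        rw [Set.uIoc_of_le hs.1.le] at hx
        rw [Real.norm_eq_abs]
        exact hC x ⟨hx.1, le_trans hx.2 hs.2.le⟩
      simpa [abs_of_pos hs.1] using this
    · have : Tendsto (fun s : ℝ => C * s) (𝓝 0) (𝓝 (C * 0)) :=
        (tendsto_id.const_mul C)
      simpa using this.mono_left nhdsWithin_le_nhds
  -- A is nonneg
  have hfnonneg : ∀ t ≥ (0 : ℝ), 0 ≤ f t := by
    intro t ht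
    rcases eq_or_lt_of_le ht with rfl | ht
    · simp [hfdef, hG0]
    · exact mul_nonneg (hGpos t ht).le (sq_nonneg _)
  have hAnonneg : ∀ s > (0 : ℝ), 0 ≤ A s :=
    fun s hs => intervalIntegral.integral_nonneg hs.le fun t ht => hfnonneg t ht.1
  -- the auxiliary function ψ = β G σ² and its derivative
  set ψ : ℝ → ℝ := fun t => β * (G t * σ t ^ 2) with hψdef
  set ψd : ℝ → ℝ := fun t => G t * σ t ^ 2 * h t + 2 * β * (G t * σ t * σ' t) with hψddef
  have hψderiv : ∀ t > (0 : ℝ), HasDerivAt ψ (ψd t) t := by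
    intro t ht
    have h1 : HasDerivAt (fun u => G u * σ u ^ 2)
        (h t / β * G t * σ t ^ 2 + G t * (2 * σ t ^ 1 * σ' t)) t :=
      (hGderiv t ht).mul ((hσderiv t ht).pow 2)
    have h2 := h1.const_mul β
    have h3 : ψd t = β * (h t / β * G t * σ t ^ 2 + G t * (2 * σ t ^ 1 * σ' t)) := by
      have hβ0 : β ≠ 0 := hβ.ne'
      show G t * σ t ^ 2 * h t + 2 * β * (G t * σ t * σ' t) = β * (h t / β * G t * σ t ^ 2 + G t * (2 * σ t ^ 1 * σ' t))
      linear_combination (-(G t * σ t ^ 2 * h t)) * mul_inv_cancel₀ hβ0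
    rw [h3]
    exact h2
  have hψdcont : ContinuousOn ψd (Set.Ioi 0) :=
    ((hGcont.mul (hσcont.pow 2)).mul hcont).add
      (continuousOn_const.mul ((hGcont.mul hσcont).mul hσ'cont))
  have hψ0 : Tendsto ψ (𝓝[>] (0 : ℝ)) (𝓝 0) := by
    apply squeeze_zero_norm' (a := fun s => β * σ s ^ 2)
    · filter_upwards [self_mem_nhdsWithin] with s hs
      have h1 : 0 ≤ ψ s := by
        exact mul_nonneg hβ.le (mul_nonneg (hGpos s hs).le (sq_nonneg _))
      rw [Real.norm_eq_abs, abs_of_nonneg h1]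
      simp only [hψdef]
      have hle := hGle s hs
      nlinarith [mul_nonneg (mul_nonneg hβ.le (sq_nonneg (σ s))) (sub_nonneg.2 hle)]
    · have : Tendsto (fun s => β * σ s ^ 2) (𝓝[>] (0:ℝ)) (𝓝 (β * 0 ^ 2)) :=
        tendsto_const_nhds.mul (htσ.pow 2)
      simpa using this
  -- σ'^2 = h σ² on (0,∞)
  have hσ'sq : ∀ t > (0 : ℝ), σ' t ^ 2 = h t * σ t ^ 2 := by
    intro t ht
    rw [hσ' t ht, mul_pow, Real.sq_sqrt (hnonneg t ht)]
  -- f = G σ² h on (0,∞); ψd - f = 2βGσσ' ≥ 0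
  have hfψd : ∀ t > (0 : ℝ), f t ≤ ψd t := by
    intro t ht
    have h1 : f t = G t * σ t ^ 2 * h t := by
      rw [hfdef]; simp only; rw [hσ'sq t ht]; ring
    rw [h1]
    simp only [hψddef]
    have h2 : 0 ≤ 2 * β * (G t * σ t * σ' t) := by
      have := hGpos t ht; have := hσpos t ht; have := hσ'nonneg t ht
      positivity
    linarith
  -- FTC for ψ on [δ, s] ⊂ (0,∞)
  have hFTC : ∀ δ s : ℝ, 0 < δ → δ ≤ s → ∫ t in δ..s, ψd t = ψ s - ψ δ := by
    intro δ s hδ hδs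
    have hsub2 : Set.uIcc δ s ⊆ Set.Ioi 0 := by
      rw [Set.uIcc_of_le hδs]; exact fun x hx => lt_of_lt_of_le hδ hx.1
    exact intervalIntegral.integral_eq_sub_of_hasDerivAt
      (fun x hx => hψderiv x (hsub2 hx))
      ((hψdcont.mono hsub2).intervalIntegrable)
  -- integrability of f on [δ, s] ⊂ (0,∞)
  have hfint2 : ∀ δ s : ℝ, 0 < δ → δ ≤ s → IntervalIntegrable f volume δ s := by
    intro δ s hδ hδs
    have hsub2 : Set.uIcc δ s ⊆ Set.Ioi 0 := by
      rw [Set.uIcc_of_le hδs]; exact fun x hx => lt_of_lt_of_le hδ hx.1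
    exact (hfcont.mono hsub2).intervalIntegrable
  have hψdint2 : ∀ δ s : ℝ, 0 < δ → δ ≤ s → IntervalIntegrable ψd volume δ s := by
    intro δ s hδ hδs
    have hsub2 : Set.uIcc δ s ⊆ Set.Ioi 0 := by
      rw [Set.uIcc_of_le hδs]; exact fun x hx => lt_of_lt_of_le hδ hx.1
    exact (hψdcont.mono hsub2).intervalIntegrable
  -- A(s) = A(δ) + ∫_δ^s f
  have hAsplit : ∀ δ s : ℝ, 0 < δ → δ ≤ s → A s = A δ + ∫ t in δ..s, f t := by
    intro δ s hδ hδs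
    rw [hAdef]
    exact (intervalIntegral.integral_add_adjacent_intervals (hfae δ hδ)
      (hfint2 δ s hδ hδs)).symm
  -- KEY 1 : A s ≤ ψ s on (0, ∞)
  have key1 : ∀ s > (0 : ℝ), A s ≤ ψ s := by
    intro s hs
    have hev : ∀ᶠ δ in 𝓝[>] (0 : ℝ), A s ≤ A δ + (ψ s - ψ δ) := by
      filter_upwards [Ioo_mem_nhdsGT_of_mem (Set.left_mem_Ico.2 hs)] with δ hδ
      have h1 : A s = A δ + ∫ t in δ..s, f t := hAsplit δ s hδ.1 hδ.2.le
      have h2 : (∫ t in δ..s, f t) ≤ ∫ t in δ..s, ψd t :=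
        intervalIntegral.integral_mono_on hδ.2.le (hfint2 δ s hδ.1 hδ.2.le)
          (hψdint2 δ s hδ.1 hδ.2.le)
          (fun x hx => hfψd x (lt_of_lt_of_le hδ.1 hx.1))
      rw [hFTC δ s hδ.1 hδ.2.le] at h2
      linarith
    have hlim : Tendsto (fun δ => A δ + (ψ s - ψ δ)) (𝓝[>] (0 : ℝ)) (𝓝 (0 + (ψ s - 0))) :=
      hA0.add (tendsto_const_nhds.sub hψ0)
    have := ge_of_tendsto hlim hev
    linarith
  -- KEY 2 : for every c > 0, eventually ψ s ≤ (1+c) A s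
  have key2 : ∀ c > (0 : ℝ), ∀ᶠ s in 𝓝[>] (0 : ℝ), ψ s ≤ (1 + c) * A s := by
    intro c hc
    have hev : ∀ᶠ t in 𝓝[>] (0 : ℝ), (2 * β / c) ^ 2 ≤ h t :=
      hlim1.eventually_ge_atTop _
    rcases mem_nhdsGT_iff_exists_Ioo_subset.1 hev with ⟨s₀, hs₀, hIoo⟩
    filter_upwards [Ioo_mem_nhdsGT_of_mem (Set.left_mem_Ico.2 hs₀)] with s hsmem
    have hs : 0 < s := hsmem.1
    -- pointwise bound ψd ≤ (1+c) f on (0, s]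
    have hpt : ∀ t, 0 < t → t ≤ s → ψd t ≤ (1 + c) * f t := by
      intro t ht hts
      have hmem : t ∈ Set.Ioo (0:ℝ) s₀ := ⟨ht, lt_of_le_of_lt hts hsmem.2⟩
      have hht : (2 * β / c) ^ 2 ≤ h t := hIoo hmem
      have hsqrt : 2 * β / c ≤ Real.sqrt (h t) := by
        rw [show (2:ℝ) * β / c = Real.sqrt ((2 * β / c) ^ 2) from
          (Real.sqrt_sq (by positivity)).symm]
        exact Real.sqrt_le_sqrt hht
      have hfeq : f t = G t * σ t ^ 2 * h t := by
        rw [hfdef]; simp only; rw [hσ'sq t ht]; ring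
      have hσ'eq : σ' t = Real.sqrt (h t) * σ t := hσ' t ht
      have hhpos : (0:ℝ) < h t := lt_of_lt_of_le (by positivity) hht
      have h2 : 2 * β * Real.sqrt (h t) ≤ c * h t := by
        have hs2 : Real.sqrt (h t) * Real.sqrt (h t) = h t := Real.mul_self_sqrt hhpos.le
        have h2b : 2 * β ≤ c * Real.sqrt (h t) := by
          have hmul := mul_le_mul_of_nonneg_left hsqrt hc.le
          have hcc : c * (2 * β / c) = 2 * β := by field_simp
          linarith
        calc 2 * β * Real.sqrt (h t) ≤ c * Real.sqrt (h t) * Real.sqrt (h t) := by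
              nlinarith [Real.sqrt_nonneg (h t)]
        _ = c * h t := by rw [mul_assoc, hs2]
      simp only [hψddef]
      rw [hfeq, hσ'eq]
      have hGp := (hGpos t ht).le
      have hσp := (hσpos t ht).le
      nlinarith [mul_nonneg hGp (sq_nonneg (σ t)), sq_nonneg (σ t)]
    have hev2 : ∀ᶠ δ in 𝓝[>] (0 : ℝ), ψ s ≤ ψ δ + (1 + c) * (A s - A δ) := by
      filter_upwards [Ioo_mem_nhdsGT_of_mem (Set.left_mem_Ico.2 hs)] with δ hδ
      have h1 : A s = A δ + ∫ t in δ..s, f t := hAsplit δ s hδ.1 hδ.2.le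
      have h2 : (∫ t in δ..s, ψd t) ≤ ∫ t in δ..s, (1 + c) * f t := by
        apply intervalIntegral.integral_mono_on hδ.2.le (hψdint2 δ s hδ.1 hδ.2.le)
          ((hfint2 δ s hδ.1 hδ.2.le).const_mul _)
        exact fun x hx => hpt x (lt_of_lt_of_le hδ.1 hx.1) hx.2
      rw [hFTC δ s hδ.1 hδ.2.le, intervalIntegral.integral_const_mul] at h2
      have h3 : (∫ t in δ..s, f t) = A s - A δ := by linarith [h1]
      rw [h3] at h2
      linarith
    have hlim : Tendsto (fun δ => ψ δ + (1 + c) * (A s - A δ)) (𝓝[>] (0 : ℝ))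
        (𝓝 (0 + (1 + c) * (A s - 0))) :=
      hψ0.add (tendsto_const_nhds.mul (tendsto_const_nhds.sub hA0))
    have := ge_of_tendsto hlim hev2
    linarith
  -- bounds for (h/β) φ
  have hFup : ∀ s > (0 : ℝ), h s / β * φ s ≤ σ' s ^ 2 := by
    intro s hs
    have hGp := hGpos s hs
    have hhp := hnonneg s hs
    have hφle : φ s ≤ β * σ s ^ 2 := by
      rw [hφA s hs, div_le_iff₀ hGp]
      calc A s ≤ β * (G s * σ s ^ 2) := key1 s hs
      _ = β * σ s ^ 2 * G s := by ring
    have h1 : h s / β * φ s ≤ h s / β * (β * σ s ^ 2) :=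
      mul_le_mul_of_nonneg_left hφle (by positivity)
    have h2 : h s / β * (β * σ s ^ 2) = σ' s ^ 2 := by
      rw [hσ'sq s hs]; field_simp
    linarith
  -- lower bound eventually
  have hFlow : ∀ c > (0 : ℝ), ∀ᶠ s in 𝓝[>] (0 : ℝ),
      σ' s ^ 2 ≤ (1 + c) * (h s / β * φ s) := by
    intro c hc
    filter_upwards [key2 c hc, self_mem_nhdsWithin] with s hψA hs
    simp only [hψdef] at hψA
    have hGp := hGpos s hs
    have hhp := hnonneg s hs
    rw [hφA s hs, hσ'sq s hs]
    have h2 : h s / (β * G s) * (β * (G s * σ s ^ 2)) ≤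
        h s / (β * G s) * ((1 + c) * A s) :=
      mul_le_mul_of_nonneg_left hψA (by positivity)
    have e1 : h s / (β * G s) * (β * (G s * σ s ^ 2)) = h s * σ s ^ 2 := by
      field_simp
    have e2 : h s / (β * G s) * ((1 + c) * A s) = (1 + c) * (h s / β * (A s / G s)) := by
      field_simp
    linarith
  have htσ'2 : Tendsto (fun s => σ' s ^ 2) (𝓝[>] (0 : ℝ)) (𝓝 (h₀ ^ 2)) := htσ'.pow 2
  -- (h/β)·φ tends to h₀² at 0⁺
  have htF : Tendsto (fun s => h s / β * φ s) (𝓝[>] (0 : ℝ)) (𝓝 (h₀ ^ 2)) := by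
    rw [Metric.tendsto_nhds]
    intro ε hε
    have hc : (0 : ℝ) < ε / (4 * (h₀ ^ 2 + 1)) := by positivity
    have hev2 : ∀ᶠ s in 𝓝[>] (0 : ℝ), |σ' s ^ 2 - h₀ ^ 2| < min (ε / 4) 1 := by
      have hball := htσ'2 (Metric.ball_mem_nhds (h₀ ^ 2) (show (0:ℝ) < min (ε/4) 1 by positivity))
      filter_upwards [hball] with t ht
      simpa [Real.dist_eq] using ht
    filter_upwards [hFlow _ hc, hev2, self_mem_nhdsWithin] with s h1 h2 hs
    have hup := hFup s hs
    have habs := abs_lt.1 h2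
    have hminle : min (ε / 4) 1 ≤ ε / 4 := min_le_left _ _
    have hmin1 : min (ε / 4) 1 ≤ 1 := min_le_right _ _
    have hσle : σ' s ^ 2 ≤ h₀ ^ 2 + 1 := by linarith [habs.2]
    have hF0 : 0 ≤ h s / β * φ s := by
      rw [hφA s hs]
      have := hAnonneg s hs; have := hGpos s hs; have := hnonneg s hs
      positivity
    rw [Real.dist_eq, abs_lt]
    have hcf := mul_le_mul_of_nonneg_left hup hc.le
    have hexp : (1 + ε / (4 * (h₀ ^ 2 + 1))) * (h s / β * φ s) =
        h s / β * φ s + ε / (4 * (h₀ ^ 2 + 1)) * (h s / β * φ s) := by ring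
    have h3 : σ' s ^ 2 - ε / (4 * (h₀ ^ 2 + 1)) * σ' s ^ 2 ≤ h s / β * φ s := by
      linarith only [hcf, h1, hexp]
    have h4 : ε / (4 * (h₀ ^ 2 + 1)) * σ' s ^ 2 ≤ ε / 4 := by
      have hm := mul_le_mul_of_nonneg_left hσle hc.le
      have he : ε / (4 * (h₀ ^ 2 + 1)) * (h₀ ^ 2 + 1) = ε / 4 := by
        field_simp
      linarith only [hm, he]
    constructor
    · linarith only [h3, h4, habs.1, hminle, hε]
    · linarith only [hup, habs.2, hminle, hε]
  -- φ tends to 0 at 0⁺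
  have htφ : Tendsto φ (𝓝[>] (0 : ℝ)) (𝓝 0) := by
    have hb : Tendsto (fun s => β / h s) (𝓝[>] (0 : ℝ)) (𝓝 0) :=
      Filter.Tendsto.div_atTop tendsto_const_nhds hlim1
    have hmul := htF.mul hb
    rw [mul_zero] at hmul
    apply hmul.congr'
    filter_upwards [hlim1.eventually_gt_atTop 0, self_mem_nhdsWithin] with s hhs hs
    field_simp
  -- continuity of σ on Ici 0
  have hσcontIci : ContinuousOn σ (Set.Ici 0) := by
    intro x hx
    rcases eq_or_lt_of_le (Set.mem_Ici.mp hx) with hx0 | hx0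
    · rw [← hx0, ← Set.Ioi_insert]
      apply continuousWithinAt_insert_self.2
      have : Tendsto σ (𝓝[>] (0 : ℝ)) (𝓝 (σ 0)) := by rw [hσ0]; exact htσ
      exact this
    · exact ((hσderiv x hx0).continuousAt).continuousWithinAt
  -- linear bound for σ near 0
  have hσlin : ∀ᶠ s in 𝓝[>] (0 : ℝ), σ s ≤ (h₀ + 1) * s := by
    have hev : ∀ᶠ t in 𝓝[>] (0 : ℝ), σ' t ≤ h₀ + 1 :=
      htσ'.eventually (eventually_le_nhds (show h₀ < h₀ + 1 by linarith))
    rcases mem_nhdsGT_iff_exists_Ioo_subset.1 hev with ⟨s₁, hs₁, hsub1⟩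
    filter_upwards [Ioo_mem_nhdsGT_of_mem (Set.left_mem_Ico.2 hs₁)] with s hsmem
    have hs : 0 < s := hsmem.1
    obtain ⟨ξ, hξ, hslope⟩ := exists_hasDerivAt_eq_slope σ σ' hs
      (hσcontIci.mono fun x hx => hx.1)
      (fun x hx => hσderiv x hx.1)
    rw [hσ0, sub_zero, sub_zero] at hslope
    have hξb : σ' ξ ≤ h₀ + 1 := hsub1 ⟨hξ.1, lt_trans hξ.2 hsmem.2⟩
    have hσs : σ s = σ' ξ * s := by rw [hslope]; field_simp
    rw [hσs]
    exact mul_le_mul_of_nonneg_right hξb hs.le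
  -- slope of φ at 0 tends to 0
  have htslope : Tendsto (fun s => φ s / s) (𝓝[>] (0 : ℝ)) (𝓝 0) := by
    apply squeeze_zero'
    · filter_upwards [self_mem_nhdsWithin] with s hs
      show 0 ≤ φ s / s
      rw [hφA s hs]
      exact div_nonneg (div_nonneg (hAnonneg s hs) (hGpos s hs).le) hs.le
    · filter_upwards [hσlin, self_mem_nhdsWithin] with s hσs hs
      show φ s / s ≤ β * ((h₀ + 1) ^ 2 * s)
      have hφle : φ s ≤ β * σ s ^ 2 := by
        rw [hφA s hs, div_le_iff₀ (hGpos s hs)]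
        calc A s ≤ β * (G s * σ s ^ 2) := key1 s hs
        _ = β * σ s ^ 2 * G s := by ring
      have hσnn := (hσpos s hs).le
      rw [div_le_iff₀ hs]
      calc φ s ≤ β * σ s ^ 2 := hφle
      _ ≤ β * ((h₀ + 1) * s) ^ 2 :=
          mul_le_mul_of_nonneg_left (pow_le_pow_left₀ hσnn hσs 2) hβ.le
      _ = β * ((h₀ + 1) ^ 2 * s) * s := by ring
    · have hT : Tendsto (fun s : ℝ => β * ((h₀ + 1) ^ 2 * s)) (𝓝 0)
          (𝓝 (β * ((h₀ + 1) ^ 2 * 0))) :=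
        Tendsto.const_mul β (tendsto_id.const_mul _)
      simpa using hT.mono_left nhdsWithin_le_nhds
  -- the derivative function
  set D : ℝ → ℝ := fun s => if 0 < s then σ' s ^ 2 - h s / β * φ s else 0 with hDdef
  have hDpos : ∀ s > (0 : ℝ), D s = σ' s ^ 2 - h s / β * φ s := fun s hs => if_pos hs
  have hD0 : D 0 = 0 := if_neg (lt_irrefl 0)
  have hφderiv : ∀ s > (0 : ℝ), HasDerivAt φ (D s) s := by
    intro s hs
    have hGp := hGpos s hs
    have h1 : HasDerivAt (fun u => A u / G u)
        ((f s * G s - A s * (h s / β * G s)) / G s ^ 2) s :=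
      (hAderiv s hs).div (hGderiv s hs) hGp.ne'
    have h2 : (f s * G s - A s * (h s / β * G s)) / G s ^ 2 = D s := by
      rw [hDpos s hs, hφA s hs, hfdef]
      simp only
      field_simp
    rw [← h2]
    apply h1.congr_of_eventuallyEq
    filter_upwards [Ioi_mem_nhds hs] with x hx
    exact hφA x hx
  have hφcont : ContinuousOn φ (Set.Ioi 0) := fun s hs =>
    ((hφderiv s hs).continuousAt).continuousWithinAt
  have htD : Tendsto D (𝓝[>] (0 : ℝ)) (𝓝 0) := by
    have hsub2 := htσ'2.sub htF
    rw [sub_self] at hsub2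
    apply hsub2.congr'
    filter_upwards [self_mem_nhdsWithin] with t ht
    exact (hDpos t ht).symm
  refine ⟨D, ?_, ?_, hφ0, hD0, ?_⟩
  · -- ContinuousOn D (Ici 0)
    intro x hx
    rcases eq_or_lt_of_le (Set.mem_Ici.mp hx) with hx0 | hx0
    · rw [← hx0, ← Set.Ioi_insert]
      apply continuousWithinAt_insert_self.2
      have : Tendsto D (𝓝[>] (0 : ℝ)) (𝓝 (D 0)) := by rw [hD0]; exact htD
      exact this
    · apply ContinuousAt.continuousWithinAt
      have hg : ContinuousAt (fun s => σ' s ^ 2 - h s / β * φ s) x := by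
        have h1 : ContinuousAt σ' x := hσ'cont.continuousAt (Ioi_mem_nhds hx0)
        have h2 : ContinuousAt h x := hcont.continuousAt (Ioi_mem_nhds hx0)
        have h3 : ContinuousAt φ x := hφcont.continuousAt (Ioi_mem_nhds hx0)
        exact (h1.pow 2).sub ((h2.div_const β).mul h3)
      exact hg.congr (Filter.eventuallyEq_of_mem (Ioi_mem_nhds hx0)
        fun t ht => (hDpos t ht).symm)
  · -- derivative everywhere on Ici 0
    intro s hs
    rcases eq_or_lt_of_le (Set.mem_Ici.mp hs) with hs0 | hs0
    · rw [← hs0, hD0]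
      rw [hasDerivWithinAt_iff_tendsto_slope]
      have hset : Set.Ici (0 : ℝ) \ {0} = Set.Ioi 0 := Set.Ici_sdiff_left
      rw [hset]
      apply htslope.congr'
      filter_upwards [self_mem_nhdsWithin] with t ht
      rw [slope_def_field, hφ0, sub_zero, sub_zero]
    · exact (hφderiv s hs0).hasDerivWithinAt
  · intro s hs
    rw [hDpos s hs]
    ring
end

section
/- Let β > 0 and let h : (0,∞) → [0,∞) be continuous with lim_{s→0⁺} h(s) = +∞, lim_{s→0⁺} ∫_s^1 √(h(t)) dt = +∞, lim_{s→0⁺} √(h(s))·exp(−∫_s^1 √(h(t)) dt) = h₀ for some h₀ ≥ 0, and h(s) = 0 for all s ≥ 1. Then lim_{s→0⁺} (∫_0^s G(t)·σ′(t)² dt)/G(s) = 0; that is, the function φ is continuous at 0. -/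
open Real Filter Set Topology MeasureTheory

/-- `φ(s) = (∫_0^s G(t)·σ′(t)² dt)/G(s) → 0` as `s → 0⁺`,
i.e. `φ` is continuous at `0`. -/
theorem stmt3 (β : ℝ) (hβ : 0 < β) (h : ℝ → ℝ) (h₀ : ℝ) (hh₀ : 0 ≤ h₀)
    (hcont : ContinuousOn h (Set.Ioi 0))
    (hnonneg : ∀ s > (0 : ℝ), 0 ≤ h s)
    (hlim1 : Tendsto h (𝓝[>] (0 : ℝ)) atTop)
    (hlim2 : Tendsto (fun s => ∫ t in s..1, Real.sqrt (h t)) (𝓝[>] (0 : ℝ)) atTop)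
    (hlim3 : Tendsto
      (fun s => Real.sqrt (h s) * Real.exp (-(∫ t in s..1, Real.sqrt (h t))))
      (𝓝[>] (0 : ℝ)) (𝓝 h₀))
    (hone : ∀ s ≥ (1 : ℝ), h s = 0)
    (G σ σ' φ : ℝ → ℝ)
    (hG : ∀ s > (0 : ℝ), G s = Real.exp (-(1 / β) * ∫ t in s..1, h t))
    (hG0 : G 0 = 0)
    (hσ : ∀ s > (0 : ℝ), σ s = Real.exp (-(∫ t in s..1, Real.sqrt (h t))))
    (hσ0 : σ 0 = 0)
    (hσ' : ∀ s > (0 : ℝ), σ' s = Real.sqrt (h s) * σ s)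
    (hσ'0 : σ' 0 = h₀)
    (hφ : ∀ s > (0 : ℝ), φ s = (∫ t in (0 : ℝ)..s, G t * (σ' t) ^ 2) / G s)
    (hφ0 : φ 0 = 0) :
    Tendsto φ (𝓝[>] (0 : ℝ)) (𝓝 0) := by
  set M := (h₀ + 1) ^ 2 with hMdef
  have hMpos : 0 < M := by positivity
  -- eventual bound on σ' ^ 2
  have hb : ∀ᶠ t in 𝓝[>] (0 : ℝ), σ' t ^ 2 ≤ M := by
    have h1 : ∀ᶠ t in 𝓝[>] (0 : ℝ),
        Real.sqrt (h t) * Real.exp (-(∫ u in t..1, Real.sqrt (h u))) < h₀ + 1 :=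
      hlim3.eventually_lt_const (by linarith)
    filter_upwards [h1, self_mem_nhdsWithin] with t ht ht0
    have ht0' : (0 : ℝ) < t := ht0
    have he : σ' t = Real.sqrt (h t) * Real.exp (-(∫ u in t..1, Real.sqrt (h u))) := by
      rw [hσ' t ht0', hσ t ht0']
    have hnn : 0 ≤ σ' t := by rw [he]; positivity
    have hle : σ' t ≤ h₀ + 1 := by rw [he]; exact ht.le
    nlinarith
  obtain ⟨u, hu, hsub⟩ := hb.exists_mem
  obtain ⟨δ, hδpos, hδsub⟩ := mem_nhdsGT_iff_exists_Ioc_subset.mp hu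
  set ε := min δ 1 with hεdef
  have hεpos : 0 < ε := lt_min hδpos one_pos
  -- G is monotone on (0, 1]
  have hGmono : ∀ t s : ℝ, 0 < t → t ≤ s → s ≤ 1 → G t ≤ G s := by
    intro t s ht0 hts hs1
    have hs0 : 0 < s := ht0.trans_le hts
    have hi1 : IntervalIntegrable h volume t s := by
      apply (hcont.mono ?_).intervalIntegrable
      rw [Set.uIcc_of_le hts]
      intro x hx; exact lt_of_lt_of_le ht0 hx.1
    have hi2 : IntervalIntegrable h volume s 1 := by
      apply (hcont.mono ?_).intervalIntegrable
      rw [Set.uIcc_of_le hs1]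
      intro x hx; exact lt_of_lt_of_le hs0 hx.1
    have hadd : (∫ v in t..s, h v) + ∫ v in s..1, h v = ∫ v in t..1, h v :=
      intervalIntegral.integral_add_adjacent_intervals hi1 hi2
    have hnn : 0 ≤ ∫ v in t..s, h v := by
      apply intervalIntegral.integral_nonneg hts
      intro x hx; exact hnonneg x (lt_of_lt_of_le ht0 hx.1)
    rw [hG t ht0, hG s hs0]
    apply Real.exp_le_exp.mpr
    have hβ' : 0 < 1 / β := by positivity
    nlinarith
  -- key pointwise estimate
  have key : ∀ s ∈ Set.Ioc (0 : ℝ) ε, 0 ≤ φ s ∧ φ s ≤ M * s := by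
    rintro s ⟨hs0, hsε⟩
    have hs1 : s ≤ 1 := hsε.trans (min_le_right _ _)
    have hsδ : s ≤ δ := hsε.trans (min_le_left _ _)
    have hGs : 0 < G s := by rw [hG s hs0]; exact Real.exp_pos _
    have hNrepr : (∫ t in (0 : ℝ)..s, G t * (σ' t) ^ 2)
        = ∫ t in Set.Ioc (0 : ℝ) s, G t * (σ' t) ^ 2 :=
      intervalIntegral.integral_of_le hs0.le
    have hNnonneg : 0 ≤ ∫ t in Set.Ioc (0 : ℝ) s, G t * (σ' t) ^ 2 := by
      apply setIntegral_nonneg measurableSet_Ioc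
      intro t ht
      have : 0 < G t := by rw [hG t ht.1]; exact Real.exp_pos _
      positivity
    have hpt : ∀ t ∈ Set.Ioc (0 : ℝ) s, G t * (σ' t) ^ 2 ≤ G s * M := by
      intro t ht
      have h1 : G t ≤ G s := hGmono t s ht.1 ht.2 hs1
      have h2 : σ' t ^ 2 ≤ M := hsub t (hδsub ⟨ht.1, ht.2.trans hsδ⟩)
      exact mul_le_mul h1 h2 (sq_nonneg _) hGs.le
    have hNle : (∫ t in Set.Ioc (0 : ℝ) s, G t * (σ' t) ^ 2) ≤ s * (G s * M) := by
      by_cases hint : IntegrableOn (fun t => G t * (σ' t) ^ 2) (Set.Ioc (0 : ℝ) s) volume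
      · calc (∫ t in Set.Ioc (0 : ℝ) s, G t * (σ' t) ^ 2)
            ≤ ∫ _t in Set.Ioc (0 : ℝ) s, G s * M :=
              setIntegral_mono_on hint (integrableOn_const
                (by simp [Real.volume_Ioc])) measurableSet_Ioc hpt
          _ = s * (G s * M) := by
              rw [setIntegral_const, Real.volume_real_Ioc, smul_eq_mul,
                max_eq_left (by linarith)]
              ring
      · rw [MeasureTheory.integral_undef hint]
        positivity
    constructor
    · rw [hφ s hs0, hNrepr]
      exact div_nonneg hNnonneg hGs.le
    · rw [hφ s hs0, hNrepr, div_le_iff₀ hGs]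
      calc (∫ t in Set.Ioc (0 : ℝ) s, G t * (σ' t) ^ 2) ≤ s * (G s * M) := hNle
        _ = M * s * G s := by ring
  have hev : ∀ᶠ s in 𝓝[>] (0 : ℝ), s ∈ Set.Ioc (0 : ℝ) ε :=
    eventually_of_mem (Ioc_mem_nhdsGT_of_mem ⟨le_refl 0, hεpos⟩) (fun s hs => hs)
  have htendM : Tendsto (fun s => M * s) (𝓝[>] (0 : ℝ)) (𝓝 0) := by
    have : Tendsto (fun s : ℝ => M * s) (𝓝 (0 : ℝ)) (𝓝 (M * 0)) :=
      (continuous_const.mul continuous_id).tendsto 0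
    simpa using this.mono_left nhdsWithin_le_nhds
  apply tendsto_of_tendsto_of_tendsto_of_le_of_le' tendsto_const_nhds htendM
  · filter_upwards [hev] with s hs using (key s hs).1
  · filter_upwards [hev] with s hs using (key s hs).2
end

section
/- Let β > 0 and let h : (0,∞) → [0,∞) be continuous with lim_{s→0⁺} h(s) = +∞, lim_{s→0⁺} ∫_s^1 √(h(t)) dt = +∞, lim_{s→0⁺} √(h(s))·exp(−∫_s^1 √(h(t)) dt) = h₀ for some h₀ ≥ 0, and h(s) = 0 for all s ≥ 1. Then lim_{s→0⁺} φ(s)/s = 0, where φ(s) = (∫_0^s G(t)·σ′(t)² dt)/G(s); that is, φ is differentiable at 0 with derivative 0. -/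
open Real Filter Set Topology MeasureTheory

/-- `φ(s)/s → 0` as `s → 0⁺`, i.e. `φ` is differentiable
at `0` with derivative `0`. -/
theorem stmt4 (β : ℝ) (hβ : 0 < β) (h : ℝ → ℝ) (h₀ : ℝ) (hh₀ : 0 ≤ h₀)
    (hcont : ContinuousOn h (Set.Ioi 0))
    (hnonneg : ∀ s > (0 : ℝ), 0 ≤ h s)
    (hlim1 : Tendsto h (𝓝[>] (0 : ℝ)) atTop)
    (hlim2 : Tendsto (fun s => ∫ t in s..1, Real.sqrt (h t)) (𝓝[>] (0 : ℝ)) atTop)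
    (hlim3 : Tendsto
      (fun s => Real.sqrt (h s) * Real.exp (-(∫ t in s..1, Real.sqrt (h t))))
      (𝓝[>] (0 : ℝ)) (𝓝 h₀))
    (hone : ∀ s ≥ (1 : ℝ), h s = 0)
    (G σ σ' φ : ℝ → ℝ)
    (hG : ∀ s > (0 : ℝ), G s = Real.exp (-(1 / β) * ∫ t in s..1, h t))
    (hG0 : G 0 = 0)
    (hσ : ∀ s > (0 : ℝ), σ s = Real.exp (-(∫ t in s..1, Real.sqrt (h t))))
    (hσ0 : σ 0 = 0)
    (hσ' : ∀ s > (0 : ℝ), σ' s = Real.sqrt (h s) * σ s)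
    (hσ'0 : σ' 0 = h₀)
    (hφ : ∀ s > (0 : ℝ), φ s = (∫ t in (0 : ℝ)..s, G t * (σ' t) ^ 2) / G s)
    (hφ0 : φ 0 = 0) :
    Tendsto (fun s => φ s / s) (𝓝[>] (0 : ℝ)) (𝓝 0) ∧
    HasDerivWithinAt φ 0 (Set.Ici 0) 0 := by
  have hsqcont : ContinuousOn (fun t => Real.sqrt (h t)) (Set.Ioi 0) :=
    Real.continuous_sqrt.comp_continuousOn hcont
  -- interval integrability on subintervals of (0, ∞)
  have hsub : ∀ a b : ℝ, 0 < a → 0 < b → Set.uIcc a b ⊆ Set.Ioi 0 := by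
    intro a b ha hb x hx
    exact lt_of_lt_of_le (lt_min ha hb) hx.1
  -- derivative of primitives
  have deriv_int : ∀ (g : ℝ → ℝ), ContinuousOn g (Set.Ioi 0) → ∀ s > (0:ℝ),
      HasDerivAt (fun u => ∫ t in u..1, g t) (-(g s)) s := by
    intro g hg s hs
    have hint : IntervalIntegrable g volume 1 s :=
      (hg.mono (hsub 1 s one_pos hs)).intervalIntegrable
    have hmeas : StronglyMeasurableAtFilter g (𝓝 s) volume :=
      hg.stronglyMeasurableAtFilter isOpen_Ioi s hs
    have hca : ContinuousAt g s := hg.continuousAt (Ioi_mem_nhds hs)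
    have H := (intervalIntegral.integral_hasDerivAt_right hint hmeas hca).neg
    have heq : (fun u => ∫ t in u..1, g t) = fun u => -∫ t in (1:ℝ)..u, g t := by
      funext u; rw [intervalIntegral.integral_symm]
    rw [heq]
    exact H
  -- derivative of G
  have hGderiv : ∀ s > (0:ℝ), HasDerivAt G (h s / β * G s) s := by
    intro s hs
    have H : HasDerivAt (fun u => Real.exp (-(1 / β) * ∫ t in u..1, h t))
        (Real.exp (-(1 / β) * ∫ t in s..1, h t) * (-(1 / β) * -(h s))) s :=
      (((deriv_int h hcont s hs).const_mul (-(1/β)))).exp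
    have heq : G =ᶠ[𝓝 s] fun u => Real.exp (-(1 / β) * ∫ t in u..1, h t) := by
      filter_upwards [Ioi_mem_nhds hs] with u hu using hG u hu
    have := H.congr_of_eventuallyEq heq
    refine this.congr_deriv ?_
    rw [hG s hs]; ring
  -- derivative of σ
  have hσderiv : ∀ s > (0:ℝ), HasDerivAt σ (σ' s) s := by
    intro s hs
    have H : HasDerivAt (fun u => Real.exp (-(∫ t in u..1, Real.sqrt (h t))))
        (Real.exp (-(∫ t in s..1, Real.sqrt (h t))) * -(-(Real.sqrt (h s)))) s :=
      ((deriv_int _ hsqcont s hs).neg).exp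
    have heq : σ =ᶠ[𝓝 s] fun u => Real.exp (-(∫ t in u..1, Real.sqrt (h t))) := by
      filter_upwards [Ioi_mem_nhds hs] with u hu using hσ u hu
    have := H.congr_of_eventuallyEq heq
    refine this.congr_deriv ?_
    rw [hσ' s hs, hσ s hs]; ring
  have hGcont : ContinuousOn G (Set.Ioi 0) := fun s hs =>
    ((hGderiv s hs).continuousAt).continuousWithinAt
  have hσcont : ContinuousOn σ (Set.Ioi 0) := fun s hs =>
    ((hσderiv s hs).continuousAt).continuousWithinAt
  have hσ'cont : ContinuousOn σ' (Set.Ioi 0) := by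
    have : ContinuousOn (fun s => Real.sqrt (h s) * σ s) (Set.Ioi 0) :=
      hsqcont.mul hσcont
    exact this.congr fun s hs => hσ' s hs
  have hσpos : ∀ s > (0:ℝ), 0 < σ s := by
    intro s hs; rw [hσ s hs]; exact Real.exp_pos _
  have hGpos : ∀ s > (0:ℝ), 0 < G s := by
    intro s hs; rw [hG s hs]; exact Real.exp_pos _
  have hσ'nonneg : ∀ s > (0:ℝ), 0 ≤ σ' s := by
    intro s hs; rw [hσ' s hs]
    exact mul_nonneg (Real.sqrt_nonneg _) (hσpos s hs).le
  -- σ is monotone on (0, ∞)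
  have hσmono : ∀ s t : ℝ, 0 < s → s ≤ t → σ s ≤ σ t := by
    intro s t hs hst
    have ht : 0 < t := lt_of_lt_of_le hs hst
    rw [hσ s hs, hσ t ht]
    apply Real.exp_le_exp.mpr
    apply neg_le_neg
    have h1 : IntervalIntegrable (fun t => Real.sqrt (h t)) volume s t :=
      (hsqcont.mono (hsub s t hs ht)).intervalIntegrable
    have h2 : IntervalIntegrable (fun t => Real.sqrt (h t)) volume t 1 :=
      (hsqcont.mono (hsub t 1 ht one_pos)).intervalIntegrable
    have := intervalIntegral.integral_add_adjacent_intervals h1 h2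
    rw [← this]
    have hpos : 0 ≤ ∫ u in s..t, Real.sqrt (h u) :=
      intervalIntegral.integral_nonneg hst (fun u _ => Real.sqrt_nonneg _)
    linarith
  -- σ tends to 0 at 0⁺
  have hσtendsto : Tendsto σ (𝓝[>] (0:ℝ)) (𝓝 0) := by
    have h1 : Tendsto (fun s => Real.exp (-(∫ t in s..1, Real.sqrt (h t))))
        (𝓝[>] (0:ℝ)) (𝓝 0) :=
      Real.tendsto_exp_atBot.comp (tendsto_neg_atTop_atBot.comp hlim2)
    apply h1.congr'
    filter_upwards [self_mem_nhdsWithin] with s hs using (hσ s hs).symm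
  -- σ' is eventually bounded by h₀ + 1
  set C : ℝ := h₀ + 1 with hC
  have hCpos : 0 < C := by positivity
  obtain ⟨δ₀, hδ₀, hδ₀sub⟩ := mem_nhdsGT_iff_exists_Ioo_subset.mp
    (hlim3.eventually (gt_mem_nhds (lt_add_one h₀)))
  set δ : ℝ := min δ₀ 1 with hδdef
  have hδpos : 0 < δ := lt_min hδ₀ one_pos
  have hδle1 : δ ≤ 1 := min_le_right _ _
  have hσ'bound : ∀ s ∈ Set.Ioo (0:ℝ) δ, σ' s ≤ C := by
    intro s hs
    have hs0 : (0:ℝ) < s := hs.1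
    have : Real.sqrt (h s) * Real.exp (-(∫ t in s..1, Real.sqrt (h t))) < C :=
      hδ₀sub ⟨hs.1, lt_of_lt_of_le hs.2 (min_le_left _ _)⟩
    rw [hσ' s hs0, hσ s hs0]
    exact this.le
  -- linear bound on σ near zero
  have hσlin : ∀ s ∈ Set.Ioo (0:ℝ) δ, σ s ≤ C * s := by
    intro s hs
    have hs0 : (0:ℝ) < s := hs.1
    have key : ∀ ε ∈ Set.Ioo (0:ℝ) s, σ s ≤ σ ε + C * s := by
      intro ε hε
      have hε0 : (0:ℝ) < ε := hε.1
      have hεs : ε ≤ s := hε.2.le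
      have hFTC : ∫ t in ε..s, σ' t = σ s - σ ε := by
        apply intervalIntegral.integral_eq_sub_of_hasDerivAt
        · intro t ht
          have ht' : t ∈ Set.Ioi (0:ℝ) := hsub ε s hε0 hs0 ht
          exact hσderiv t ht'
        · exact (hσ'cont.mono (hsub ε s hε0 hs0)).intervalIntegrable
      have hint1 : IntervalIntegrable σ' volume ε s :=
        (hσ'cont.mono (hsub ε s hε0 hs0)).intervalIntegrable
      have hmono : ∫ t in ε..s, σ' t ≤ ∫ _t in ε..s, C := by
        apply intervalIntegral.integral_mono_on hεs hint1 intervalIntegrable_const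
        intro t ht
        exact hσ'bound t ⟨lt_of_lt_of_le hε0 ht.1, lt_of_le_of_lt ht.2 hs.2⟩
      rw [hFTC] at hmono
      rw [intervalIntegral.integral_const, smul_eq_mul] at hmono
      nlinarith [hCpos]
    have htend : Tendsto (fun ε => σ ε + C * s) (𝓝[>] (0:ℝ)) (𝓝 (0 + C * s)) :=
      (hσtendsto.add tendsto_const_nhds)
    have := ge_of_tendsto htend (by
      filter_upwards [Ioo_mem_nhdsGT_of_mem ⟨le_refl (0:ℝ), hs0⟩] with ε hε
      exact key ε hε)
    linarith
  -- G ≤ 1 on (0, 1]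
  have hGle1 : ∀ s : ℝ, 0 < s → s ≤ 1 → G s ≤ 1 := by
    intro s hs hs1
    rw [hG s hs]
    apply Real.exp_le_one_iff.mpr
    have hpos : 0 ≤ ∫ t in s..1, h t :=
      intervalIntegral.integral_nonneg hs1
        (fun t ht => hnonneg t (lt_of_lt_of_le hs ht.1))
    have : 0 ≤ 1 / β := by positivity
    nlinarith
  -- the integrand f
  set f : ℝ → ℝ := fun t => G t * σ' t ^ 2 with hf
  have hfcont : ContinuousOn f (Set.Ioi 0) := hGcont.mul (hσ'cont.pow 2)
  have hfnonneg : ∀ t : ℝ, 0 ≤ t → 0 ≤ f t := by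
    intro t ht
    rcases eq_or_lt_of_le ht with rfl | ht'
    · simp [hf, hG0]
    · exact mul_nonneg (hGpos t ht').le (sq_nonneg _)
  have hfbound : ∀ t ∈ Set.Ioo (0:ℝ) δ, f t ≤ C ^ 2 := by
    intro t ht
    have ht0 := ht.1
    have h1 : G t ≤ 1 := hGle1 t ht0 (le_trans ht.2.le hδle1)
    have h2 : σ' t ≤ C := hσ'bound t ht
    have h3 : 0 ≤ σ' t := hσ'nonneg t ht0
    have h4 : 0 ≤ G t := (hGpos t ht0).le
    calc f t = G t * σ' t ^ 2 := rfl
    _ ≤ 1 * C ^ 2 := by nlinarith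
    _ = C ^ 2 := one_mul _
  -- integrability of f on [0, s] for s < δ
  have hfint : ∀ s ∈ Set.Ioo (0:ℝ) δ, IntervalIntegrable f volume 0 s := by
    intro s hs
    rw [intervalIntegrable_iff_integrableOn_Ioc_of_le hs.1.le]
    have hmeas : AEStronglyMeasurable f (volume.restrict (Set.Ioc 0 s)) :=
      (hfcont.mono Set.Ioc_subset_Ioi_self).aestronglyMeasurable measurableSet_Ioc
    apply Integrable.mono' (integrable_const (C ^ 2)) hmeas
    rw [ae_restrict_iff' measurableSet_Ioc]
    filter_upwards with t ht
    rw [Real.norm_eq_abs, abs_of_nonneg (hfnonneg t ht.1.le)]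
    exact hfbound t ⟨ht.1, lt_of_le_of_lt ht.2 hs.2⟩
  -- key estimate : ∫₀ˢ f ≤ β σ(s)² G(s)
  have hkey : ∀ s ∈ Set.Ioo (0:ℝ) δ, (∫ t in (0:ℝ)..s, f t) ≤ β * σ s ^ 2 * G s := by
    intro s hs
    have hs0 : (0:ℝ) < s := hs.1
    have step : ∀ ε ∈ Set.Ioo (0:ℝ) s,
        (∫ t in (0:ℝ)..s, f t) ≤ C ^ 2 * ε + β * σ s ^ 2 * G s := by
      intro ε hε
      have hε0 := hε.1
      have hεs := hε.2
      have hεδ : ε ∈ Set.Ioo (0:ℝ) δ := ⟨hε0, lt_trans hεs hs.2⟩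
      have hint0ε : IntervalIntegrable f volume 0 ε :=
        (hfint s hs).mono_set (by
          rw [Set.uIcc_of_le hε0.le, Set.uIcc_of_le hs0.le]
          exact Set.Icc_subset_Icc le_rfl hεs.le)
      have hintεs : IntervalIntegrable f volume ε s :=
        (hfcont.mono (hsub ε s hε0 hs0)).intervalIntegrable
      have hsplit : (∫ t in (0:ℝ)..ε, f t) + (∫ t in ε..s, f t) = ∫ t in (0:ℝ)..s, f t :=
        intervalIntegral.integral_add_adjacent_intervals hint0ε hintεs
      -- bound the first piece
      have hb1 : (∫ t in (0:ℝ)..ε, f t) ≤ C ^ 2 * ε := by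
        have := intervalIntegral.integral_mono_on hε0.le hint0ε
          intervalIntegrable_const (g := fun _ => C ^ 2) (by
            intro t ht
            rcases eq_or_lt_of_le ht.1 with rfl | ht0
            · simpa [hf, hG0] using sq_nonneg C
            · exact hfbound t ⟨ht0, lt_of_le_of_lt ht.2 hεδ.2⟩)
        rw [intervalIntegral.integral_const, smul_eq_mul] at this
        nlinarith
      -- bound the second piece
      have hb2 : (∫ t in ε..s, f t) ≤ β * σ s ^ 2 * G s := by
        set g' : ℝ → ℝ := fun t => h t / β * G t with hg'
        have hg'cont : ContinuousOn g' (Set.Ioi 0) :=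
          (hcont.div_const β).mul hGcont
        have hg'nonneg : ∀ t > (0:ℝ), 0 ≤ g' t := fun t ht =>
          mul_nonneg (div_nonneg (hnonneg t ht) hβ.le) (hGpos t ht).le
        have hfeq : ∀ t ∈ Set.uIcc ε s, f t = β * σ t ^ 2 * g' t := by
          intro t ht
          have ht0 : (0:ℝ) < t := hsub ε s hε0 hs0 ht
          have hsq : σ' t ^ 2 = h t * σ t ^ 2 := by
            rw [hσ' t ht0, mul_pow, Real.sq_sqrt (hnonneg t ht0)]
          rw [hf]; simp only
          rw [hsq, hg']
          field_simp
        have hstep1 : (∫ t in ε..s, f t) = ∫ t in ε..s, β * σ t ^ 2 * g' t :=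
          intervalIntegral.integral_congr hfeq
        have hint1 : IntervalIntegrable (fun t => β * σ t ^ 2 * g' t) volume ε s :=
          ((continuousOn_const.mul (hσcont.pow 2)).mul hg'cont).mono
            (hsub ε s hε0 hs0) |>.intervalIntegrable
        have hint2 : IntervalIntegrable (fun t => β * σ s ^ 2 * g' t) volume ε s :=
          (continuousOn_const.mul (hg'cont.mono (hsub ε s hε0 hs0))).intervalIntegrable
        have hstep2 : (∫ t in ε..s, β * σ t ^ 2 * g' t)
            ≤ ∫ t in ε..s, β * σ s ^ 2 * g' t := by
          apply intervalIntegral.integral_mono_on hεs.le hint1 hint2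
          intro t ht
          have ht0 : (0:ℝ) < t := lt_of_lt_of_le hε0 ht.1
          have h1 : σ t ≤ σ s := hσmono t s ht0 ht.2
          have h2 : 0 ≤ σ t := (hσpos t ht0).le
          have h3 : 0 ≤ g' t := hg'nonneg t ht0
          have h4 : σ t ^ 2 ≤ σ s ^ 2 := by nlinarith
          exact mul_le_mul_of_nonneg_right (mul_le_mul_of_nonneg_left h4 hβ.le) h3
        have hFTCg : (∫ t in ε..s, g' t) = G s - G ε := by
          apply intervalIntegral.integral_eq_sub_of_hasDerivAt
          · intro t ht
            exact hGderiv t (hsub ε s hε0 hs0 ht)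
          · exact (hg'cont.mono (hsub ε s hε0 hs0)).intervalIntegrable
        have hstep3 : (∫ t in ε..s, β * σ s ^ 2 * g' t) = β * σ s ^ 2 * (G s - G ε) := by
          rw [intervalIntegral.integral_const_mul, hFTCg]
        have hGεpos : 0 < G ε := hGpos ε hε0
        have hσs2 : 0 ≤ σ s ^ 2 := sq_nonneg _
        calc (∫ t in ε..s, f t) = ∫ t in ε..s, β * σ t ^ 2 * g' t := hstep1
          _ ≤ ∫ t in ε..s, β * σ s ^ 2 * g' t := hstep2
          _ = β * σ s ^ 2 * (G s - G ε) := hstep3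
          _ ≤ β * σ s ^ 2 * G s := by
              have : G s - G ε ≤ G s := by linarith
              exact mul_le_mul_of_nonneg_left this (mul_nonneg hβ.le hσs2)
      linarith [hsplit, hb1, hb2]
    have htend : Tendsto (fun ε => C ^ 2 * ε + β * σ s ^ 2 * G s) (𝓝[>] (0:ℝ))
        (𝓝 (C ^ 2 * 0 + β * σ s ^ 2 * G s)) := by
      apply Tendsto.add _ tendsto_const_nhds
      exact (tendsto_const_nhds.mul (tendsto_id.mono_left nhdsWithin_le_nhds))
    have := ge_of_tendsto htend (by
      filter_upwards [Ioo_mem_nhdsGT_of_mem ⟨le_refl (0:ℝ), hs0⟩] with ε hε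
      exact step ε hε)
    linarith
  -- φ is nonneg and bounded above
  have hφbound : ∀ s ∈ Set.Ioo (0:ℝ) δ, φ s ≤ β * σ s ^ 2 := by
    intro s hs
    rw [hφ s hs.1]
    rw [div_le_iff₀ (hGpos s hs.1)]
    exact hkey s hs
  have hφnonneg : ∀ s ∈ Set.Ioo (0:ℝ) δ, 0 ≤ φ s := by
    intro s hs
    rw [hφ s hs.1]
    apply div_nonneg _ (hGpos s hs.1).le
    exact intervalIntegral.integral_nonneg hs.1.le (fun t ht => hfnonneg t ht.1)
  -- the main limit
  have hmain : Tendsto (fun s => φ s / s) (𝓝[>] (0:ℝ)) (𝓝 0) := by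
    have hupper : Tendsto (fun s : ℝ => β * C ^ 2 * s) (𝓝[>] (0:ℝ)) (𝓝 0) := by
      have : Tendsto (fun s : ℝ => β * C ^ 2 * s) (𝓝 (0:ℝ)) (𝓝 (β * C ^ 2 * 0)) :=
        (continuous_const.mul continuous_id).tendsto 0
      rw [mul_zero] at this
      exact this.mono_left nhdsWithin_le_nhds
    apply tendsto_of_tendsto_of_tendsto_of_le_of_le' tendsto_const_nhds hupper
    · filter_upwards [Ioo_mem_nhdsGT_of_mem ⟨le_refl (0:ℝ), hδpos⟩] with s hs
      exact div_nonneg (hφnonneg s hs) hs.1.le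
    · filter_upwards [Ioo_mem_nhdsGT_of_mem ⟨le_refl (0:ℝ), hδpos⟩] with s hs
      have hs0 := hs.1
      have h1 : φ s ≤ β * σ s ^ 2 := hφbound s hs
      have h2 : σ s ≤ C * s := hσlin s hs
      have h3 : 0 ≤ σ s := (hσpos s hs0).le
      have h5 : σ s ^ 2 ≤ (C * s) ^ 2 := by nlinarith
      have h4 : φ s ≤ β * C ^ 2 * s ^ 2 := by nlinarith [mul_le_mul_of_nonneg_left h5 hβ.le]
      rw [div_le_iff₀ hs0]
      nlinarith
  refine ⟨hmain, ?_⟩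
  rw [hasDerivWithinAt_iff_tendsto_slope]
  have hset : Set.Ici (0:ℝ) \ {0} = Set.Ioi 0 := by
    ext x
    simp only [Set.mem_diff, Set.mem_Ici, Set.mem_singleton_iff, Set.mem_Ioi]
    constructor
    · rintro ⟨h1, h2⟩; exact lt_of_le_of_ne h1 (Ne.symm h2)
    · intro h1; exact ⟨h1.le, ne_of_gt h1⟩
  rw [hset]
  apply hmain.congr'
  filter_upwards [self_mem_nhdsWithin] with s hs
  rw [slope_def_field, hφ0]
  simp
end

section
/- Let β > 0 and let h : (0,∞) → [0,∞) be continuous with lim_{s→0⁺} h(s) = +∞, lim_{s→0⁺} ∫_s^1 √(h(t)) dt = +∞, lim_{s→0⁺} √(h(s))·exp(−∫_s^1 √(h(t)) dt) = h₀ for some h₀ ≥ 0, and h(s) = 0 for all s ≥ 1. Then for every s > 0 the following integration-by-parts identity holds: φ(s) = β·σ(s)² − (2β/G(s))·∫_0^s G(t)·σ(t)²·√(h(t)) dt, where φ(s) = (∫_0^s G(t)·σ′(t)² dt)/G(s). -/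
open Real Filter Set Topology MeasureTheory

/-- FTC for the lower endpoint of `∫ x in u..1, f x` for `f` continuous on `(0,∞)`. -/
lemma hasDerivAt_lower_int (f : ℝ → ℝ) (hf : ContinuousOn f (Set.Ioi 0)) (t : ℝ) (ht : 0 < t) :
    HasDerivAt (fun u => ∫ x in u..(1:ℝ), f x) (-f t) t := by
  have hmem : Set.Ioi (0:ℝ) ∈ 𝓝 t := isOpen_Ioi.mem_nhds ht
  have hsub : Set.uIcc t 1 ⊆ Set.Ioi (0:ℝ) := by
    intro x hx
    have := hx.1
    have h1 : min t 1 ≤ x := hx.1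
    have : (0:ℝ) < min t 1 := lt_min ht one_pos
    exact lt_of_lt_of_le this h1
  have hint : IntervalIntegrable f MeasureTheory.volume t 1 :=
    (hf.mono hsub).intervalIntegrable
  exact intervalIntegral.integral_hasDerivAt_left hint
    (hf.stronglyMeasurableAtFilter isOpen_Ioi t ht)
    (hf.continuousAt hmem)

/-- A function vanishing at `0`, continuous on `(0,∞)` and tending to `0` at `0⁺` is
continuous on `[0,s]`. -/
lemma continuousOn_Icc_of (k : ℝ → ℝ) (s : ℝ) (hk0 : k 0 = 0)
    (hk : ContinuousOn k (Set.Ioi 0)) (hlim : Tendsto k (𝓝[>] (0:ℝ)) (𝓝 0)) :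
    ContinuousOn k (Set.Icc 0 s) := by
  intro t ht
  rcases eq_or_lt_of_le ht.1 with h0 | h0
  · subst h0
    have hsub : Set.Icc (0:ℝ) s ⊆ insert 0 (Set.Ioi 0) := by
      intro x hx
      rcases eq_or_lt_of_le hx.1 with h | h
      · exact Or.inl h.symm
      · exact Or.inr h
    refine ContinuousWithinAt.mono ?_ hsub
    unfold ContinuousWithinAt
    rw [nhdsWithin_insert, hk0]
    exact Filter.Tendsto.sup (by simpa [hk0] using tendsto_pure_nhds k (0:ℝ)) hlim
  · exact (hk.continuousAt (isOpen_Ioi.mem_nhds h0)).continuousWithinAt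

/-- The integration-by-parts identity
`φ(s) = β·σ(s)² − (2β/G(s))·∫_0^s G(t)·σ(t)²·√(h(t)) dt` for every `s > 0`. -/
theorem stmt5 (β : ℝ) (hβ : 0 < β) (h : ℝ → ℝ) (h₀ : ℝ) (hh₀ : 0 ≤ h₀)
    (hcont : ContinuousOn h (Set.Ioi 0))
    (hnonneg : ∀ s > (0 : ℝ), 0 ≤ h s)
    (hlim1 : Tendsto h (𝓝[>] (0 : ℝ)) atTop)
    (hlim2 : Tendsto (fun s => ∫ t in s..1, Real.sqrt (h t)) (𝓝[>] (0 : ℝ)) atTop)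
    (hlim3 : Tendsto
      (fun s => Real.sqrt (h s) * Real.exp (-(∫ t in s..1, Real.sqrt (h t))))
      (𝓝[>] (0 : ℝ)) (𝓝 h₀))
    (hone : ∀ s ≥ (1 : ℝ), h s = 0)
    (G σ σ' φ : ℝ → ℝ)
    (hG : ∀ s > (0 : ℝ), G s = Real.exp (-(1 / β) * ∫ t in s..1, h t))
    (hG0 : G 0 = 0)
    (hσ : ∀ s > (0 : ℝ), σ s = Real.exp (-(∫ t in s..1, Real.sqrt (h t))))
    (hσ0 : σ 0 = 0)
    (hσ' : ∀ s > (0 : ℝ), σ' s = Real.sqrt (h s) * σ s)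
    (hσ'0 : σ' 0 = h₀)
    (hφ : ∀ s > (0 : ℝ), φ s = (∫ t in (0 : ℝ)..s, G t * (σ' t) ^ 2) / G s)
    (hφ0 : φ 0 = 0) :
    ∀ s > (0 : ℝ),
      φ s = β * (σ s) ^ 2 -
        (2 * β / G s) * ∫ t in (0 : ℝ)..s, G t * (σ t) ^ 2 * Real.sqrt (h t) := by
  -- continuity of √∘h on (0,∞)
  have hsq : ContinuousOn (fun t => Real.sqrt (h t)) (Set.Ioi 0) :=
    Real.continuous_sqrt.comp_continuousOn hcont
  -- derivatives of the explicit formulas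
  have hIσ : ∀ t > (0:ℝ), HasDerivAt (fun u => ∫ x in u..(1:ℝ), Real.sqrt (h x))
      (-Real.sqrt (h t)) t := fun t ht => hasDerivAt_lower_int _ hsq t ht
  have hIG : ∀ t > (0:ℝ), HasDerivAt (fun u => ∫ x in u..(1:ℝ), h x) (-h t) t :=
    fun t ht => hasDerivAt_lower_int _ hcont t ht
  -- σ, G have derivatives at points of (0,∞)
  have hσderiv : ∀ t > (0:ℝ), HasDerivAt σ (Real.sqrt (h t) * σ t) t := by
    intro t ht
    have hev : σ =ᶠ[𝓝 t] fun u => Real.exp (-(∫ x in u..(1:ℝ), Real.sqrt (h x))) := by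
      filter_upwards [isOpen_Ioi.mem_nhds ht] with u hu
      exact hσ u hu
    have : HasDerivAt (fun u => Real.exp (-(∫ x in u..(1:ℝ), Real.sqrt (h x))))
        (Real.exp (-(∫ x in t..(1:ℝ), Real.sqrt (h x))) * (Real.sqrt (h t))) t := by
      simpa using ((hIσ t ht).neg).exp
    refine HasDerivAt.congr_of_eventuallyEq ?_ hev
    rw [hσ t ht]
    simpa [mul_comm] using this
  have hGderiv : ∀ t > (0:ℝ), HasDerivAt G (1 / β * h t * G t) t := by
    intro t ht
    have hev : G =ᶠ[𝓝 t] fun u => Real.exp (-(1/β) * ∫ x in u..(1:ℝ), h x) := by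
      filter_upwards [isOpen_Ioi.mem_nhds ht] with u hu
      exact hG u hu
    have : HasDerivAt (fun u => Real.exp (-(1/β) * ∫ x in u..(1:ℝ), h x))
        (Real.exp (-(1/β) * ∫ x in t..(1:ℝ), h x) * (-(1/β) * -h t)) t :=
      (((hIG t ht).const_mul (-(1/β)))).exp
    refine HasDerivAt.congr_of_eventuallyEq ?_ hev
    rw [hG t ht]
    exact this.congr_deriv (by ring)
  -- continuity on (0,∞)
  have hσcont : ContinuousOn σ (Set.Ioi 0) := fun t ht =>
    ((hσderiv t ht).continuousAt).continuousWithinAt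
  have hGcont : ContinuousOn G (Set.Ioi 0) := fun t ht =>
    ((hGderiv t ht).continuousAt).continuousWithinAt
  have hσ'cont : ContinuousOn σ' (Set.Ioi 0) := by
    refine ContinuousOn.congr (hsq.mul hσcont) ?_
    intro t ht; exact hσ' t ht
  -- limits at 0⁺
  have hσlim : Tendsto σ (𝓝[>] (0:ℝ)) (𝓝 0) := by
    have : Tendsto (fun u : ℝ => Real.exp (-(∫ x in u..(1:ℝ), Real.sqrt (h x))))
        (𝓝[>] (0:ℝ)) (𝓝 0) := Real.tendsto_exp_atBot.comp (tendsto_neg_atBot_iff.mpr hlim2)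
    refine this.congr' ?_
    filter_upwards [self_mem_nhdsWithin] with u hu
    exact (hσ u hu).symm
  have hσ'lim : Tendsto σ' (𝓝[>] (0:ℝ)) (𝓝 h₀) := by
    refine hlim3.congr' ?_
    filter_upwards [self_mem_nhdsWithin] with u hu
    rw [hσ' u hu, hσ u hu]
  -- G → 0 at 0⁺
  have hGlim : Tendsto G (𝓝[>] (0:ℝ)) (𝓝 0) := by
    -- first: ∫_t^1 h → ∞
    have hIh : Tendsto (fun t => ∫ x in t..(1:ℝ), h x) (𝓝[>] (0:ℝ)) atTop := by
      obtain ⟨δ, hδpos, hδ⟩ : ∃ δ > (0:ℝ), δ < 1 ∧ ∀ t ∈ Set.Ioc 0 δ, (1:ℝ) ≤ h t := by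
        have h1 : ∀ᶠ t in 𝓝[>] (0:ℝ), (1:ℝ) ≤ h t := hlim1.eventually_ge_atTop 1
        rw [eventually_nhdsWithin_iff] at h1
        obtain ⟨ε, hε, hball⟩ := Metric.eventually_nhds_iff.mp h1
        refine ⟨min (ε/2) (1/2), lt_min (by linarith) (by norm_num), ?_, ?_⟩
        · exact lt_of_le_of_lt (min_le_right _ _) (by norm_num)
        · intro t ht
          refine hball ?_ ht.1
          have : t ≤ min (ε/2) (1/2) := ht.2
          have h2 : t ≤ ε/2 := le_trans this (min_le_left _ _)
          rw [Real.dist_eq, sub_zero, abs_of_pos ht.1]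
          linarith
      obtain ⟨hδ1, hδ2⟩ := hδ
      set c : ℝ := ∫ x in δ..(1:ℝ), h x
      set c2 : ℝ := ∫ x in δ..(1:ℝ), Real.sqrt (h x)
      have key : ∀ᶠ t in 𝓝[>] (0:ℝ),
          (∫ x in t..(1:ℝ), Real.sqrt (h x)) + (c - c2) ≤ ∫ x in t..(1:ℝ), h x := by
        filter_upwards [Ioo_mem_nhdsGT_of_mem (by exact ⟨le_refl 0, hδpos⟩ : (0:ℝ) ∈ Set.Ico 0 δ)]
          with t ht
        have ht0 : 0 < t := ht.1
        have htδ : t < δ := ht.2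
        have hsub1 : Set.uIcc t δ ⊆ Set.Ioi (0:ℝ) := by
          rw [Set.uIcc_of_le htδ.le]
          intro x hx; exact lt_of_lt_of_le ht0 hx.1
        have hsub2 : Set.uIcc δ (1:ℝ) ⊆ Set.Ioi (0:ℝ) := by
          rw [Set.uIcc_of_le hδ1.le]
          intro x hx; exact lt_of_lt_of_le hδpos hx.1
        have hi1 : IntervalIntegrable h MeasureTheory.volume t δ :=
          (hcont.mono hsub1).intervalIntegrable
        have hi2 : IntervalIntegrable h MeasureTheory.volume δ 1 :=
          (hcont.mono hsub2).intervalIntegrable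
        have hi1' : IntervalIntegrable (fun x => Real.sqrt (h x)) MeasureTheory.volume t δ :=
          (hsq.mono hsub1).intervalIntegrable
        have hi2' : IntervalIntegrable (fun x => Real.sqrt (h x)) MeasureTheory.volume δ 1 :=
          (hsq.mono hsub2).intervalIntegrable
        have split1 : (∫ x in t..(1:ℝ), h x) = (∫ x in t..δ, h x) + c :=
          (intervalIntegral.integral_add_adjacent_intervals hi1 hi2).symm
        have split2 : (∫ x in t..(1:ℝ), Real.sqrt (h x)) = (∫ x in t..δ, Real.sqrt (h x)) + c2 :=
          (intervalIntegral.integral_add_adjacent_intervals hi1' hi2').symm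
        have mono : (∫ x in t..δ, Real.sqrt (h x)) ≤ ∫ x in t..δ, h x := by
          refine intervalIntegral.integral_mono_on htδ.le hi1' hi1 ?_
          intro x hx
          have hx0 : 0 < x := lt_of_lt_of_le ht0 hx.1
          have hx1 : (1:ℝ) ≤ h x := hδ2 x ⟨hx0, hx.2⟩
          have : Real.sqrt (h x) ≤ Real.sqrt (h x * h x) :=
            Real.sqrt_le_sqrt (by nlinarith)
          rwa [Real.sqrt_mul_self (by linarith)] at this
        rw [split1, split2]
        linarith
      exact tendsto_atTop_mono' _ key (tendsto_atTop_add_const_right _ _ hlim2)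
    have : Tendsto (fun u : ℝ => Real.exp (-(1/β) * ∫ x in u..(1:ℝ), h x))
        (𝓝[>] (0:ℝ)) (𝓝 0) := by
      refine Real.tendsto_exp_atBot.comp ?_
      have h1 : Tendsto (fun u : ℝ => (1/β) * ∫ x in u..(1:ℝ), h x) (𝓝[>] (0:ℝ)) atTop :=
        (tendsto_const_mul_atTop_of_pos (by positivity)).mpr hIh
      have h2 : Tendsto (fun u : ℝ => -((1/β) * ∫ x in u..(1:ℝ), h x)) (𝓝[>] (0:ℝ)) atBot :=
        tendsto_neg_atBot_iff.mpr h1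
      refine h2.congr ?_
      intro u; ring
    refine this.congr' ?_
    filter_upwards [self_mem_nhdsWithin] with u hu
    exact (hG u hu).symm
  -- the two integrands and F
  intro s hs
  set f : ℝ → ℝ := fun t => G t * (σ' t) ^ 2 with hf_def
  set g : ℝ → ℝ := fun t => G t * (σ t) ^ 2 * Real.sqrt (h t) with hg_def
  set F : ℝ → ℝ := fun t => β * G t * (σ t) ^ 2 with hF_def
  have hF0 : F 0 = 0 := by simp [hF_def, hG0]
  have hf0 : f 0 = 0 := by simp [hf_def, hG0]
  have hg0 : g 0 = 0 := by simp [hg_def, hG0]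
  have hflim : Tendsto f (𝓝[>] (0:ℝ)) (𝓝 0) := by
    have : Tendsto f (𝓝[>] (0:ℝ)) (𝓝 (0 * h₀ ^ 2)) := hGlim.mul (hσ'lim.pow 2)
    simpa using this
  have hglim : Tendsto g (𝓝[>] (0:ℝ)) (𝓝 0) := by
    have h1 : Tendsto (fun t => G t * σ t * σ' t) (𝓝[>] (0:ℝ)) (𝓝 (0 * 0 * h₀)) :=
      (hGlim.mul hσlim).mul hσ'lim
    have h2 : Tendsto (fun t => G t * σ t * σ' t) (𝓝[>] (0:ℝ)) (𝓝 0) := by simpa using h1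
    refine h2.congr' ?_
    filter_upwards [self_mem_nhdsWithin] with u hu
    rw [hσ' u hu]; ring
  have hFlim : Tendsto F (𝓝[>] (0:ℝ)) (𝓝 0) := by
    have : Tendsto F (𝓝[>] (0:ℝ)) (𝓝 (β * 0 * 0 ^ 2)) :=
      (tendsto_const_nhds.mul hGlim).mul (hσlim.pow 2)
    simpa using this
  have hfcont : ContinuousOn f (Set.Icc 0 s) :=
    continuousOn_Icc_of f s hf0 (hGcont.mul (hσ'cont.pow 2)) hflim
  have hgcont : ContinuousOn g (Set.Icc 0 s) :=
    continuousOn_Icc_of g s hg0 ((hGcont.mul (hσcont.pow 2)).mul hsq) hglim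
  have hFcont : ContinuousOn F (Set.Icc 0 s) :=
    continuousOn_Icc_of F s hF0
      (((continuousOn_const.mul hGcont)).mul (hσcont.pow 2)) hFlim
  -- derivative of F on (0,s)
  have hFderiv : ∀ t ∈ Set.Ioo (0:ℝ) s, HasDerivAt F (f t + 2 * β * g t) t := by
    intro t ht
    have ht0 : 0 < t := ht.1
    have hd : HasDerivAt F
        (β * (1 / β * h t * G t) * σ t ^ 2 + β * G t * (2 * σ t ^ 1 * (Real.sqrt (h t) * σ t))) t := by
      have h1 : HasDerivAt (fun u => β * G u) (β * (1 / β * h t * G t)) t :=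
        (hGderiv t ht0).const_mul β
      have h2 : HasDerivAt (fun u => (σ u) ^ 2) (2 * σ t ^ 1 * (Real.sqrt (h t) * σ t)) t := by
        simpa using (hσderiv t ht0).fun_pow 2
      simpa [hF_def] using h1.fun_mul h2
    convert hd using 1
    have hβne : β ≠ 0 := ne_of_gt hβ
    have hsq' : Real.sqrt (h t) ^ 2 = h t := Real.sq_sqrt (hnonneg t ht0)
    simp only [hf_def, hg_def, hσ' t ht0, mul_pow, hsq']
    field_simp
  -- integrabilities
  have hfint : IntervalIntegrable f MeasureTheory.volume 0 s := by
    have h1 : ContinuousOn f (Set.uIcc 0 s) := by rw [Set.uIcc_of_le hs.le]; exact hfcont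
    exact h1.intervalIntegrable
  have hgint : IntervalIntegrable g MeasureTheory.volume 0 s := by
    have h1 : ContinuousOn g (Set.uIcc 0 s) := by rw [Set.uIcc_of_le hs.le]; exact hgcont
    exact h1.intervalIntegrable
  have hsumint : IntervalIntegrable (fun t => f t + 2 * β * g t) MeasureTheory.volume 0 s :=
    hfint.add (hgint.const_mul _)
  -- FTC
  have hFTC : (∫ t in (0:ℝ)..s, (f t + 2 * β * g t)) = F s - F 0 :=
    intervalIntegral.integral_eq_sub_of_hasDerivAt_of_le hs.le hFcont hFderiv hsumint
  have hsplit : (∫ t in (0:ℝ)..s, (f t + 2 * β * g t))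
      = (∫ t in (0:ℝ)..s, f t) + 2 * β * ∫ t in (0:ℝ)..s, g t := by
    rw [intervalIntegral.integral_add hfint (hgint.const_mul _),
      intervalIntegral.integral_const_mul]
  have hGs : 0 < G s := by
    rw [hG s hs]; exact Real.exp_pos _
  have hmain : (∫ t in (0:ℝ)..s, f t)
      = β * G s * σ s ^ 2 - 2 * β * ∫ t in (0:ℝ)..s, g t := by
    have := hFTC
    rw [hsplit, hF0] at this
    simp only [hF_def] at this ⊢
    linarith
  rw [hφ s hs]
  rw [show (∫ t in (0:ℝ)..s, G t * σ' t ^ 2) = ∫ t in (0:ℝ)..s, f t from rfl, hmain]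
  field_simp
end

section
/- Let β > 0 and let h : (0,∞) → [0,∞) be continuous with lim_{s→0⁺} h(s) = +∞, lim_{s→0⁺} ∫_s^1 √(h(t)) dt = +∞, lim_{s→0⁺} √(h(s))·exp(−∫_s^1 √(h(t)) dt) = h₀ for some h₀ ≥ 0, and h(s) = 0 for all s ≥ 1. Then φ(s) ≤ β·σ(s)² for every s > 0, where φ(s) = (∫_0^s G(t)·σ′(t)² dt)/G(s). -/
open Real Filter Set Topology MeasureTheory

/-- The inequality `φ(s) ≤ β·σ(s)²` for every `s > 0`. -/
theorem stmt6 (β : ℝ) (hβ : 0 < β) (h : ℝ → ℝ) (h₀ : ℝ) (hh₀ : 0 ≤ h₀)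
    (hcont : ContinuousOn h (Set.Ioi 0))
    (hnonneg : ∀ s > (0 : ℝ), 0 ≤ h s)
    (hlim1 : Tendsto h (𝓝[>] (0 : ℝ)) atTop)
    (hlim2 : Tendsto (fun s => ∫ t in s..1, Real.sqrt (h t)) (𝓝[>] (0 : ℝ)) atTop)
    (hlim3 : Tendsto
      (fun s => Real.sqrt (h s) * Real.exp (-(∫ t in s..1, Real.sqrt (h t))))
      (𝓝[>] (0 : ℝ)) (𝓝 h₀))
    (hone : ∀ s ≥ (1 : ℝ), h s = 0)
    (G σ σ' φ : ℝ → ℝ)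
    (hG : ∀ s > (0 : ℝ), G s = Real.exp (-(1 / β) * ∫ t in s..1, h t))
    (hG0 : G 0 = 0)
    (hσ : ∀ s > (0 : ℝ), σ s = Real.exp (-(∫ t in s..1, Real.sqrt (h t))))
    (hσ0 : σ 0 = 0)
    (hσ' : ∀ s > (0 : ℝ), σ' s = Real.sqrt (h s) * σ s)
    (hσ'0 : σ' 0 = h₀)
    (hφ : ∀ s > (0 : ℝ), φ s = (∫ t in (0 : ℝ)..s, G t * (σ' t) ^ 2) / G s)
    (hφ0 : φ 0 = 0) :
    ∀ s > (0 : ℝ), φ s ≤ β * (σ s) ^ 2 := by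
  have hβ' : β ≠ 0 := ne_of_gt hβ
  -- continuity of sqrt ∘ h
  have hscont : ContinuousOn (fun t => Real.sqrt (h t)) (Set.Ioi 0) :=
    Real.continuous_sqrt.comp_continuousOn hcont
  -- interval integrability of h and sqrt h on t..1 for t > 0
  have hsub : ∀ t > (0:ℝ), Set.uIcc t 1 ⊆ Set.Ioi 0 := by
    intro t ht x hx
    have := hx.1
    simp only [Set.mem_Ioi]
    rcases le_total t 1 with H | H
    · rw [Set.uIcc_of_le H] at hx; exact lt_of_lt_of_le ht hx.1
    · rw [Set.uIcc_of_ge H] at hx; exact lt_of_lt_of_le one_pos hx.1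
  have hHint : ∀ t > (0:ℝ), IntervalIntegrable h volume t 1 := fun t ht =>
    (hcont.mono (hsub t ht)).intervalIntegrable
  have hSint : ∀ t > (0:ℝ), IntervalIntegrable (fun x => Real.sqrt (h x)) volume t 1 :=
    fun t ht => (hscont.mono (hsub t ht)).intervalIntegrable
  -- derivatives of the primitives
  have hHderiv : ∀ t ∈ Set.Ioi (0:ℝ), HasDerivAt (fun u => ∫ x in u..1, h x) (-h t) t := by
    intro t ht
    exact intervalIntegral.integral_hasDerivAt_left (hHint t ht)
      (hcont.stronglyMeasurableAtFilter isOpen_Ioi t ht)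
      (hcont.continuousAt (isOpen_Ioi.mem_nhds ht))
  have hSderiv : ∀ t ∈ Set.Ioi (0:ℝ),
      HasDerivAt (fun u => ∫ x in u..1, Real.sqrt (h x)) (-Real.sqrt (h t)) t := by
    intro t ht
    exact intervalIntegral.integral_hasDerivAt_left (hSint t ht)
      (hscont.stronglyMeasurableAtFilter isOpen_Ioi t ht)
      (hscont.continuousAt (isOpen_Ioi.mem_nhds ht))
  -- the explicit functions
  set F : ℝ → ℝ := fun t => β * Real.exp
      (-(1/β) * (∫ x in t..1, h x) - 2 * ∫ x in t..1, Real.sqrt (h x)) with hF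
  set F' : ℝ → ℝ := fun t => Real.exp
      (-(1/β) * (∫ x in t..1, h x) - 2 * ∫ x in t..1, Real.sqrt (h x))
      * (h t + 2 * β * Real.sqrt (h t)) with hF'
  set g : ℝ → ℝ := fun t => Real.exp
      (-(1/β) * (∫ x in t..1, h x) - 2 * ∫ x in t..1, Real.sqrt (h x)) * h t with hg
  have hFderiv : ∀ t ∈ Set.Ioi (0:ℝ), HasDerivAt F (F' t) t := by
    intro t ht
    have h1 : HasDerivAt (fun u => -(1/β) * (∫ x in u..1, h x)
        - 2 * ∫ x in u..1, Real.sqrt (h x))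
        (-(1/β) * (-h t) - 2 * (-Real.sqrt (h t))) t :=
      ((hHderiv t ht).const_mul _).sub ((hSderiv t ht).const_mul _)
    have h2 := (h1.exp).const_mul β
    refine h2.congr_deriv ?_
    simp only [hF']
    field_simp
    ring
  -- g equals the integrand on Ioi 0
  have hgeq : ∀ t ∈ Set.Ioi (0:ℝ), G t * σ' t ^ 2 = g t := by
    intro t ht
    rw [hG t ht, hσ' t ht, hσ t ht, mul_pow, Real.sq_sqrt (hnonneg t ht)]
    rw [← Real.exp_nat_mul]
    simp only [hg]
    rw [mul_left_comm, ← Real.exp_add, mul_comm]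
    congr 2
    push_cast
    ring
  -- continuity of g and F' on Ioi 0
  have hHcont : ContinuousOn (fun t => ∫ x in t..1, h x) (Set.Ioi 0) := by
    intro t ht
    exact (hHderiv t ht).continuousAt.continuousWithinAt
  have hScont : ContinuousOn (fun t => ∫ x in t..1, Real.sqrt (h x)) (Set.Ioi 0) := by
    intro t ht
    exact (hSderiv t ht).continuousAt.continuousWithinAt
  have hecont : ContinuousOn (fun t => Real.exp
      (-(1/β) * (∫ x in t..1, h x) - 2 * ∫ x in t..1, Real.sqrt (h x))) (Set.Ioi 0) :=
    Real.continuous_exp.comp_continuousOn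
      ((continuousOn_const.mul hHcont).sub (continuousOn_const.mul hScont))
  have hgcont : ContinuousOn g (Set.Ioi 0) := hecont.mul hcont
  have hF'cont : ContinuousOn F' (Set.Ioi 0) :=
    hecont.mul (hcont.add ((continuousOn_const.mul hscont)))
  -- key inequality on [ε, s]
  intro s hs
  have hGs : G s = Real.exp (-(1 / β) * ∫ t in s..1, h t) := hG s hs
  have hGpos : 0 < G s := by rw [hGs]; exact Real.exp_pos _
  have key : ∀ ε ∈ Set.Ioo (0:ℝ) s, ∫ t in ε..s, G t * σ' t ^ 2 ≤ F s := by
    intro ε hε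
    have hεs : ε ≤ s := hε.2.le
    have hIcc : Set.Icc ε s ⊆ Set.Ioi 0 := fun x hx => lt_of_lt_of_le hε.1 hx.1
    have huIcc : Set.uIcc ε s ⊆ Set.Ioi 0 := by rw [Set.uIcc_of_le hεs]; exact hIcc
    have hint_g : IntervalIntegrable g volume ε s := (hgcont.mono huIcc).intervalIntegrable
    have hint_F' : IntervalIntegrable F' volume ε s := (hF'cont.mono huIcc).intervalIntegrable
    have step1 : ∫ t in ε..s, G t * σ' t ^ 2 = ∫ t in ε..s, g t := by
      apply intervalIntegral.integral_congr
      intro x hx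
      exact hgeq x (huIcc hx)
    have step2 : ∫ t in ε..s, g t ≤ ∫ t in ε..s, F' t := by
      apply intervalIntegral.integral_mono_on hεs hint_g hint_F'
      intro x hx
      have hx0 : x ∈ Set.Ioi (0:ℝ) := hIcc hx
      simp only [hg, hF']
      apply mul_le_mul_of_nonneg_left _ (Real.exp_pos _).le
      have h2 : (0:ℝ) ≤ 2 * β * Real.sqrt (h x) := by positivity
      linarith
    have step3 : ∫ t in ε..s, F' t = F s - F ε := by
      apply intervalIntegral.integral_eq_sub_of_hasDerivAt
      · intro x hx
        exact hFderiv x (huIcc hx)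
      · exact hint_F'
    have hFε : 0 ≤ F ε := by positivity
    calc ∫ t in ε..s, G t * σ' t ^ 2 = ∫ t in ε..s, g t := step1
      _ ≤ ∫ t in ε..s, F' t := step2
      _ = F s - F ε := step3
      _ ≤ F s := by linarith
  -- pass to the limit ε → 0⁺
  have main : ∫ t in (0:ℝ)..s, G t * σ' t ^ 2 ≤ F s := by
    by_cases hint : IntervalIntegrable (fun t => G t * σ' t ^ 2) volume 0 s
    · have hmem : s ∈ Set.uIcc (0:ℝ) s := Set.right_mem_uIcc
      have hc := intervalIntegral.continuousOn_primitive_interval' hint hmem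
      have h0mem : (0:ℝ) ∈ Set.uIcc (0:ℝ) s := Set.left_mem_uIcc
      have hcw : ContinuousWithinAt (fun b => ∫ x in s..b, G x * σ' x ^ 2)
          (Set.uIcc (0:ℝ) s) 0 := hc 0 h0mem
      have huIcc_eq : Set.uIcc (0:ℝ) s = Set.Icc 0 s := Set.uIcc_of_le hs.le
      have hIooSub : Set.Ioo (0:ℝ) s ⊆ Set.uIcc 0 s := by
        rw [huIcc_eq]; exact Set.Ioo_subset_Icc_self
      have hT : Tendsto (fun b => -∫ x in s..b, G x * σ' x ^ 2)
          (𝓝[Set.Ioo (0:ℝ) s] 0) (𝓝 (-∫ x in s..(0:ℝ), G x * σ' x ^ 2)) :=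
        ((hcw.mono hIooSub).tendsto).neg
      have hne : (𝓝[Set.Ioo (0:ℝ) s] (0:ℝ)).NeBot := left_nhdsWithin_Ioo_neBot hs
      have hrw : -∫ x in s..(0:ℝ), G x * σ' x ^ 2 = ∫ x in (0:ℝ)..s, G x * σ' x ^ 2 := by
        rw [intervalIntegral.integral_symm, neg_neg]
      rw [← hrw]
      apply le_of_tendsto hT
      filter_upwards [self_mem_nhdsWithin] with ε hε
      rw [intervalIntegral.integral_symm ε s, neg_neg]
      exact key ε hε
    · rw [intervalIntegral.integral_undef hint]
      positivity
  -- conclude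
  rw [hφ s hs, div_le_iff₀ hGpos]
  have hFs : F s = β * σ s ^ 2 * G s := by
    simp only [hF]
    rw [hσ s hs, hGs, ← Real.exp_nat_mul, mul_assoc, ← Real.exp_add]
    congr 2
    push_cast
    ring
  rw [← hFs]
  exact main
end

section
/- For every a > 0, b > 0 and every λ > b²/(4a²), the function φ_λ(s) = s·exp(λ·s²) satisfies a·φ_λ′(s) − b·|φ_λ(s)| ≥ a/2 for all s ∈ ℝ. -/
open Real Filter Set Topology

lemma dphi (lam s : ℝ) :
    HasDerivAt (fun s : ℝ => s * Real.exp (lam * s ^ 2))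
      (Real.exp (lam * s ^ 2) * (1 + 2 * lam * s ^ 2)) s := by
  have h1 : HasDerivAt (fun s : ℝ => lam * s ^ 2) (lam * (2 * s)) s := by
    simpa using (hasDerivAt_pow 2 s).const_mul lam
  have h2 := h1.exp
  have h3 : HasDerivAt (fun x : ℝ => id x * Real.exp (lam * x ^ 2))
      (1 * Real.exp (lam * s ^ 2) + id s * (Real.exp (lam * s ^ 2) * (lam * (2 * s)))) s :=
    (hasDerivAt_id s).mul h2
  simp only [id] at h3
  convert h3 using 1
  ring

/-- For every `a > 0`, `b > 0` and `λ > b²/(4a²)`, the function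
`φ_λ(s) = s·exp(λ·s²)` satisfies `a·φ_λ′(s) − b·|φ_λ(s)| ≥ a/2` for all `s ∈ ℝ`. -/
theorem stmt7 (a b lam : ℝ) (ha : 0 < a) (hb : 0 < b)
    (hlam : b ^ 2 / (4 * a ^ 2) < lam) :
    ∀ s : ℝ,
      a * deriv (fun s : ℝ => s * Real.exp (lam * s ^ 2)) s -
        b * |s * Real.exp (lam * s ^ 2)| ≥ a / 2 := by
  intro s
  rw [(dphi lam s).deriv]
  have hlam' : b ^ 2 < 4 * a ^ 2 * lam := by
    rw [div_lt_iff₀ (by positivity)] at hlam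
    linarith
  have hlampos : 0 < lam := by nlinarith [sq_nonneg b]
  have hE : (1 : ℝ) ≤ Real.exp (lam * s ^ 2) := by
    apply Real.one_le_exp; positivity
  rw [abs_mul, abs_of_pos (Real.exp_pos _)]
  have habs : 0 ≤ |s| := abs_nonneg s
  have hsq : |s| ^ 2 = s ^ 2 := sq_abs s
  have hbr : a / 2 ≤ a * (1 + 2 * lam * s ^ 2) - b * |s| := by
    rw [← hsq]
    nlinarith [sq_nonneg (4 * a * lam * |s| - b), mul_pos ha hlampos, hlam']
  nlinarith [mul_le_mul_of_nonneg_left hE (le_of_lt (show (0:ℝ) < a/2 by linarith)),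
    mul_le_mul_of_nonneg_right hbr (le_of_lt (Real.exp_pos (lam * s ^ 2)))]
end

section
/- Let b : [0,∞) → [0,∞) be continuous and suppose there exists s₁ > 0 such that b is nondecreasing on [s₁,∞) and b(s) > 0 for all s ≥ s₁. Then ∫_{s₁}^∞ ds/√(s·b(s)) < +∞ if and only if there exists t₀ > s₁ such that ∫_{t₀}^∞ dt/√(2∫_0^t b(τ) dτ) < +∞. -/
open Real Filter Set Topology MeasureTheory

/-- For `b : [0,∞) → [0,∞)` continuous, eventually positive
and nondecreasing, the condition `∫_{s₁}^∞ ds/√(s·b(s)) < +∞` is equivalent to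
the Keller–Osserman condition
`∫_{t₀}^∞ dt/√(2∫_0^t b(τ) dτ) < +∞` for some `t₀ > s₁`. -/
theorem stmt10 (b : ℝ → ℝ)
    (hb_cont : ContinuousOn b (Set.Ici 0))
    (hb_nonneg : ∀ s ≥ (0 : ℝ), 0 ≤ b s)
    (s₁ : ℝ) (hs₁ : 0 < s₁)
    (hmono : MonotoneOn b (Set.Ici s₁))
    (hpos : ∀ s ≥ s₁, 0 < b s) :
    IntegrableOn (fun s => 1 / Real.sqrt (s * b s)) (Set.Ici s₁) ↔
      ∃ t₀ > s₁, IntegrableOn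
        (fun t => 1 / Real.sqrt (2 * ∫ τ in (0 : ℝ)..t, b τ)) (Set.Ici t₀) := by
  set g : ℝ → ℝ := fun s => 1 / Real.sqrt (s * b s) with hgdef
  set B : ℝ → ℝ := fun t => ∫ τ in (0 : ℝ)..t, b τ with hBdef
  -- interval integrability of b on nonnegative intervals
  have hbi : ∀ x y : ℝ, 0 ≤ x → 0 ≤ y → IntervalIntegrable b volume x y := by
    intro x y hx hy
    refine (hb_cont.mono ?_).intervalIntegrable
    intro z hz
    rw [Set.uIcc_eq_union] at hz
    rcases hz with hz | hz
    · exact le_trans hx hz.1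
    · exact le_trans hy hz.1
  -- splitting of B
  have hBsplit : ∀ x t : ℝ, 0 ≤ x → 0 ≤ t →
      B t = B x + ∫ τ in x..t, b τ := by
    intro x t hx ht
    rw [hBdef]
    exact (intervalIntegral.integral_add_adjacent_intervals (hbi 0 x le_rfl hx)
      (hbi x t hx ht)).symm
  -- lower bound for B
  have hBlow : ∀ t : ℝ, s₁ ≤ t → (t - s₁) * b s₁ ≤ B t := by
    intro t ht
    have h0t : (0:ℝ) ≤ t := le_trans hs₁.le ht
    rw [hBsplit s₁ t hs₁.le h0t]
    have h1 : (0:ℝ) ≤ B s₁ := by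
      rw [hBdef]
      exact intervalIntegral.integral_nonneg hs₁.le fun u hu => hb_nonneg u hu.1
    have h2 : (t - s₁) * b s₁ ≤ ∫ τ in s₁..t, b τ := by
      have := intervalIntegral.integral_mono_on (f := fun _ => b s₁) (g := b) ht
        intervalIntegrable_const (hbi s₁ t hs₁.le h0t)
        (fun x hx => hmono (Set.mem_Ici.mpr le_rfl) (Set.mem_Ici.mpr hx.1) hx.1)
      simpa using this
    linarith
  have hBpos : ∀ t : ℝ, s₁ < t → 0 < B t := by
    intro t ht
    have := hBlow t ht.le
    have : 0 < (t - s₁) * b s₁ := mul_pos (by linarith) (hpos s₁ le_rfl)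
    linarith [hBlow t ht.le]
  -- continuity of B on Ici 0
  have hBcont : ContinuousOn B (Set.Ici 0) := by
    intro x hx
    have h1 : ContinuousWithinAt B (Set.Icc 0 (x + 1)) x := by
      rw [hBdef]
      refine intervalIntegral.continuousWithinAt_primitive (by simp) ?_
      have h0 : (0:ℝ) ⊓ 0 = 0 := by simp
      have h0' : (0:ℝ) ⊔ (x + 1) = x + 1 := by
        rw [sup_eq_right]; linarith [hx.out]
      rw [h0, h0']
      exact hbi 0 (x + 1) le_rfl (by linarith [hx.out])
    have h2 : ContinuousWithinAt B (Set.Ici 0 ∩ Set.Iic (x + 1)) x := by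
      refine h1.mono ?_
      exact fun z hz => ⟨hz.1, hz.2⟩
    exact (continuousWithinAt_inter (Iic_mem_nhds (by linarith))).mp h2
  -- continuity of g on Ici s₁
  have hgcont : ContinuousOn g (Set.Ici s₁) := by
    have hsub : Set.Ici s₁ ⊆ Set.Ici (0:ℝ) := Set.Ici_subset_Ici.mpr hs₁.le
    refine ContinuousOn.div continuousOn_const ?_ ?_
    · exact Real.continuous_sqrt.comp_continuousOn
        ((continuousOn_id).mul (hb_cont.mono hsub))
    · intro s hs
      have : 0 < s * b s := mul_pos (lt_of_lt_of_le hs₁ hs) (hpos s hs)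
      exact (Real.sqrt_pos.mpr this).ne'
  -- continuity of KO integrand on Ioi s₁
  have hKOcont : ContinuousOn (fun t => 1 / Real.sqrt (2 * B t)) (Set.Ici s₁ \ {s₁}) := by
    have hsub : Set.Ici s₁ \ {s₁} ⊆ Set.Ici (0:ℝ) :=
      fun z hz => le_trans hs₁.le hz.1
    refine ContinuousOn.div continuousOn_const ?_ ?_
    · exact Real.continuous_sqrt.comp_continuousOn
        (continuousOn_const.mul (hBcont.mono hsub))
    · intro t ht
      have ht' : s₁ < t := lt_of_le_of_ne ht.1 (Ne.symm ht.2)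
      have : 0 < 2 * B t := by linarith [hBpos t ht']
      exact (Real.sqrt_pos.mpr this).ne'
  constructor
  · -- forward direction
    intro hg
    refine ⟨2 * s₁, by linarith, ?_⟩
    rw [integrableOn_Ici_iff_integrableOn_Ioi]
    have h1 : IntegrableOn (fun t => g (2⁻¹ * t)) (Set.Ioi (2 * s₁)) := by
      refine (integrableOn_Ioi_comp_mul_left_iff g (2 * s₁) (by norm_num : (0:ℝ) < 2⁻¹)).mpr ?_
      have : 2⁻¹ * (2 * s₁) = s₁ := by ring
      rw [this]
      exact hg.mono_set Set.Ioi_subset_Ici_self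
    refine h1.mono' ?_ ?_
    · refine (hKOcont.mono ?_).aestronglyMeasurable measurableSet_Ioi
      intro z hz
      exact ⟨le_trans (by linarith) hz.out.le, by intro h; simp at h; linarith [hz.out, h]⟩
    · refine ae_restrict_of_forall_mem measurableSet_Ioi ?_
      intro t ht
      have ht2 : 2 * s₁ < t := ht
      have hs₁t : s₁ ≤ 2⁻¹ * t := by linarith
      have h0t2 : (0:ℝ) < 2⁻¹ * t := lt_of_lt_of_le hs₁ hs₁t
      have hbt2 : 0 < b (2⁻¹ * t) := hpos _ hs₁t
      -- B t ≥ (t/2) * b(t/2)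
      have hkey : (2⁻¹ * t) * b (2⁻¹ * t) ≤ B t := by
        rw [hBsplit (2⁻¹ * t) t h0t2.le (by linarith)]
        have hA : (0:ℝ) ≤ B (2⁻¹ * t) := by
          rw [hBdef]
          exact intervalIntegral.integral_nonneg h0t2.le fun u hu => hb_nonneg u hu.1
        have hB2 : (t - 2⁻¹ * t) * b (2⁻¹ * t) ≤ ∫ τ in (2⁻¹ * t)..t, b τ := by
          have := intervalIntegral.integral_mono_on (f := fun _ => b (2⁻¹ * t)) (g := b)
            (by linarith) intervalIntegrable_const (hbi _ t h0t2.le (by linarith))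
            (fun x hx => hmono (Set.mem_Ici.mpr hs₁t) (Set.mem_Ici.mpr (le_trans hs₁t hx.1)) hx.1)
          simpa using this
        nlinarith
      have hpos2 : 0 < (2⁻¹ * t) * b (2⁻¹ * t) := mul_pos h0t2 hbt2
      have hle : (2⁻¹ * t) * b (2⁻¹ * t) ≤ 2 * B t := by nlinarith
      have h2 : Real.sqrt ((2⁻¹ * t) * b (2⁻¹ * t)) ≤ Real.sqrt (2 * B t) :=
        Real.sqrt_le_sqrt hle
      have hsq : 0 < Real.sqrt ((2⁻¹ * t) * b (2⁻¹ * t)) := Real.sqrt_pos.mpr hpos2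
      have : ‖1 / Real.sqrt (2 * B t)‖ = 1 / Real.sqrt (2 * B t) := by
        rw [Real.norm_eq_abs, abs_of_nonneg]
        positivity
      rw [this]
      exact one_div_le_one_div_of_le hsq h2
  · -- reverse direction
    rintro ⟨t₀, ht₀, hKO⟩
    set C₀ := B s₁ with hC₀
    have hC₀nn : 0 ≤ C₀ := by
      rw [hC₀, hBdef]
      exact intervalIntegral.integral_nonneg hs₁.le fun u hu => hb_nonneg u hu.1
    set T : ℝ := max t₀ (max s₁ (C₀ / b s₁)) with hT
    have hTt₀ : t₀ ≤ T := le_max_left _ _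
    have hTs₁ : s₁ ≤ T := le_trans (le_max_left _ _) (le_max_right _ _)
    have hs₁T : s₁ < T := lt_of_lt_of_le ht₀ hTt₀
    -- for t ≥ T : B t ≤ 2 * (t * b t)
    have hupper : ∀ t : ℝ, T ≤ t → B t ≤ 2 * (t * b t) := by
      intro t ht
      have hs₁t : s₁ ≤ t := le_trans hTs₁ ht
      have h0t : (0:ℝ) < t := lt_of_lt_of_le hs₁ hs₁t
      have hbspos : 0 < b s₁ := hpos s₁ le_rfl
      have hbt : b s₁ ≤ b t := hmono (Set.mem_Ici.mpr le_rfl) (Set.mem_Ici.mpr hs₁t) hs₁t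
      have h1 : B t = C₀ + ∫ τ in s₁..t, b τ := hBsplit s₁ t hs₁.le h0t.le
      have h2 : ∫ τ in s₁..t, b τ ≤ (t - s₁) * b t := by
        have := intervalIntegral.integral_mono_on (f := b) (g := fun _ => b t) hs₁t
          (hbi s₁ t hs₁.le h0t.le) intervalIntegrable_const
          (fun x hx => hmono (Set.mem_Ici.mpr hx.1) (Set.mem_Ici.mpr hs₁t) hx.2)
        simpa using this
      have h3 : C₀ ≤ t * b t := by
        have hct : C₀ / b s₁ ≤ t := le_trans (le_trans (le_max_right _ _) (le_max_right _ _)) ht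
        have : C₀ ≤ t * b s₁ := by
          rw [div_le_iff₀ hbspos] at hct
          linarith
        nlinarith
      nlinarith [mul_nonneg hs₁.le (hb_nonneg t h0t.le)]
    have hsplitset : Set.Icc s₁ T ∪ Set.Ici T = Set.Ici s₁ := Set.Icc_union_Ici_eq_Ici hTs₁
    rw [← hsplitset]
    refine IntegrableOn.union ?_ ?_
    · exact (hgcont.mono (fun z hz => hz.1)).integrableOn_compact isCompact_Icc
    · -- on Ici T, compare with 2 / sqrt(2 B t)
      have hKOT0 : IntegrableOn (fun t => 1 / Real.sqrt (2 * B t)) (Set.Ici T) :=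
        hKO.mono_set (Set.Ici_subset_Ici.mpr hTt₀)
      have hKOT : IntegrableOn (fun t => 2 * (1 / Real.sqrt (2 * B t))) (Set.Ici T) :=
        hKOT0.const_mul (2:ℝ)
      refine hKOT.mono' ?_ ?_
      · exact ((hgcont.mono (Set.Ici_subset_Ici.mpr hTs₁)).aestronglyMeasurable measurableSet_Ici)
      · refine ae_restrict_of_forall_mem measurableSet_Ici ?_
        intro t ht
        have hTt : T ≤ t := ht
        have hs₁t : s₁ < t := lt_of_lt_of_le hs₁T hTt
        have h0t : (0:ℝ) < t := lt_of_lt_of_le hs₁ hs₁t.le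
        have hbt : 0 < b t := hpos t hs₁t.le
        have hBt : 0 < B t := hBpos t hs₁t
        have htbt : 0 < t * b t := mul_pos h0t hbt
        have hup := hupper t hTt
        have hsqle : Real.sqrt (2 * B t) ≤ 2 * Real.sqrt (t * b t) := by
          have h4 : 2 * B t ≤ 4 * (t * b t) := by linarith
          have h5 : Real.sqrt (2 * B t) ≤ Real.sqrt (4 * (t * b t)) := Real.sqrt_le_sqrt h4
          have h4eq : Real.sqrt (4 * (t * b t)) = 2 * Real.sqrt (t * b t) := by
            rw [Real.sqrt_mul (by norm_num : (0:ℝ) ≤ 4)]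
            have : Real.sqrt 4 = 2 := by
              rw [show (4:ℝ) = 2 ^ 2 by norm_num]
              exact Real.sqrt_sq (by norm_num)
            rw [this]
          linarith [h4eq ▸ h5]
        have hnorm : ‖g t‖ = 1 / Real.sqrt (t * b t) := by
          rw [hgdef, Real.norm_eq_abs, abs_of_nonneg]
          positivity
        rw [hnorm]
        have hs2 : 0 < Real.sqrt (t * b t) := Real.sqrt_pos.mpr htbt
        have hs3 : 0 < Real.sqrt (2 * B t) := Real.sqrt_pos.mpr (by linarith)
        rw [mul_one_div, div_le_div_iff₀ hs2 hs3]
        linarith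
end

section
/- Let α > 0 and let h : (0,∞) → [0,∞) be continuous. Define h̃(s) = h(s) + α/s, H(s) = ∫_1^s h̃(t) dt (so H(s) = −∫_s^1 h̃(t) dt for 0 < s < 1), and ψ(s) = ∫_s^1 exp(−H(t)/α) dt for s > 0. Then ψ is strictly decreasing on (0,∞), lim_{s→0⁺} ψ(s) = +∞, and lim_{s→+∞} ψ(s) exists in [−∞,0) (i.e. the limit is strictly negative, possibly equal to −∞). -/
open Real Filter Set Topology MeasureTheory

/-- With `h̃(s) = h(s) + α/s`, `H(s) = ∫_1^s h̃(t) dt` and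
`ψ(s) = ∫_s^1 exp(−H(t)/α) dt`, the function `ψ` is strictly decreasing on
`(0,∞)`, `ψ(s) → +∞` as `s → 0⁺`, and `lim_{s→+∞} ψ(s)` exists in `[−∞,0)`. -/
theorem stmt11 (α : ℝ) (hα : 0 < α) (h : ℝ → ℝ)
    (hcont : ContinuousOn h (Set.Ioi 0))
    (hnonneg : ∀ s > (0 : ℝ), 0 ≤ h s)
    (H ψ : ℝ → ℝ)
    (hH : ∀ s > (0 : ℝ), H s = ∫ t in (1 : ℝ)..s, (h t + α / t))
    (hψ : ∀ s > (0 : ℝ), ψ s = ∫ t in s..1, Real.exp (-H t / α)) :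
    StrictAntiOn ψ (Set.Ioi 0) ∧
    Tendsto ψ (𝓝[>] (0 : ℝ)) atTop ∧
    ∃ L : EReal, L < 0 ∧ Tendsto (fun s => ((ψ s : ℝ) : EReal)) atTop (𝓝 L) := by
  set f : ℝ → ℝ := fun t => h t + α / t with hf
  have hfc : ContinuousOn f (Set.Ioi 0) :=
    hcont.add (continuousOn_const.div continuousOn_id (fun t ht => ne_of_gt ht))
  have hsub : ∀ a b : ℝ, 0 < a → 0 < b → Set.uIcc a b ⊆ Set.Ioi 0 := by
    intro a b ha hb x hx
    exact Set.mem_Ioi.mpr ((lt_min ha hb).trans_le hx.1)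
  have hfi : ∀ a b : ℝ, 0 < a → 0 < b → IntervalIntegrable f volume a b := by
    intro a b ha hb
    exact (hfc.mono (hsub a b ha hb)).intervalIntegrable
  -- continuity of H on Ioi 0
  have hHc : ∀ s₀ ∈ Set.Ioi (0:ℝ), ContinuousAt H s₀ := by
    intro s₀ hs₀
    have hmeas : StronglyMeasurableAtFilter f (𝓝 s₀) volume := by
      refine ⟨Set.Ioi 0, Ioi_mem_nhds hs₀, ?_⟩
      exact hfc.aestronglyMeasurable measurableSet_Ioi
    have hca : ContinuousAt f s₀ := hfc.continuousAt (Ioi_mem_nhds hs₀)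
    have hd := intervalIntegral.integral_hasDerivAt_right (hfi 1 s₀ one_pos hs₀) hmeas hca
    have hc : ContinuousAt (fun u => ∫ t in (1:ℝ)..u, f t) s₀ := hd.continuousAt
    apply hc.congr
    filter_upwards [Ioi_mem_nhds hs₀] with u hu
    exact (hH u hu).symm
  set g : ℝ → ℝ := fun t => Real.exp (-H t / α) with hg
  have hgc : ∀ s₀ ∈ Set.Ioi (0:ℝ), ContinuousAt g s₀ := by
    intro s₀ hs₀
    exact Real.continuous_exp.continuousAt.comp (((hHc s₀ hs₀).neg).div_const α)
  have hgcOn : ContinuousOn g (Set.Ioi 0) := fun x hx => (hgc x hx).continuousWithinAt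
  have hgi : ∀ a b : ℝ, 0 < a → 0 < b → IntervalIntegrable g volume a b := by
    intro a b ha hb
    exact (hgcOn.mono (hsub a b ha hb)).intervalIntegrable
  -- split formula
  have hsplit : ∀ a b : ℝ, 0 < a → 0 < b → ψ a = (∫ t in a..b, g t) + ψ b := by
    intro a b ha hb
    rw [hψ a ha, hψ b hb]
    exact (intervalIntegral.integral_add_adjacent_intervals (hgi a b ha hb)
      (hgi b 1 hb one_pos)).symm
  have hsa : StrictAntiOn ψ (Set.Ioi 0) := by
    intro a ha b hb hab
    have hpos : 0 < ∫ t in a..b, g t :=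
      intervalIntegral.intervalIntegral_pos_of_pos_on (hgi a b ha hb)
        (fun x _ => Real.exp_pos _) hab
    have := hsplit a b ha hb
    linarith
  -- lower bound for ψ on (0,1]
  have hHle : ∀ t : ℝ, 0 < t → t ≤ 1 → H t ≤ α * Real.log t := by
    intro t ht ht1
    have h1 : H t = -∫ u in t..(1:ℝ), f u := by
      rw [hH t ht, intervalIntegral.integral_symm]
    have h2 : (∫ u in t..(1:ℝ), α * (1/u)) ≤ ∫ u in t..(1:ℝ), f u := by
      apply intervalIntegral.integral_mono_on ht1
      · exact (continuousOn_const.mul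
          (continuousOn_const.div continuousOn_id (fun u hu => ne_of_gt hu))).mono
          (hsub t 1 ht one_pos) |>.intervalIntegrable
      · exact hfi t 1 ht one_pos
      · intro u hu
        have hu0 : 0 < u := lt_of_lt_of_le ht hu.1
        have := hnonneg u hu0
        simp only [hf, mul_one_div]
        linarith
    have h3 : (∫ u in t..(1:ℝ), α * (1/u)) = α * Real.log (1/t) := by
      rw [intervalIntegral.integral_const_mul, integral_one_div]
      intro hc
      rcases Set.mem_uIcc.mp hc with ⟨h', _⟩ | ⟨h', _⟩ <;> linarith
    have h4 : Real.log (1/t) = -Real.log t := by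
      rw [one_div, Real.log_inv]
    rw [h1]
    rw [h3, h4] at h2
    linarith
  have hglb : ∀ t : ℝ, 0 < t → t ≤ 1 → 1/t ≤ g t := by
    intro t ht ht1
    have h1 : -Real.log t ≤ -H t / α := by
      rw [le_div_iff₀ hα]
      have := hHle t ht ht1
      nlinarith
    calc 1/t = Real.exp (-Real.log t) := by
          rw [Real.exp_neg, Real.exp_log ht, one_div]
      _ ≤ g t := Real.exp_le_exp.mpr h1
  have hψlb : ∀ s : ℝ, 0 < s → s ≤ 1 → -Real.log s ≤ ψ s := by
    intro s hs hs1
    have h2 : (∫ t in s..(1:ℝ), 1/t) ≤ ∫ t in s..(1:ℝ), g t := by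
      apply intervalIntegral.integral_mono_on hs1
      · exact ((continuousOn_const.div continuousOn_id (fun u hu => ne_of_gt hu)).mono
          (hsub s 1 hs one_pos)).intervalIntegrable
      · exact hgi s 1 hs one_pos
      · intro u hu
        exact hglb u (lt_of_lt_of_le hs hu.1) hu.2
    have h3 : (∫ t in s..(1:ℝ), 1/t) = Real.log (1/s) := by
      apply integral_one_div
      intro hc
      rcases Set.mem_uIcc.mp hc with ⟨h', _⟩ | ⟨h', _⟩ <;> linarith
    rw [hψ s hs]
    rw [h3, one_div, Real.log_inv] at h2
    exact h2
  refine ⟨hsa, ?_, ?_⟩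
  · -- tendsto atTop at 0+
    have hlog : Tendsto (fun s : ℝ => -Real.log s) (𝓝[>] (0:ℝ)) atTop := by
      have := Real.tendsto_log_nhdsGT_zero
      exact tendsto_neg_atBot_atTop.comp this
    apply tendsto_atTop_mono' _ _ hlog
    filter_upwards [Ioc_mem_nhdsGT_of_mem (by constructor <;> norm_num : (0:ℝ) ∈ Set.Ico 0 1)]
      with s hs
    exact hψlb s hs.1 hs.2
  · -- limit at infinity
    have hψ1 : ψ 1 = 0 := by rw [hψ 1 one_pos, intervalIntegral.integral_same]
    have hψ2 : ψ 2 < 0 := by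
      have := hsa (Set.mem_Ioi.mpr one_pos) (Set.mem_Ioi.mpr two_pos) one_lt_two
      linarith
    set Φ : ℝ → EReal := fun s => ((ψ (max 1 s) : ℝ) : EReal) with hΦ
    have hanti : AntitoneOn ψ (Set.Ioi 0) := hsa.antitoneOn
    have hΦanti : Antitone Φ := by
      intro s t hst
      simp only [hΦ, EReal.coe_le_coe_iff]
      exact hanti (Set.mem_Ioi.mpr (lt_of_lt_of_le one_pos (le_max_left _ _)))
        (Set.mem_Ioi.mpr (lt_of_lt_of_le one_pos (le_max_left _ _)))
        (max_le_max le_rfl hst)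
    refine ⟨⨅ s, Φ s, ?_, ?_⟩
    · have h1 : (⨅ s, Φ s) ≤ Φ 2 := iInf_le _ 2
      have h2 : Φ 2 < 0 := by
        simp only [hΦ, max_eq_right (by norm_num : (1:ℝ) ≤ 2)]
        exact_mod_cast hψ2
      exact lt_of_le_of_lt h1 h2
    · have h1 : Tendsto Φ atTop (𝓝 (⨅ s, Φ s)) := tendsto_atTop_iInf hΦanti
      apply h1.congr'
      filter_upwards [eventually_ge_atTop (1:ℝ)] with s hs
      simp [hΦ, max_eq_right hs]
end

section
/- Let α > 0 and let h : (0,∞) → [0,∞) be continuous, nonincreasing on (0,δ] for some δ > 0. Define h̃(s) = h(s) + α/s, H(s) = ∫_1^s h̃(t) dt, and ψ(s) = ∫_s^1 exp(−H(t)/α) dt for s > 0. Then the function Υ(t) = (exp(−H(t)/α) − 1)/ψ(t), defined for t ∈ (0,1), is nonincreasing on some interval (0,t₁) with 0 < t₁ < 1. (Equivalently, the function b(s) = exp(−H(ψ⁻¹(s))/α) − 1 has b(s)/s nondecreasing for all sufficiently large s.) -/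
open Real Filter Set Topology MeasureTheory

/-- With `h̃(s) = h(s) + α/s`, `H(s) = ∫_1^s h̃(t) dt` and
`ψ(s) = ∫_s^1 exp(−H(t)/α) dt`, where `h` is nonincreasing on `(0,δ]`, the
function `Υ(t) = (exp(−H(t)/α) − 1)/ψ(t)` is nonincreasing on some interval
`(0,t₁)` with `0 < t₁ < 1`. -/
theorem stmt12 (α δ : ℝ) (hα : 0 < α) (hδ : 0 < δ) (h : ℝ → ℝ)
    (hcont : ContinuousOn h (Set.Ioi 0))
    (hnonneg : ∀ s > (0 : ℝ), 0 ≤ h s)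
    (hmono : AntitoneOn h (Set.Ioc 0 δ))
    (H ψ : ℝ → ℝ)
    (hH : ∀ s > (0 : ℝ), H s = ∫ t in (1 : ℝ)..s, (h t + α / t))
    (hψ : ∀ s > (0 : ℝ), ψ s = ∫ t in s..1, Real.exp (-H t / α)) :
    ∃ t₁ ∈ Set.Ioo (0 : ℝ) 1,
      AntitoneOn (fun t => (Real.exp (-H t / α) - 1) / ψ t) (Set.Ioo 0 t₁) := by
  set g : ℝ → ℝ := fun s => h s + α / s with hgdef
  set E : ℝ → ℝ := fun t => Real.exp (-H t / α) with hEdef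
  -- basic facts about g
  have hg_cont : ContinuousOn g (Ioi 0) := by
    apply hcont.add
    exact continuousOn_const.div continuousOn_id fun x hx => ne_of_gt hx
  have hg_pos : ∀ s > (0:ℝ), 0 < g s := fun s hs =>
    add_pos_of_nonneg_of_pos (hnonneg s hs) (div_pos hα hs)
  have hg_anti : AntitoneOn g (Ioc 0 δ) := by
    intro x hx y hy hxy
    have : α / y ≤ α / x := by gcongr; exact hx.1
    have h2 := hmono hx hy hxy
    simpa [hgdef] using add_le_add h2 this
  have hg_int : ∀ a b : ℝ, 0 < a → 0 < b → IntervalIntegrable g volume a b := by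
    intro a b ha hb
    apply (hg_cont.mono ?_).intervalIntegrable
    intro x hx
    exact lt_of_lt_of_le (lt_min ha hb) hx.1
  -- derivative of H
  have hH_deriv : ∀ t ∈ Ioi (0:ℝ), HasDerivAt H (g t) t := by
    intro t ht
    have h1 : IntervalIntegrable g volume 1 t := hg_int 1 t one_pos ht
    have h2 : StronglyMeasurableAtFilter g (𝓝 t) volume :=
      hg_cont.stronglyMeasurableAtFilter isOpen_Ioi t ht
    have h3 : ContinuousAt g t := hg_cont.continuousAt (isOpen_Ioi.mem_nhds ht)
    have h4 := intervalIntegral.integral_hasDerivAt_right h1 h2 h3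
    apply h4.congr_of_eventuallyEq
    filter_upwards [isOpen_Ioi.mem_nhds ht] with s hs
    exact hH s hs
  have hH_cont : ContinuousOn H (Ioi 0) := fun t ht =>
    ((hH_deriv t ht).continuousAt).continuousWithinAt
  -- E facts
  have hE_pos : ∀ t, 0 < E t := fun t => Real.exp_pos _
  have hE_deriv : ∀ t ∈ Ioi (0:ℝ), HasDerivAt E (E t * (-g t / α)) t := by
    intro t ht
    exact (((hH_deriv t ht).neg).div_const α).exp
  have hE_cont : ContinuousOn E (Ioi 0) :=
    Real.continuous_exp.comp_continuousOn ((hH_cont.neg).div_const α)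
  have hE_int : ∀ a b : ℝ, 0 < a → 0 < b → IntervalIntegrable E volume a b := by
    intro a b ha hb
    apply (hE_cont.mono ?_).intervalIntegrable
    intro x hx
    exact lt_of_lt_of_le (lt_min ha hb) hx.1
  -- derivative of ψ
  have hψ_deriv : ∀ t ∈ Ioi (0:ℝ), HasDerivAt ψ (-E t) t := by
    intro t ht
    have h1 : IntervalIntegrable E volume 1 t := hE_int 1 t one_pos ht
    have h2 : StronglyMeasurableAtFilter E (𝓝 t) volume :=
      hE_cont.stronglyMeasurableAtFilter isOpen_Ioi t ht
    have h3 : ContinuousAt E t := hE_cont.continuousAt (isOpen_Ioi.mem_nhds ht)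
    have h4 := (intervalIntegral.integral_hasDerivAt_right h1 h2 h3).neg
    apply h4.congr_of_eventuallyEq
    filter_upwards [isOpen_Ioi.mem_nhds ht] with s hs
    rw [hψ s hs, intervalIntegral.integral_symm]; rfl
  -- positivity of ψ on (0,1)
  have hψ_pos : ∀ t ∈ Ioo (0:ℝ) 1, 0 < ψ t := by
    intro t ht
    rw [hψ t ht.1]
    exact intervalIntegral.intervalIntegral_pos_of_pos_on (hE_int t 1 ht.1 one_pos)
      (fun x _ => hE_pos x) ht.2
  -- choose t₀
  set t₀ : ℝ := min δ (1/2) with ht₀def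
  have ht₀pos : 0 < t₀ := lt_min hδ (by norm_num)
  have ht₀δ : t₀ ≤ δ := min_le_left _ _
  have ht₀1 : t₀ < 1 := lt_of_le_of_lt (min_le_right _ _) (by norm_num)
  have hψt₀ : 0 < ψ t₀ := hψ_pos t₀ ⟨ht₀pos, ht₀1⟩
  -- E t₀ > 1
  have hEt₀ : 1 < E t₀ := by
    have hint : 0 < ∫ s in t₀..1, g s :=
      intervalIntegral.intervalIntegral_pos_of_pos_on (hg_int t₀ 1 ht₀pos one_pos)
        (fun x hx => hg_pos x (lt_trans ht₀pos hx.1)) ht₀1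
    have hHneg : H t₀ < 0 := by
      rw [hH t₀ ht₀pos, intervalIntegral.integral_symm]
      simpa [hgdef] using neg_neg_of_pos hint
    rw [hEdef]
    rw [Real.one_lt_exp_iff]
    exact div_pos (neg_pos.mpr hHneg) hα
  -- choose t₁
  set t₁ : ℝ := min t₀ (ψ t₀ / (E t₀ - 1)) with ht₁def
  have ht₁pos : 0 < t₁ := lt_min ht₀pos (div_pos hψt₀ (by linarith))
  have ht₁t₀ : t₁ ≤ t₀ := min_le_left _ _
  have ht₁1 : t₁ < 1 := lt_of_le_of_lt ht₁t₀ ht₀1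
  refine ⟨t₁, ⟨ht₁pos, ht₁1⟩, ?_⟩
  -- key inequality
  have key : ∀ t ∈ Ioo (0:ℝ) t₁, E t - 1 ≤ g t / α * ψ t := by
    rintro t ⟨htpos, htlt⟩
    have htt₀ : t < t₀ := lt_of_lt_of_le htlt ht₁t₀
    have hIntE : IntervalIntegrable E volume t t₀ := hE_int t t₀ htpos ht₀pos
    -- split ψ
    have hsplit : ψ t = (∫ s in t..t₀, E s) + ψ t₀ := by
      rw [hψ t htpos, hψ t₀ ht₀pos]
      rw [intervalIntegral.integral_add_adjacent_intervals hIntE (hE_int t₀ 1 ht₀pos one_pos)]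
    -- FTC on [t, t₀]
    have hgE_cont : ContinuousOn (fun s => g s / α * E s) (Ioi 0) :=
      (hg_cont.div_const α).mul hE_cont
    have hgE_int : IntervalIntegrable (fun s => g s / α * E s) volume t t₀ := by
      apply (hgE_cont.mono ?_).intervalIntegrable
      intro x hx
      exact lt_of_lt_of_le (lt_min htpos ht₀pos) hx.1
    have hftc : ∫ s in t..t₀, g s / α * E s = E t - E t₀ := by
      have hder : ∀ s ∈ uIcc t t₀, HasDerivAt (fun u => -E u) (g s / α * E s) s := by
        intro s hs
        have hs0 : 0 < s := by
          rcases hs with ⟨hs1, _⟩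
          calc (0:ℝ) < min t t₀ := lt_min htpos ht₀pos
            _ ≤ s := hs1
        have := (hE_deriv s hs0).neg
        exact this.congr_deriv (by ring)
      rw [intervalIntegral.integral_eq_sub_of_hasDerivAt hder hgE_int]
      ring
    -- monotone comparison
    have hcomp : ∫ s in t..t₀, g s / α * E s ≤ ∫ s in t..t₀, g t / α * E s := by
      apply intervalIntegral.integral_mono_on (le_of_lt htt₀) hgE_int
      · exact hIntE.const_mul (g t / α)
      · intro s hs
        have hs0 : 0 < s := lt_of_lt_of_le htpos hs.1
        have hgs : g s ≤ g t :=
          hg_anti ⟨htpos, le_trans (le_of_lt htt₀) ht₀δ⟩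
            ⟨hs0, le_trans hs.2 ht₀δ⟩ hs.1
        have hEs : 0 ≤ E s := le_of_lt (hE_pos s)
        gcongr
    have hconst : ∫ s in t..t₀, g t / α * E s = g t / α * ∫ s in t..t₀, E s :=
      intervalIntegral.integral_const_mul _ _
    -- tail bound
    have htail : E t₀ - 1 ≤ g t / α * ψ t₀ := by
      have h1 : t ≤ ψ t₀ / (E t₀ - 1) := le_of_lt (lt_of_lt_of_le htlt (min_le_right _ _))
      have h2 : E t₀ - 1 ≤ ψ t₀ / t := by
        rw [le_div_iff₀ htpos]
        rw [le_div_iff₀ (by linarith : (0:ℝ) < E t₀ - 1)] at h1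
        linarith
      have h3 : α / t / α = 1 / t := by field_simp
      have h4 : (1 : ℝ) / t * ψ t₀ = ψ t₀ / t := by ring
      have h5 : α / t ≤ g t := by
        have := hnonneg t htpos
        simp only [hgdef]; linarith
      calc E t₀ - 1 ≤ ψ t₀ / t := h2
        _ = α / t / α * ψ t₀ := by rw [h3, h4]
        _ ≤ g t / α * ψ t₀ := by gcongr
    calc E t - 1 = (E t - E t₀) + (E t₀ - 1) := by ring
      _ ≤ (∫ s in t..t₀, g t / α * E s) + g t / α * ψ t₀ := by
          rw [← hftc]; exact add_le_add hcomp htail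
      _ = g t / α * ((∫ s in t..t₀, E s) + ψ t₀) := by rw [hconst]; ring
      _ = g t / α * ψ t := by rw [← hsplit]
  -- derivative of Υ and conclusion
  have hmem : ∀ t ∈ Ioo (0:ℝ) t₁, t ∈ Ioo (0:ℝ) 1 := fun t ht => ⟨ht.1, lt_trans ht.2 ht₁1⟩
  have hΥ_deriv : ∀ t ∈ Ioo (0:ℝ) t₁,
      HasDerivAt (fun t => (E t - 1) / ψ t)
        ((E t * (-g t / α) * ψ t - (E t - 1) * (-E t)) / (ψ t)^2) t := by
    intro t ht
    exact ((hE_deriv t ht.1).sub_const 1).div (hψ_deriv t ht.1)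
      (ne_of_gt (hψ_pos t (hmem t ht)))
  apply antitoneOn_of_deriv_nonpos (convex_Ioo 0 t₁)
  · intro t ht
    exact ((hΥ_deriv t ht).continuousAt).continuousWithinAt
  · rw [interior_Ioo]
    intro t ht
    exact ((hΥ_deriv t ht).differentiableAt).differentiableWithinAt
  · rw [interior_Ioo]
    intro t ht
    rw [(hΥ_deriv t ht).deriv]
    apply div_nonpos_of_nonpos_of_nonneg _ (sq_nonneg _)
    have hk := key t ht
    have hEt := hE_pos t
    have hψt := hψ_pos t (hmem t ht)
    have h5 : (E t - 1) * E t ≤ (g t / α * ψ t) * E t :=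
      mul_le_mul_of_nonneg_right hk (le_of_lt hEt)
    have heq : E t * (-g t / α) * ψ t = -((g t / α * ψ t) * E t) := by ring
    linarith
end

section
/- Let α > 0 and let h : (0,∞) → [0,∞) be continuous, nonincreasing on (0,δ] for some δ > 0, and such that ∫_0^1 √(h(t)) dt < +∞. Define h̃(s) = h(s) + α/s, H(s) = ∫_1^s h̃(t) dt, and ψ(s) = ∫_s^1 exp(−H(t)/α) dt for s > 0. Then ψ is a strictly decreasing bijection from (0,∞) onto (ψ_∞, +∞), where ψ_∞ = lim_{s→+∞} ψ(s) ∈ [−∞,0), and the function b : (ψ_∞, +∞) → [−1,∞) defined by b(s) = exp(−H(ψ⁻¹(s))/α) − 1 (which is nonnegative on [0,+∞)) satisfies the Keller–Osserman condition: there exists t₀ > 0 such that ∫_{t₀}^∞ dt/√(2∫_0^t b(τ) dτ) < +∞. -/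
open Real Filter Set Topology MeasureTheory

set_option maxHeartbeats 2000000 in
/-- With `h̃(s) = h(s) + α/s`, `H(s) = ∫_1^s h̃(t) dt` and
`ψ(s) = ∫_s^1 exp(−H(t)/α) dt`, where `h` is nonincreasing near `0` and
`∫_0^1 √(h(t)) dt < +∞`, the function `ψ` is a strictly decreasing bijection
from `(0,∞)` onto `(ψ_∞,+∞)` with `ψ_∞ = lim_{s→∞} ψ(s) ∈ [−∞,0)`, and
`b(s) = exp(−H(ψ⁻¹(s))/α) − 1` (nonnegative on `[0,∞)`) satisfies the
Keller–Osserman condition. -/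
theorem stmt14 (α δ : ℝ) (hα : 0 < α) (hδ : 0 < δ) (h : ℝ → ℝ)
    (hcont : ContinuousOn h (Set.Ioi 0))
    (hnonneg : ∀ s > (0 : ℝ), 0 ≤ h s)
    (hmono : AntitoneOn h (Set.Ioc 0 δ))
    (hint : IntegrableOn (fun t => Real.sqrt (h t)) (Set.Ioc (0 : ℝ) 1))
    (H ψ : ℝ → ℝ)
    (hH : ∀ s > (0 : ℝ), H s = ∫ t in (1 : ℝ)..s, (h t + α / t))
    (hψ : ∀ s > (0 : ℝ), ψ s = ∫ t in s..1, Real.exp (-H t / α)) :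
    StrictAntiOn ψ (Set.Ioi 0) ∧
    ∃ psiInf : EReal, psiInf < 0 ∧
      Tendsto (fun s => ((ψ s : ℝ) : EReal)) atTop (𝓝 psiInf) ∧
      ψ '' Set.Ioi 0 = {y : ℝ | psiInf < (y : EReal)} ∧
      ∃ psiInv : ℝ → ℝ,
        (∀ s > (0 : ℝ), psiInv (ψ s) = s) ∧
        (∀ y : ℝ, psiInf < (y : EReal) → 0 < psiInv y ∧ ψ (psiInv y) = y) ∧
        (∀ s ≥ (0 : ℝ), 0 ≤ Real.exp (-H (psiInv s) / α) - 1) ∧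
        ∃ t₀ > (0 : ℝ), IntegrableOn
          (fun t => 1 / Real.sqrt
            (2 * ∫ τ in (0 : ℝ)..t, (Real.exp (-H (psiInv τ) / α) - 1)))
          (Set.Ici t₀) := by
  classical
  have uIcc_sub : ∀ a b : ℝ, 0 < a → 0 < b → uIcc a b ⊆ Ioi 0 :=
    fun a b ha hb x hx => lt_of_lt_of_le (lt_min ha hb) hx.1
  -- patched integrand
  set hh : ℝ → ℝ := fun τ => if 0 < τ then h τ + α / τ else 0 with hh_def
  have hh_eq : ∀ τ > (0:ℝ), hh τ = h τ + α / τ := by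
    intro τ hτ; simp [hh_def, hτ]
  have hh_contOn : ContinuousOn hh (Ioi 0) := by
    have : ContinuousOn (fun τ => h τ + α / τ) (Ioi 0) :=
      hcont.add (continuousOn_const.div continuousOn_id fun x hx => ne_of_gt hx)
    exact this.congr fun τ hτ => hh_eq τ hτ
  have hh_nonneg : ∀ τ ∈ Ioi (0:ℝ), 0 ≤ hh τ := by
    intro τ hτ; rw [hh_eq τ hτ]
    exact add_nonneg (hnonneg τ hτ) (le_of_lt (div_pos hα hτ))
  have hh_intble : ∀ a b : ℝ, 0 < a → 0 < b → IntervalIntegrable hh volume a b := by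
    intro a b ha hb
    exact (hh_contOn.mono (uIcc_sub a b ha hb)).intervalIntegrable
  set Hp : ℝ → ℝ := fun t => ∫ τ in (1:ℝ)..t, hh τ with Hp_def
  have hHp : ∀ t > (0:ℝ), H t = Hp t := by
    intro t ht
    rw [hH t ht, Hp_def]
    exact intervalIntegral.integral_congr fun τ hτ =>
      (hh_eq τ (uIcc_sub 1 t one_pos ht hτ)).symm
  have Hp_one : Hp 1 = 0 := intervalIntegral.integral_same
  have Hp_diff : ∀ a b : ℝ, 0 < a → 0 < b → Hp b - Hp a = ∫ τ in a..b, hh τ := by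
    intro a b ha hb
    have := intervalIntegral.integral_add_adjacent_intervals
      (hh_intble 1 a one_pos ha) (hh_intble a b ha hb)
    simp only [Hp_def]; linarith
  have Hp_deriv : ∀ t ∈ Ioi (0:ℝ), HasDerivAt Hp (hh t) t := by
    intro t ht
    exact intervalIntegral.integral_hasDerivAt_right (hh_intble 1 t one_pos ht)
      (ContinuousOn.stronglyMeasurableAtFilter isOpen_Ioi hh_contOn t ht)
      (hh_contOn.continuousAt (Ioi_mem_nhds ht))
  have Hp_mono : MonotoneOn Hp (Ioi 0) := by
    intro a ha b hb hab
    rw [← sub_nonneg, Hp_diff a b ha hb]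
    exact intervalIntegral.integral_nonneg hab
      (fun u hu => hh_nonneg u (lt_of_lt_of_le ha hu.1))
  have Hp_le_log : ∀ t ∈ Ioc (0:ℝ) 1, Hp t ≤ α * Real.log t := by
    intro t ht
    have h1 : Hp 1 - Hp t = ∫ τ in t..(1:ℝ), hh τ := Hp_diff t 1 ht.1 one_pos
    have hc : ContinuousOn (fun τ : ℝ => α * (1/τ)) (Ioi 0) :=
      continuousOn_const.mul (continuousOn_const.div continuousOn_id fun x hx => ne_of_gt hx)
    have h2 : ∫ τ in t..(1:ℝ), α * (1/τ) ≤ ∫ τ in t..(1:ℝ), hh τ := by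
      apply intervalIntegral.integral_mono_on ht.2
        ((hc.mono (uIcc_sub t 1 ht.1 one_pos)).intervalIntegrable)
        (hh_intble t 1 ht.1 one_pos)
      intro u hu
      have hu0 : 0 < u := lt_of_lt_of_le ht.1 hu.1
      rw [hh_eq u hu0]
      have : α * (1/u) = α / u := by ring
      rw [this]
      exact le_add_of_nonneg_left (hnonneg u hu0)
    have h3 : ∫ τ in t..(1:ℝ), α * (1/τ) = α * Real.log (1/t) := by
      rw [intervalIntegral.integral_const_mul, integral_one_div]
      intro hmem
      exact absurd (uIcc_sub t 1 ht.1 one_pos hmem) (lt_irrefl (0:ℝ))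
    rw [one_div, Real.log_inv] at h3
    rw [h3] at h2
    rw [Hp_one] at h1
    nlinarith
  set F : ℝ → ℝ := fun t => Real.exp (-Hp t / α) with F_def
  have hF : ∀ t > (0:ℝ), Real.exp (-H t / α) = F t := by
    intro t ht; rw [hHp t ht]
  have F_pos : ∀ t, 0 < F t := fun t => Real.exp_pos _
  have Hp_cont : ContinuousOn Hp (Ioi 0) :=
    fun t ht => ((Hp_deriv t ht).continuousAt).continuousWithinAt
  have F_contOn : ContinuousOn F (Ioi 0) :=
    Real.continuous_exp.comp_continuousOn ((Hp_cont.neg).div_const α)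
  have F_anti : AntitoneOn F (Ioi 0) := by
    intro a ha b hb hab
    apply Real.exp_le_exp.2
    have h1 := Hp_mono ha hb hab
    exact (div_le_div_iff_of_pos_right hα).2 (by linarith)
  have F_ge : ∀ t ∈ Ioc (0:ℝ) 1, 1 / t ≤ F t := by
    intro t ht
    have h1 : -Real.log t ≤ -Hp t / α := by
      rw [neg_div, neg_le_neg_iff, div_le_iff₀ hα]
      calc Hp t ≤ α * Real.log t := Hp_le_log t ht
        _ = Real.log t * α := by ring
    calc 1 / t = Real.exp (-Real.log t) := by
          rw [Real.exp_neg, Real.exp_log ht.1, one_div]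
      _ ≤ F t := Real.exp_le_exp.2 h1
  have F_intble : ∀ a b : ℝ, 0 < a → 0 < b → IntervalIntegrable F volume a b := by
    intro a b ha hb
    exact (F_contOn.mono (uIcc_sub a b ha hb)).intervalIntegrable
  set ψp : ℝ → ℝ := fun s => ∫ t in s..(1:ℝ), F t with ψp_def
  have hψp : ∀ s > (0:ℝ), ψ s = ψp s := by
    intro s hs
    rw [hψ s hs, ψp_def]
    exact intervalIntegral.integral_congr fun t htm =>
      hF t (uIcc_sub s 1 hs one_pos htm)
  have ψp_deriv : ∀ s ∈ Ioi (0:ℝ), HasDerivAt ψp (-F s) s := by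
    intro s hs
    exact intervalIntegral.integral_hasDerivAt_left (F_intble s 1 hs one_pos)
      (ContinuousOn.stronglyMeasurableAtFilter isOpen_Ioi F_contOn s hs)
      (F_contOn.continuousAt (Ioi_mem_nhds hs))
  have ψ_deriv : ∀ s ∈ Ioi (0:ℝ), HasDerivAt ψ (-F s) s := by
    intro s hs
    apply (ψp_deriv s hs).congr_of_eventuallyEq
    filter_upwards [Ioi_mem_nhds hs] with u hu
    exact hψp u hu
  have ψ_sub : ∀ a b : ℝ, 0 < a → 0 < b → ψ a - ψ b = ∫ t in a..b, F t := by
    intro a b ha hb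
    rw [hψp a ha, hψp b hb]
    have := intervalIntegral.integral_add_adjacent_intervals
      (F_intble a b ha hb) (F_intble b 1 hb one_pos)
    simp only [ψp_def]; linarith
  have ψ_anti : StrictAntiOn ψ (Ioi 0) := by
    intro a ha b hb hab
    have : 0 < ψ a - ψ b := by
      rw [ψ_sub a b ha hb]
      exact intervalIntegral.intervalIntegral_pos_of_pos_on
        (F_intble a b ha hb) (fun x _ => F_pos x) hab
    linarith
  have ψ_antiLe : AntitoneOn ψ (Ioi 0) := ψ_anti.antitoneOn
  have ψ_one : ψ 1 = 0 := by
    rw [hψ 1 one_pos, intervalIntegral.integral_same]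
  have ψ_ge_log : ∀ s ∈ Ioc (0:ℝ) 1, -Real.log s ≤ ψ s := by
    intro s hs
    have h1 : ψ s - ψ 1 = ∫ t in s..(1:ℝ), F t := ψ_sub s 1 hs.1 one_pos
    have hc : ContinuousOn (fun τ : ℝ => 1/τ) (Ioi 0) :=
      continuousOn_const.div continuousOn_id fun x hx => ne_of_gt hx
    have h2 : ∫ t in s..(1:ℝ), 1/t ≤ ∫ t in s..(1:ℝ), F t := by
      apply intervalIntegral.integral_mono_on hs.2
        ((hc.mono (uIcc_sub s 1 hs.1 one_pos)).intervalIntegrable)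
        (F_intble s 1 hs.1 one_pos)
      intro u hu
      exact F_ge u ⟨lt_of_lt_of_le hs.1 hu.1, hu.2⟩
    have h3 : ∫ t in s..(1:ℝ), 1/t = -Real.log s := by
      rw [integral_one_div]
      · rw [one_div, Real.log_inv]
      · intro hmem
        exact absurd (uIcc_sub s 1 hs.1 one_pos hmem) (lt_irrefl (0:ℝ))
    rw [h3] at h2
    rw [ψ_one] at h1
    linarith
  have ψ_cont : ContinuousOn ψ (Ioi 0) :=
    fun s hs => ((ψ_deriv s hs).continuousAt).continuousWithinAt
  refine ⟨ψ_anti, ?_⟩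
  set φ : ℝ → EReal := fun s => ((ψ (max s 1) : ℝ) : EReal) with φ_def
  have maxmem : ∀ s : ℝ, max s 1 ∈ Ioi (0:ℝ) :=
    fun s => lt_of_lt_of_le one_pos (le_max_right s 1)
  have φ_anti : Antitone φ := by
    intro a b hab
    exact EReal.coe_le_coe_iff.2
      (ψ_antiLe (maxmem a) (maxmem b) (max_le_max hab le_rfl))
  set psiInf : EReal := ⨅ s : ℝ, φ s with psiInf_def
  have hlim : Tendsto (fun s => ((ψ s : ℝ) : EReal)) atTop (𝓝 psiInf) := by
    apply (tendsto_atTop_iInf φ_anti).congr'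
    filter_upwards [eventually_ge_atTop (1:ℝ)] with s hs
    simp only [φ_def, max_eq_left hs]
  have hneg : psiInf < 0 := by
    have h1 : psiInf ≤ φ 2 := iInf_le _ 2
    have h2 : φ 2 = ((ψ 2 : ℝ) : EReal) := by
      simp only [φ_def, max_eq_left (one_le_two : (1:ℝ) ≤ 2)]
    have h3 : ψ 2 < 0 := by
      have := ψ_anti (mem_Ioi.2 one_pos) (mem_Ioi.2 two_pos) one_lt_two
      rw [ψ_one] at this; exact this
    calc psiInf ≤ ((ψ 2 : ℝ) : EReal) := h2 ▸ h1
      _ < ((0:ℝ) : EReal) := EReal.coe_lt_coe_iff.2 h3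
      _ = 0 := by norm_num
  have hlt : ∀ s > (0:ℝ), psiInf < ((ψ s : ℝ) : EReal) := by
    intro s hs
    have h1 : psiInf ≤ φ (s+1) := iInf_le _ _
    have h2 : φ (s+1) = ((ψ (s+1) : ℝ) : EReal) := by
      simp only [φ_def, max_eq_left (by linarith : (1:ℝ) ≤ s+1)]
    have h3 : ψ (s+1) < ψ s :=
      ψ_anti (mem_Ioi.2 hs) (mem_Ioi.2 (by linarith)) (lt_add_one s)
    calc psiInf ≤ ((ψ (s+1) : ℝ) : EReal) := h2 ▸ h1
      _ < _ := EReal.coe_lt_coe_iff.2 h3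
  have himage : ψ '' Set.Ioi 0 = {y : ℝ | psiInf < (y : EReal)} := by
    ext y
    constructor
    · rintro ⟨s, hs, rfl⟩
      exact hlt s hs
    · intro hy
      have hy' : psiInf < (y : EReal) := hy
      obtain ⟨s₂, hs₂⟩ := iInf_lt_iff.1 hy'
      set b : ℝ := max s₂ 1 with b_defn
      have hb0 : 0 < b := maxmem s₂
      have hψb : ψ b < y := EReal.coe_lt_coe_iff.1 hs₂
      set a : ℝ := min b (Real.exp (-(|y|+1))) with a_defn
      have ha0 : 0 < a := lt_min hb0 (Real.exp_pos _)
      have hab : a ≤ b := min_le_left _ _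
      have ha1 : a ≤ 1 := by
        have : (-(|y|+1)) ≤ 0 := by nlinarith [abs_nonneg y]
        calc a ≤ Real.exp (-(|y|+1)) := min_le_right _ _
          _ ≤ 1 := Real.exp_le_one_iff.2 this
      have hψa : |y| + 1 ≤ ψ a := by
        have hlog : Real.log a ≤ -(|y|+1) := by
          calc Real.log a ≤ Real.log (Real.exp (-(|y|+1))) :=
                Real.log_le_log ha0 (min_le_right _ _)
            _ = -(|y|+1) := Real.log_exp _
        have := ψ_ge_log a ⟨ha0, ha1⟩
        linarith
      have hy_le : y ≤ ψ a := by
        have := le_abs_self y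
        linarith
      have : y ∈ Icc (ψ b) (ψ a) := ⟨le_of_lt hψb, hy_le⟩
      have hsub : Icc a b ⊆ Ioi (0:ℝ) := fun x hx => lt_of_lt_of_le ha0 hx.1
      obtain ⟨x, hx, hxy⟩ := intermediate_value_Icc' hab (ψ_cont.mono hsub) this
      exact ⟨x, hsub hx, hxy⟩
  set psiInv : ℝ → ℝ := fun y =>
    if hy : ∃ x, x ∈ Ioi (0:ℝ) ∧ ψ x = y then hy.choose else 1 with psiInv_def
  have ps1 : ∀ s > (0:ℝ), psiInv (ψ s) = s := by
    intro s hs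
    have hy : ∃ x, x ∈ Ioi (0:ℝ) ∧ ψ x = ψ s := ⟨s, hs, rfl⟩
    simp only [psiInv_def, dif_pos hy]
    exact ψ_anti.injOn hy.choose_spec.1 hs hy.choose_spec.2
  have ps2 : ∀ y : ℝ, psiInf < (y : EReal) → 0 < psiInv y ∧ ψ (psiInv y) = y := by
    intro y hy
    have : y ∈ ψ '' Set.Ioi 0 := himage ▸ hy
    obtain ⟨x, hx, hxy⟩ := this
    have hex : ∃ x, x ∈ Ioi (0:ℝ) ∧ ψ x = y := ⟨x, hx, hxy⟩
    simp only [psiInv_def, dif_pos hex]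
    exact ⟨hex.choose_spec.1, hex.choose_spec.2⟩
  have ps_pos : ∀ y, 0 < psiInv y := by
    intro y
    simp only [psiInv_def]
    split
    · next hy => exact hy.choose_spec.1
    · exact one_pos
  have memU : ∀ y : ℝ, 0 ≤ y → psiInf < (y : EReal) := by
    intro y hy
    calc psiInf < 0 := hneg
      _ ≤ (y : EReal) := by exact_mod_cast hy
  have ps_anti : ∀ y₁ y₂ : ℝ, psiInf < (y₁ : EReal) → psiInf < (y₂ : EReal) → y₁ ≤ y₂ →
      psiInv y₂ ≤ psiInv y₁ := by
    intro y₁ y₂ h1 h2 h12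
    by_contra hcon
    push_neg at hcon
    have := ψ_anti (mem_Ioi.2 (ps_pos y₁)) (mem_Ioi.2 (ps_pos y₂)) hcon
    rw [(ps2 y₁ h1).2, (ps2 y₂ h2).2] at this
    linarith
  set bb : ℝ → ℝ := fun τ => Real.exp (-H (psiInv τ) / α) - 1 with bb_def
  have bbF : ∀ τ, bb τ = F (psiInv τ) - 1 := by
    intro τ; rw [bb_def]; simp only []; rw [hF _ (ps_pos τ)]
  have bb_mono : ∀ y₁ y₂ : ℝ, psiInf < (y₁ : EReal) → psiInf < (y₂ : EReal) → y₁ ≤ y₂ →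
      bb y₁ ≤ bb y₂ := by
    intro y₁ y₂ h1 h2 h12
    rw [bbF, bbF]
    exact sub_le_sub_right
      (F_anti (mem_Ioi.2 (ps_pos y₂)) (mem_Ioi.2 (ps_pos y₁)) (ps_anti y₁ y₂ h1 h2 h12)) 1
  have psiInv_le_one : ∀ τ : ℝ, 0 ≤ τ → psiInv τ ≤ 1 := by
    intro τ hτ
    by_contra hcon
    push_neg at hcon
    have := ψ_anti (mem_Ioi.2 one_pos) (mem_Ioi.2 (ps_pos τ)) hcon
    rw [ψ_one, (ps2 τ (memU τ hτ)).2] at this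
    linarith
  have bb_nonneg : ∀ τ ≥ (0:ℝ), 0 ≤ bb τ := by
    intro τ hτ
    rw [bbF]
    have h1 : Hp (psiInv τ) ≤ 0 := by
      have := Hp_mono (mem_Ioi.2 (ps_pos τ)) (mem_Ioi.2 one_pos) (psiInv_le_one τ hτ)
      rw [Hp_one] at this; exact this
    have : (1:ℝ) = Real.exp 0 := (Real.exp_zero).symm
    rw [sub_nonneg, this, F_def]
    apply Real.exp_le_exp.2
    have : 0 ≤ -Hp (psiInv τ) := by linarith
    positivity
  have bb_int : ∀ c d : ℝ, 0 ≤ c → IntegrableOn bb (Icc c d) := by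
    intro c d hc
    have : MonotoneOn bb (Icc c d) := fun x hx y hy hxy =>
      bb_mono x y (memU x (hc.trans hx.1)) (memU y (hc.trans hy.1)) hxy
    exact this.integrableOn_isCompact isCompact_Icc
  refine ⟨psiInf, hneg, hlim, himage, psiInv, ps1, ps2,
    (fun s hs => bb_nonneg s hs), ?_⟩
  set s₀ : ℝ := min (δ/2) 4⁻¹ with s₀_def
  have hs₀pos : 0 < s₀ := lt_min (by linarith) (by norm_num)
  have hs₀δ : 2*s₀ ≤ δ := by
    have := min_le_left (δ/2) 4⁻¹; rw [← s₀_def] at this; linarith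
  have hs₀4 : s₀ ≤ 4⁻¹ := min_le_right _ _
  have hs₀1 : s₀ < 1 := lt_of_le_of_lt hs₀4 (by norm_num)
  have ψ_nonneg : ∀ s ∈ Ioc (0:ℝ) 1, 0 ≤ ψ s := by
    intro s hs
    have := ψ_antiLe (mem_Ioi.2 hs.1) (mem_Ioi.2 one_pos) hs.2
    rw [ψ_one] at this; exact this
  have ht₀pos : 0 < ψ s₀ := by
    have h1 := ψ_ge_log s₀ ⟨hs₀pos, hs₀1.le⟩
    have h2 := Real.log_neg hs₀pos hs₀1
    linarith
  refine ⟨ψ s₀, ht₀pos, ?_⟩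
  set B : ℝ → ℝ := fun t => ∫ τ in (0:ℝ)..t, bb τ with B_def
  have bb_II : ∀ c d : ℝ, 0 ≤ c → 0 ≤ d → IntervalIntegrable bb volume c d := by
    intro c d hc hd
    apply IntegrableOn.intervalIntegrable
    exact (bb_int (min c d) (max c d) (le_min hc hd))
  have Bmono : ∀ t₁ t₂ : ℝ, 0 ≤ t₁ → t₁ ≤ t₂ → B t₁ ≤ B t₂ := by
    intro t₁ t₂ h1 h12
    have hadd := intervalIntegral.integral_add_adjacent_intervals
      (bb_II 0 t₁ le_rfl h1) (bb_II t₁ t₂ h1 (h1.trans h12))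
    have h2 : 0 ≤ ∫ τ in t₁..t₂, bb τ :=
      intervalIntegral.integral_nonneg h12 (fun u hu => bb_nonneg u (h1.trans hu.1))
    simp only [B_def]; linarith
  have est : ∀ s ∈ Ioc (0:ℝ) s₀, 0 < B (ψ s) ∧
      F s * (1 / Real.sqrt (2 * B (ψ s))) ≤
        Real.exp 2 * (1/Real.sqrt s) + (Real.exp 2 / Real.sqrt α) * Real.sqrt (h s) := by
    intro s hs
    obtain ⟨hs0, hss₀⟩ := hs
    have hsδ2 : s ≤ δ/2 := hss₀.trans (min_le_left _ _)
    have hs4 : s ≤ 4⁻¹ := hss₀.trans (min_le_right _ _)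
    have hhs : 0 ≤ h s := hnonneg s hs0
    set ℓ : ℝ := if h s * s ≤ α then s else α / h s with ℓ_def
    have hℓcase : (ℓ = s ∧ h s * s ≤ α) ∨ (ℓ = α / h s ∧ 0 < h s ∧ α < h s * s) := by
      by_cases hc : h s * s ≤ α
      · left; exact ⟨if_pos hc, hc⟩
      · right
        push_neg at hc
        refine ⟨if_neg (not_le.2 hc), ?_, hc⟩
        by_contra hh0; push_neg at hh0
        have : h s = 0 := le_antisymm hh0 hhs
        rw [this] at hc; simp at hc; linarith
    have hℓpos : 0 < ℓ := by
      rcases hℓcase with ⟨he, _⟩ | ⟨he, hpos, _⟩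
      · rw [he]; exact hs0
      · rw [he]; exact div_pos hα hpos
    have hℓle : ℓ ≤ s := by
      rcases hℓcase with ⟨he, _⟩ | ⟨he, hpos, hc⟩
      · rw [he]
      · rw [he, div_le_iff₀ hpos]; nlinarith
    have hℓh : ℓ * h s ≤ α := by
      rcases hℓcase with ⟨he, hc⟩ | ⟨he, hpos, _⟩
      · rw [he]; nlinarith
      · rw [he, div_mul_cancel₀ _ (ne_of_gt hpos)]
    set s' : ℝ := s + ℓ with s'_def
    have hs's : s < s' := lt_add_of_pos_right s hℓpos
    have hs'2s : s' ≤ 2*s := by simp only [s'_def]; linarith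
    have hs'δ : s' ≤ δ := by linarith
    have hs'half : s' ≤ 2⁻¹ := by linarith
    have hs'pos : 0 < s' := hs0.trans hs's
    have hs'1 : s' ≤ 1 := by linarith
    have hstep2 : Hp s' - Hp s ≤ 2*α := by
      rw [Hp_diff s s' hs0 hs'pos]
      have hmono' : ∀ u ∈ Icc s s', hh u ≤ h s + α / s := by
        intro u hu
        have hu0 : 0 < u := hs0.trans_le hu.1
        rw [hh_eq u hu0]
        have h1 : h u ≤ h s :=
          hmono ⟨hs0, by linarith [hu.2]⟩ ⟨hu0, by linarith [hu.2]⟩ hu.1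
        have h2 : α / u ≤ α / s := by gcongr; exact hu.1
        linarith
      have hle := intervalIntegral.integral_mono_on hs's.le
        (hh_intble s s' hs0 hs'pos) intervalIntegrable_const hmono'
      rw [intervalIntegral.integral_const] at hle
      have hsmul : (s' - s) • (h s + α/s) = ℓ * h s + ℓ * (α/s) := by
        simp only [s'_def, smul_eq_mul]; ring
      have hℓαs : ℓ * (α / s) ≤ α := by
        have h3 : ℓ * (α/s) ≤ s * (α/s) := by
          apply mul_le_mul_of_nonneg_right hℓle (by positivity)
        have h4 : s * (α/s) = α := by field_simp
        linarith
      rw [hsmul] at hle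
      linarith
    have hFs' : Real.exp (-2) * F s ≤ F s' := by
      have hdiv : -Hp s / α - 2 ≤ -Hp s' / α := by
        have h5 := (div_le_div_iff_of_pos_right hα).2
          (by linarith : -Hp s - 2*α ≤ -Hp s')
        calc -Hp s / α - 2 = (-Hp s - 2*α)/α := by field_simp
          _ ≤ -Hp s' / α := h5
      calc Real.exp (-2) * F s = Real.exp (-Hp s / α - 2) := by
            rw [Real.exp_sub, Real.exp_neg]; ring
        _ ≤ F s' := Real.exp_le_exp.2 hdiv
    have hFs'2 : 2 ≤ F s' := by
      have h6 := F_ge s' ⟨hs'pos, hs'1⟩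
      have h7 : (2:ℝ) ≤ 1 / s' := by
        rw [le_div_iff₀ hs'pos]; linarith
      linarith
    have hψdiff : ℓ * F s' ≤ ψ s - ψ s' := by
      rw [ψ_sub s s' hs0 hs'pos]
      have hmono'' : ∀ u ∈ Icc s s', F s' ≤ F u := fun u hu =>
        F_anti (mem_Ioi.2 (hs0.trans_le hu.1)) (mem_Ioi.2 hs'pos) hu.2
      have hle := intervalIntegral.integral_mono_on hs's.le
        intervalIntegrable_const (F_intble s s' hs0 hs'pos) hmono''
      rw [intervalIntegral.integral_const] at hle
      have : (s' - s) • F s' = ℓ * F s' := by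
        simp only [s'_def, smul_eq_mul]; ring
      linarith
    have hψs'0 : 0 ≤ ψ s' := ψ_nonneg s' ⟨hs'pos, hs'1⟩
    have hψss' : ψ s' ≤ ψ s :=
      ψ_antiLe (mem_Ioi.2 hs0) (mem_Ioi.2 hs'pos) hs's.le
    have hbb_lb : ∀ τ ∈ Icc (ψ s') (ψ s), F s' - 1 ≤ bb τ := by
      intro τ hτ
      have h1 : 0 ≤ τ := hψs'0.trans hτ.1
      have h2 := bb_mono (ψ s') τ (memU _ hψs'0) (memU _ h1) hτ.1
      rw [bbF (ψ s'), ps1 s' hs'pos] at h2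
      linarith
    have hB1 : (ψ s - ψ s') * (F s' - 1) ≤ ∫ τ in (ψ s')..(ψ s), bb τ := by
      have hle := intervalIntegral.integral_mono_on hψss'
        intervalIntegrable_const (bb_II (ψ s') (ψ s) hψs'0 (hψs'0.trans hψss')) hbb_lb
      rw [intervalIntegral.integral_const] at hle
      calc (ψ s - ψ s') * (F s' - 1) = (ψ s - ψ s') • (F s' - 1) := by
            rw [smul_eq_mul]
        _ ≤ _ := hle
    have hB2 : 0 ≤ ∫ τ in (0:ℝ)..(ψ s'), bb τ :=
      intervalIntegral.integral_nonneg hψs'0 (fun u hu => bb_nonneg u hu.1)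
    have hBsplit : B (ψ s) = (∫ τ in (0:ℝ)..(ψ s'), bb τ) + ∫ τ in (ψ s')..(ψ s), bb τ := by
      simp only [B_def]
      exact (intervalIntegral.integral_add_adjacent_intervals
        (bb_II 0 (ψ s') le_rfl hψs'0)
        (bb_II (ψ s') (ψ s) hψs'0 (hψs'0.trans hψss'))).symm
    have hFmid : ℓ * F s' * (F s' - 1) ≤ B (ψ s) := by
      have hF1 : (0:ℝ) ≤ F s' - 1 := by linarith
      have h8 : ℓ * F s' * (F s' - 1) ≤ (ψ s - ψ s') * (F s' - 1) :=
        mul_le_mul_of_nonneg_right hψdiff hF1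
      linarith
    have hexp4 : Real.exp (-2) * Real.exp (-2) = Real.exp (-4) := by
      rw [← Real.exp_add]; norm_num
    have hBlow : ℓ * Real.exp (-4) * (F s)^2 / 2 ≤ B (ψ s) := by
      have h1 : F s' / 2 ≤ F s' - 1 := by linarith
      have h2 : ℓ * F s' * (F s' / 2) ≤ ℓ * F s' * (F s' - 1) := by
        apply mul_le_mul_of_nonneg_left h1
        positivity
      have h3 : (Real.exp (-2) * F s)^2 ≤ (F s')^2 := by
        apply pow_le_pow_left₀ (by positivity) hFs'
      have h4 : ℓ * Real.exp (-4) * (F s)^2 / 2 = ℓ * ((Real.exp (-2) * F s)^2 / 2) := by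
        rw [← hexp4]; ring
      have h5 : ℓ * ((Real.exp (-2) * F s)^2 / 2) ≤ ℓ * ((F s')^2 / 2) := by
        apply mul_le_mul_of_nonneg_left _ hℓpos.le
        linarith
      have h6 : ℓ * ((F s')^2 / 2) = ℓ * F s' * (F s' / 2) := by ring
      linarith
    have hBpos : 0 < B (ψ s) := by
      have hq : (0:ℝ) < ℓ * Real.exp (-4) * (F s)^2 / 2 := by
        have := F_pos s; positivity
      linarith
    refine ⟨hBpos, ?_⟩
    have hsq : Real.sqrt ℓ * Real.exp (-2) * F s ≤ Real.sqrt (2 * B (ψ s)) := by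
      have h1 : ℓ * Real.exp (-4) * (F s)^2 ≤ 2 * B (ψ s) := by linarith
      have h2 : Real.sqrt (ℓ * Real.exp (-4) * (F s)^2) =
          Real.sqrt ℓ * Real.exp (-2) * F s := by
        rw [show Real.exp (-4) = (Real.exp (-2))^2 by rw [← hexp4]; ring]
        rw [Real.sqrt_mul (by positivity), Real.sqrt_mul hℓpos.le,
          Real.sqrt_sq (Real.exp_pos (-2)).le, Real.sqrt_sq (F_pos s).le]
      rw [← h2]
      exact Real.sqrt_le_sqrt h1
    have hfinal : F s * (1 / Real.sqrt (2 * B (ψ s))) ≤ Real.exp 2 / Real.sqrt ℓ := by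
      have hpos2 : 0 < Real.sqrt ℓ * Real.exp (-2) * F s := by
        have := F_pos s
        have := Real.sqrt_pos.2 hℓpos
        positivity
      have h1 : 1 / Real.sqrt (2 * B (ψ s)) ≤ 1 / (Real.sqrt ℓ * Real.exp (-2) * F s) :=
        one_div_le_one_div_of_le hpos2 hsq
      have h2 : F s * (1 / (Real.sqrt ℓ * Real.exp (-2) * F s)) = Real.exp 2 / Real.sqrt ℓ := by
        rw [Real.exp_neg]
        field_simp
        ring_nf
        exact mul_inv_cancel₀ (F_pos s).ne'
      calc F s * (1 / Real.sqrt (2 * B (ψ s)))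
          ≤ F s * (1 / (Real.sqrt ℓ * Real.exp (-2) * F s)) :=
            mul_le_mul_of_nonneg_left h1 (F_pos s).le
        _ = Real.exp 2 / Real.sqrt ℓ := h2
    rcases hℓcase with ⟨he, _⟩ | ⟨he, hpos, _⟩
    · rw [he] at hfinal
      have h2 : (0:ℝ) ≤ (Real.exp 2 / Real.sqrt α) * Real.sqrt (h s) := by positivity
      have h3 : Real.exp 2 / Real.sqrt s = Real.exp 2 * (1/Real.sqrt s) := by ring
      linarith
    · rw [he] at hfinal
      have hsqdiv : Real.sqrt (α / h s) = Real.sqrt α / Real.sqrt (h s) :=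
        Real.sqrt_div hα.le (h s)
      have hsqα : 0 < Real.sqrt α := Real.sqrt_pos.2 hα
      have hsqh : 0 < Real.sqrt (h s) := Real.sqrt_pos.2 hpos
      have h4 : Real.exp 2 / (Real.sqrt α / Real.sqrt (h s)) =
          (Real.exp 2 / Real.sqrt α) * Real.sqrt (h s) := by
        field_simp
      rw [hsqdiv, h4] at hfinal
      have h5 : (0:ℝ) ≤ Real.exp 2 * (1/Real.sqrt s) := by positivity
      linarith
  -- substitution and conclusion
  have hderivW : ∀ x ∈ Ioc (0:ℝ) s₀, HasDerivWithinAt ψ (-F x) (Ioc 0 s₀) x :=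
    fun x hx => (ψ_deriv x hx.1).hasDerivWithinAt
  have hinj : InjOn ψ (Ioc 0 s₀) := ψ_anti.injOn.mono Ioc_subset_Ioi_self
  have hiff := integrableOn_image_iff_integrableOn_abs_deriv_smul
    measurableSet_Ioc hderivW hinj (fun t => 1 / Real.sqrt (2 * B t))
  have himg2 : ψ '' (Ioc 0 s₀) = Ici (ψ s₀) := by
    apply Subset.antisymm
    · rintro _ ⟨x, hx, rfl⟩
      exact ψ_antiLe (mem_Ioi.2 hx.1) (mem_Ioi.2 hs₀pos) hx.2
    · intro y hy
      set a : ℝ := min s₀ (Real.exp (-(|y|+1))) with a_defn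
      have ha0 : 0 < a := lt_min hs₀pos (Real.exp_pos _)
      have haa : a ≤ s₀ := min_le_left _ _
      have ha1 : a ≤ 1 := by
        have hneg1 : (-(|y|+1)) ≤ 0 := by nlinarith [abs_nonneg y]
        calc a ≤ Real.exp (-(|y|+1)) := min_le_right _ _
          _ ≤ 1 := Real.exp_le_one_iff.2 hneg1
      have hψa : |y| + 1 ≤ ψ a := by
        have hlog : Real.log a ≤ -(|y|+1) := by
          calc Real.log a ≤ Real.log (Real.exp (-(|y|+1))) :=
                Real.log_le_log ha0 (min_le_right _ _)
            _ = -(|y|+1) := Real.log_exp _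
        have := ψ_ge_log a ⟨ha0, ha1⟩
        linarith
      have hy2 : y ∈ Icc (ψ s₀) (ψ a) := ⟨hy, by linarith [le_abs_self y]⟩
      have hsub : Icc a s₀ ⊆ Ioi (0:ℝ) := fun z hz => lt_of_lt_of_le ha0 hz.1
      obtain ⟨x, hx, hxy⟩ := intermediate_value_Icc' haa (ψ_cont.mono hsub) hy2
      exact ⟨x, ⟨lt_of_lt_of_le ha0 hx.1, hx.2⟩, hxy⟩
  rw [himg2] at hiff
  refine hiff.2 ?_
  -- measurability of the substituted integrand
  have hFmeas : AEStronglyMeasurable F (volume.restrict (Ioc 0 s₀)) :=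
    (F_contOn.mono Ioc_subset_Ioi_self).aestronglyMeasurable measurableSet_Ioc
  have hmono_g : MonotoneOn (fun s => 1 / Real.sqrt (2 * B (ψ s))) (Ioc 0 s₀) := by
    intro x hx y hy hxy
    have h1 : ψ y ≤ ψ x := ψ_antiLe (mem_Ioi.2 hx.1) (mem_Ioi.2 hy.1) hxy
    have h0y : 0 ≤ ψ y := ψ_nonneg y ⟨hy.1, hy.2.trans hs₀1.le⟩
    have h2 : B (ψ y) ≤ B (ψ x) := Bmono _ _ h0y h1
    have h3 : 0 < B (ψ y) := (est y hy).1
    exact one_div_le_one_div_of_le (Real.sqrt_pos.2 (by linarith))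
      (Real.sqrt_le_sqrt (by linarith))
  have hgmeas : AEStronglyMeasurable (fun s => 1 / Real.sqrt (2 * B (ψ s)))
      (volume.restrict (Ioc 0 s₀)) :=
    (aemeasurable_restrict_of_monotoneOn measurableSet_Ioc hmono_g).aestronglyMeasurable
  have hmeasside : AEStronglyMeasurable
      (fun x => |(-F x)| • (1 / Real.sqrt (2 * B (ψ x)))) (volume.restrict (Ioc 0 s₀)) := by
    have heq : (fun x => |(-F x)| • (1 / Real.sqrt (2 * B (ψ x)))) =
        fun x => F x * (1 / Real.sqrt (2 * B (ψ x))) := by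
      funext x
      rw [smul_eq_mul, abs_neg, abs_of_pos (F_pos x)]
    rw [heq]
    exact hFmeas.mul hgmeas
  -- dominating function
  have hdom1 : IntegrableOn (fun s : ℝ => 1/Real.sqrt s) (Ioc 0 s₀) := by
    have h1 : IntervalIntegrable (fun x : ℝ => x ^ (-(1:ℝ)/2)) volume 0 s₀ :=
      intervalIntegral.intervalIntegrable_rpow' (by norm_num)
    have h2 : IntegrableOn (fun x : ℝ => x ^ (-(1:ℝ)/2)) (Ioc 0 s₀) := h1.1
    apply h2.congr_fun _ measurableSet_Ioc
    intro x hx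
    show x ^ (-(1:ℝ)/2) = 1 / Real.sqrt x
    rw [one_div, Real.sqrt_eq_rpow, ← Real.rpow_neg hx.1.le]
    norm_num
  have hdom2 : IntegrableOn (fun s => Real.sqrt (h s)) (Ioc 0 s₀) :=
    hint.mono_set (Ioc_subset_Ioc_right hs₀1.le)
  have hdom : IntegrableOn
      (fun s => Real.exp 2 * (1/Real.sqrt s) + (Real.exp 2 / Real.sqrt α) * Real.sqrt (h s))
      (Ioc 0 s₀) := (hdom1.const_mul _).add (hdom2.const_mul _)
  apply Integrable.mono' hdom hmeasside
  rw [ae_restrict_iff' measurableSet_Ioc]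
  apply ae_of_all
  intro s hs
  have hest := est s hs
  have habs : |(-F s)| = F s := by rw [abs_neg, abs_of_pos (F_pos s)]
  have hnn : (0:ℝ) ≤ 1 / Real.sqrt (2 * B (ψ s)) := by positivity
  rw [Real.norm_eq_abs, smul_eq_mul, habs, abs_of_nonneg (mul_nonneg (F_pos s).le hnn)]
  exact hest.2
end

section
/- For every Λ > 0 and every γ > 2, lim_{s→0⁺} √Λ · s^{−γ/2} · exp(−∫_s^1 √Λ · t^{−γ/2} dt) = 0. In particular, the function h(s) = Λ/s^γ with γ > 2 satisfies condition (pereiro) with h₀ = 0. -/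
open Real Filter Set Topology MeasureTheory

/-- For every `Λ > 0` and `γ > 2`,
`√Λ·s^{−γ/2}·exp(−∫_s^1 √Λ·t^{−γ/2} dt) → 0` as `s → 0⁺`; i.e. `h(s) = Λ/s^γ`
with `γ > 2` satisfies condition (pereiro) with `h₀ = 0`. -/
theorem stmt15 (Λ γ : ℝ) (hΛ : 0 < Λ) (hγ : 2 < γ) :
    Tendsto
      (fun s : ℝ => Real.sqrt Λ * s ^ (-(γ / 2)) *
        Real.exp (-(∫ t in s..1, Real.sqrt Λ * t ^ (-(γ / 2)))))
      (𝓝[>] (0 : ℝ)) (𝓝 0) := by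
  set p := γ / 2 with hp
  clear_value p
  have hp1 : 1 < p := by rw [hp]; linarith
  have hpne : p - 1 ≠ 0 := by intro h; linarith [sub_eq_zero.mp h]
  have hL : 0 < Real.sqrt Λ := Real.sqrt_pos.mpr hΛ
  set c : ℝ := Real.sqrt Λ / (p - 1) with hc
  clear_value c
  have hc0 : 0 < c := hc ▸ div_pos hL (by linarith)
  -- target function F(u) along u = s^(1-p) → ∞
  set F : ℝ → ℝ := fun u => (Real.sqrt Λ * Real.exp c) *
    (u ^ (p / (p - 1)) * Real.exp (-(c * u))) with hF
  have hFlim : Tendsto F atTop (𝓝 0) := by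
    have := (tendsto_rpow_mul_exp_neg_mul_atTop_nhds_zero (p / (p - 1)) c hc0).const_mul
      (Real.sqrt Λ * Real.exp c)
    simpa [hF, neg_mul] using this
  -- s ↦ s^(1-p) tends to atTop
  have hcomp : Tendsto (fun s : ℝ => s ^ (1 - p)) (𝓝[>] (0 : ℝ)) atTop := by
    have h1 : Tendsto (fun s : ℝ => (s⁻¹) ^ (p - 1)) (𝓝[>] (0 : ℝ)) atTop :=
      (tendsto_rpow_atTop (by linarith)).comp tendsto_inv_nhdsGT_zero
    refine h1.congr' ?_
    filter_upwards [self_mem_nhdsWithin] with s (hs : 0 < s)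
    rw [← Real.rpow_neg_one s, ← Real.rpow_mul hs.le]
    congr 1
    ring
  have hmain : Tendsto (fun s : ℝ => F (s ^ (1 - p))) (𝓝[>] (0 : ℝ)) (𝓝 0) :=
    hFlim.comp hcomp
  refine hmain.congr' ?_
  filter_upwards [self_mem_nhdsWithin] with s (hs : 0 < s)
  have hint : (∫ t in s..1, Real.sqrt Λ * t ^ (-p)) =
      Real.sqrt Λ * ((1 - s ^ (1 - p)) / (1 - p)) := by
    rw [intervalIntegral.integral_const_mul, integral_rpow]
    · rw [neg_add_eq_sub, Real.one_rpow]
    · right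
      constructor
      · intro h; rw [neg_eq_iff_eq_neg] at h; linarith
      · intro h
        rcases Set.mem_uIcc.mp h with ⟨h1, _⟩ | ⟨_, h2⟩
        · linarith
        · linarith
  have hpow : s ^ (-p) = (s ^ (1 - p)) ^ (p / (p - 1)) := by
    rw [← Real.rpow_mul hs.le]
    congr 1
    field_simp
    ring
  rw [hF, hint, hpow]
  have hexp : -(Real.sqrt Λ * ((1 - s ^ (1 - p)) / (1 - p))) =
      c + (-(c * s ^ (1 - p))) := by
    have h1p : (1:ℝ) - p ≠ 0 := by intro h; linarith [sub_eq_zero.mp h]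
    rw [hc]; field_simp; ring
  rw [hexp, Real.exp_add]
  ring
end

section
/- Let h : (0,∞) → [0,∞) be continuous with lim_{s→0⁺} h(s) = +∞, lim_{s→0⁺} ∫_s^1 √(h(t)) dt = +∞, and lim_{s→0⁺} √(h(s))·exp(−∫_s^1 √(h(t)) dt) = h₀ for some h₀ ≥ 0. Let s₀ ∈ [1/2,1] be a point where h attains its minimum value on [1/2,1], and define h̄(s) = max(h(s) − h(s₀), 0) for s ∈ (0,s₀] and h̄(s) = 0 for s > s₀. Then h̄ is continuous on (0,∞), 0 ≤ h̄(s) ≤ h(s) for every s > 0, h̄(s) = 0 for every s ≥ 1, and h̄ satisfies the same three conditions as h: lim_{s→0⁺} h̄(s) = +∞, lim_{s→0⁺} ∫_s^1 √(h̄(t)) dt = +∞, and there exists h̄₀ ≥ 0 such that lim_{s→0⁺} √(h̄(s))·exp(−∫_s^1 √(h̄(t)) dt) = h̄₀. -/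
open Real Filter Set Topology MeasureTheory

private lemma sqrt_add_le' {a b : ℝ} (ha : 0 ≤ a) (hb : 0 ≤ b) :
    Real.sqrt (a + b) ≤ Real.sqrt a + Real.sqrt b := by
  have h1 : Real.sqrt (a+b) ≤ Real.sqrt ((Real.sqrt a + Real.sqrt b)^2) := by
    apply Real.sqrt_le_sqrt
    nlinarith [Real.sq_sqrt ha, Real.sq_sqrt hb, Real.sqrt_nonneg a, Real.sqrt_nonneg b]
  rwa [Real.sqrt_sq (by positivity)] at h1

/-- If `h` satisfies (contador) and (pereiro), `s₀` is a
minimum point of `h` on `[1/2,1]`, and `h̄(s) = (h(s) − h(s₀))⁺` for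
`s ∈ (0,s₀]`, `h̄(s) = 0` for `s > s₀`, then `h̄` is continuous on `(0,∞)`,
`0 ≤ h̄ ≤ h`, `h̄ ≡ 0` on `[1,∞)`, and `h̄` again satisfies (contador) and
(pereiro). -/
theorem stmt17 (h : ℝ → ℝ) (h₀ : ℝ) (hh₀ : 0 ≤ h₀)
    (hcont : ContinuousOn h (Set.Ioi 0))
    (hnonneg : ∀ s > (0 : ℝ), 0 ≤ h s)
    (hlim1 : Tendsto h (𝓝[>] (0 : ℝ)) atTop)
    (hlim2 : Tendsto (fun s => ∫ t in s..1, Real.sqrt (h t)) (𝓝[>] (0 : ℝ)) atTop)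
    (hlim3 : Tendsto
      (fun s => Real.sqrt (h s) * Real.exp (-(∫ t in s..1, Real.sqrt (h t))))
      (𝓝[>] (0 : ℝ)) (𝓝 h₀))
    (s₀ : ℝ) (hs₀mem : s₀ ∈ Set.Icc (1 / 2 : ℝ) 1)
    (hs₀min : ∀ s ∈ Set.Icc (1 / 2 : ℝ) 1, h s₀ ≤ h s)
    (hbar : ℝ → ℝ)
    (hbar_def1 : ∀ s ∈ Set.Ioc (0 : ℝ) s₀, hbar s = max (h s - h s₀) 0)
    (hbar_def2 : ∀ s > s₀, hbar s = 0) :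
    ContinuousOn hbar (Set.Ioi 0) ∧
    (∀ s > (0 : ℝ), 0 ≤ hbar s ∧ hbar s ≤ h s) ∧
    (∀ s ≥ (1 : ℝ), hbar s = 0) ∧
    Tendsto hbar (𝓝[>] (0 : ℝ)) atTop ∧
    Tendsto (fun s => ∫ t in s..1, Real.sqrt (hbar t)) (𝓝[>] (0 : ℝ)) atTop ∧
    ∃ hbar₀ ≥ (0 : ℝ), Tendsto
      (fun s => Real.sqrt (hbar s) * Real.exp (-(∫ t in s..1, Real.sqrt (hbar t))))
      (𝓝[>] (0 : ℝ)) (𝓝 hbar₀) := by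
  obtain ⟨hs₀half, hs₀le1⟩ := hs₀mem
  have hs₀pos : (0:ℝ) < s₀ := by linarith
  have hhs₀ : (0:ℝ) ≤ h s₀ := hnonneg s₀ hs₀pos
  have hbars₀ : hbar s₀ = 0 := by
    rw [hbar_def1 s₀ ⟨hs₀pos, le_refl _⟩]; simp
  have hbar_zero : ∀ s ≥ s₀, hbar s = 0 := by
    intro s hs
    rcases eq_or_lt_of_le hs with rfl | hlt
    · exact hbars₀
    · exact hbar_def2 s hlt
  -- bounds
  have key_le : ∀ s > (0 : ℝ), 0 ≤ hbar s ∧ hbar s ≤ h s := by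
    intro s hs
    rcases le_or_gt s s₀ with hle | hlt
    · rw [hbar_def1 s ⟨hs, hle⟩]
      exact ⟨le_max_right _ _, max_le (by linarith [hnonneg s hs]) (hnonneg s hs)⟩
    · rw [hbar_def2 s hlt]; exact ⟨le_refl _, hnonneg s hs⟩
  -- the comparison function
  set g : ℝ → ℝ := fun s => max (h s - h s₀) 0 with hg_def
  have hgcont : ContinuousOn g (Set.Ioi 0) :=
    (hcont.sub continuousOn_const).sup continuousOn_const
  have hbar_le_g : ∀ s > (0:ℝ), hbar s ≤ g s := by
    intro s hs
    rcases le_or_gt s s₀ with hle | hlt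
    · rw [hbar_def1 s ⟨hs, hle⟩]
    · rw [hbar_def2 s hlt]; exact le_max_right _ _
  -- continuity
  have hbarcont : ContinuousOn hbar (Set.Ioi 0) := by
    intro a ha
    have ha' : (0:ℝ) < a := ha
    rcases lt_trichotomy a s₀ with hlt | rfl | hgt
    · have hga : ContinuousAt g a :=
        hgcont.continuousAt (Ioi_mem_nhds ha')
      have heq : hbar =ᶠ[𝓝 a] g := by
        filter_upwards [Ioo_mem_nhds ha' hlt] with x hx
        exact hbar_def1 x ⟨hx.1, hx.2.le⟩
      exact (hga.congr heq.symm).continuousWithinAt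
    · -- continuity at s₀ by squeeze
      have hg0 : g a = 0 := by simp [hg_def]
      have hgt0 : Tendsto g (𝓝[Set.Ioi 0] a) (𝓝 0) := by
        have := (hgcont a ha).tendsto
        rwa [hg0] at this
      have : Tendsto hbar (𝓝[Set.Ioi 0] a) (𝓝 0) := by
        apply squeeze_zero' ?_ ?_ hgt0
        · filter_upwards [self_mem_nhdsWithin] with x hx
          exact (key_le x hx).1
        · filter_upwards [self_mem_nhdsWithin] with x hx
          exact hbar_le_g x hx
      rw [ContinuousWithinAt, hbars₀]
      exact this
    · have heq : hbar =ᶠ[𝓝 a] (fun _ => (0:ℝ)) := by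
        filter_upwards [Ioi_mem_nhds hgt] with x hx
        exact hbar_def2 x hx
      exact (continuousAt_const.congr heq.symm).continuousWithinAt
  -- zero for s ≥ 1
  have hbar_ge1 : ∀ s ≥ (1:ℝ), hbar s = 0 := fun s hs => hbar_zero s (le_trans hs₀le1 hs)
  -- continuity of sqrt compositions
  have sqh_cont : ContinuousOn (fun t => Real.sqrt (h t)) (Set.Ioi 0) :=
    Real.continuous_sqrt.comp_continuousOn hcont
  have sqb_cont : ContinuousOn (fun t => Real.sqrt (hbar t)) (Set.Ioi 0) :=
    Real.continuous_sqrt.comp_continuousOn hbarcont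
  have uIcc_sub : ∀ a b : ℝ, 0 < a → 0 < b → Set.uIcc a b ⊆ Set.Ioi 0 := by
    intro a b ha hb x hx
    exact lt_of_lt_of_le (lt_min ha hb) hx.1
  have int_h : ∀ a b : ℝ, 0 < a → 0 < b →
      IntervalIntegrable (fun t => Real.sqrt (h t)) volume a b := fun a b ha hb =>
    (sqh_cont.mono (uIcc_sub a b ha hb)).intervalIntegrable
  have int_b : ∀ a b : ℝ, 0 < a → 0 < b →
      IntervalIntegrable (fun t => Real.sqrt (hbar t)) volume a b := fun a b ha hb =>
    (sqb_cont.mono (uIcc_sub a b ha hb)).intervalIntegrable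
  -- key pointwise inequality on (0, s₀]
  have sqrt_ineq : ∀ t ∈ Set.Ioc (0:ℝ) s₀,
      Real.sqrt (h t) ≤ Real.sqrt (hbar t) + Real.sqrt (h s₀) := by
    intro t ht
    have h1 : h t ≤ hbar t + h s₀ := by
      rw [hbar_def1 t ht]
      have := le_max_left (h t - h s₀) 0
      linarith
    calc Real.sqrt (h t) ≤ Real.sqrt (hbar t + h s₀) := Real.sqrt_le_sqrt h1
      _ ≤ _ := sqrt_add_le' (key_le t ht.1).1 hhs₀
  have sq_le : ∀ t > (0:ℝ), Real.sqrt (hbar t) ≤ Real.sqrt (h t) :=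
    fun t ht => Real.sqrt_le_sqrt (key_le t ht).2
  -- ∫ on [s₀,1] of √hbar is 0
  have int_b_zero : (∫ t in s₀..1, Real.sqrt (hbar t)) = 0 := by
    rw [show (∫ t in s₀..1, Real.sqrt (hbar t)) = ∫ _ in s₀..1, (0:ℝ) from
      intervalIntegral.integral_congr (fun t ht => by
        rw [Set.uIcc_of_le hs₀le1] at ht
        rw [hbar_zero t ht.1, Real.sqrt_zero])]
    simp
  have split_b : ∀ s ∈ Set.Ioo (0:ℝ) s₀,
      (∫ t in s..1, Real.sqrt (hbar t)) = ∫ t in s..s₀, Real.sqrt (hbar t) := by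
    intro s hs
    rw [← intervalIntegral.integral_add_adjacent_intervals (int_b s s₀ hs.1 hs₀pos)
      (int_b s₀ 1 hs₀pos one_pos), int_b_zero, add_zero]
  have split_h : ∀ s ∈ Set.Ioo (0:ℝ) s₀,
      (∫ t in s..1, Real.sqrt (h t))
        = (∫ t in s..s₀, Real.sqrt (h t)) + ∫ t in s₀..1, Real.sqrt (h t) := by
    intro s hs
    rw [intervalIntegral.integral_add_adjacent_intervals (int_h s s₀ hs.1 hs₀pos)
      (int_h s₀ 1 hs₀pos one_pos)]
  -- bound on the difference of integrals over [s, s₀]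
  have diff_bound : ∀ s ∈ Set.Ioo (0:ℝ) s₀,
      (∫ t in s..s₀, Real.sqrt (h t)) - (∫ t in s..s₀, Real.sqrt (hbar t))
        ≤ s₀ * Real.sqrt (h s₀) := by
    intro s hs
    have h1 : (∫ t in s..s₀, (Real.sqrt (h t) - Real.sqrt (hbar t)))
        ≤ ∫ _ in s..s₀, Real.sqrt (h s₀) := by
      apply intervalIntegral.integral_mono_on hs.2.le
        ((int_h s s₀ hs.1 hs₀pos).sub (int_b s s₀ hs.1 hs₀pos)) intervalIntegrable_const
      intro t ht
      have := sqrt_ineq t ⟨lt_of_lt_of_le hs.1 ht.1, ht.2⟩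
      linarith
    rw [intervalIntegral.integral_sub (int_h s s₀ hs.1 hs₀pos) (int_b s s₀ hs.1 hs₀pos),
      intervalIntegral.integral_const, smul_eq_mul] at h1
    have h2 : (s₀ - s) * Real.sqrt (h s₀) ≤ s₀ * Real.sqrt (h s₀) := by
      have := Real.sqrt_nonneg (h s₀); nlinarith [hs.1]
    linarith
  -- (contador) for hbar: divergence of the integral
  have Clb : ∀ s ∈ Set.Ioo (0:ℝ) s₀,
      (∫ t in s..1, Real.sqrt (h t))
          - (s₀ * Real.sqrt (h s₀) + ∫ t in s₀..1, Real.sqrt (h t))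
        ≤ ∫ t in s..1, Real.sqrt (hbar t) := by
    intro s hs
    rw [split_b s hs, split_h s hs]
    have := diff_bound s hs
    linarith
  have evI : ∀ᶠ s in 𝓝[>] (0:ℝ), s ∈ Set.Ioo (0:ℝ) s₀ :=
    Ioo_mem_nhdsGT_of_mem ⟨le_refl 0, hs₀pos⟩
  have hbarlim2 : Tendsto (fun s => ∫ t in s..1, Real.sqrt (hbar t)) (𝓝[>] (0:ℝ)) atTop := by
    apply tendsto_atTop_mono' _ _ (tendsto_atTop_add_const_right _
      (-(s₀ * Real.sqrt (h s₀) + ∫ t in s₀..1, Real.sqrt (h t))) hlim2)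
    filter_upwards [evI] with s hs
    have := Clb s hs
    linarith
  have hbarlim1 : Tendsto hbar (𝓝[>] (0:ℝ)) atTop := by
    apply tendsto_atTop_mono' _ _ (tendsto_atTop_add_const_right _ (-(h s₀)) hlim1)
    filter_upwards [evI] with s hs
    rw [hbar_def1 s ⟨hs.1, hs.2.le⟩]
    have := le_max_left (h s - h s₀) 0
    linarith
  -- the difference function D
  set D : ℝ → ℝ := fun s =>
    (∫ t in s..1, Real.sqrt (h t)) - (∫ t in s..1, Real.sqrt (hbar t)) with hD_def
  have Dsplit : ∀ a b : ℝ, 0 < a → a ≤ b → 0 < b →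
      D a - D b = (∫ t in a..b, Real.sqrt (h t)) - ∫ t in a..b, Real.sqrt (hbar t) := by
    intro a b ha hab hb
    have e1 : (∫ t in a..1, Real.sqrt (h t))
        = (∫ t in a..b, Real.sqrt (h t)) + ∫ t in b..1, Real.sqrt (h t) :=
      (intervalIntegral.integral_add_adjacent_intervals (int_h a b ha hb)
        (int_h b 1 hb one_pos)).symm
    have e2 : (∫ t in a..1, Real.sqrt (hbar t))
        = (∫ t in a..b, Real.sqrt (hbar t)) + ∫ t in b..1, Real.sqrt (hbar t) :=
      (intervalIntegral.integral_add_adjacent_intervals (int_b a b ha hb)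
        (int_b b 1 hb one_pos)).symm
    simp only [hD_def]
    rw [e1, e2]
    ring
  have Danti : AntitoneOn D (Set.Ioo (0:ℝ) s₀) := by
    intro a ha b hb hab
    have key : (∫ t in a..b, Real.sqrt (hbar t)) ≤ ∫ t in a..b, Real.sqrt (h t) := by
      apply intervalIntegral.integral_mono_on hab (int_b a b ha.1 hb.1) (int_h a b ha.1 hb.1)
      intro t ht
      exact sq_le t (lt_of_lt_of_le ha.1 ht.1)
    have := Dsplit a b ha.1 hab hb.1
    linarith
  have Dbdd : BddAbove (D '' Set.Ioo (0:ℝ) s₀) := by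
    refine ⟨s₀ * Real.sqrt (h s₀) + ∫ t in s₀..1, Real.sqrt (h t), ?_⟩
    rintro x ⟨s, hs, rfl⟩
    have := diff_bound s hs
    have e := Dsplit s s₀ hs.1 hs.2.le hs₀pos
    have hDs₀ : D s₀ = ∫ t in s₀..1, Real.sqrt (h t) := by
      simp only [hD_def]
      rw [int_b_zero]
      ring
    rw [hDs₀] at e
    linarith
  set L : ℝ := sSup (D '' Set.Ioo (0:ℝ) s₀) with hL_def
  have DL : Tendsto D (𝓝[>] (0:ℝ)) (𝓝 L) :=
    AntitoneOn.tendsto_nhdsWithin_Ioo_right ⟨s₀/2, by constructor <;> linarith⟩ Danti Dbdd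
  -- eventual positivity facts
  have ev1 : ∀ᶠ s in 𝓝[>] (0:ℝ), h s₀ < h s := hlim1.eventually (eventually_gt_atTop (h s₀))
  have ev0 : ∀ᶠ s in 𝓝[>] (0:ℝ), (0:ℝ) < h s := hlim1.eventually (eventually_gt_atTop 0)
  -- the ratio tends to 1
  have T1 : Tendsto (fun s => Real.sqrt (hbar s) / Real.sqrt (h s)) (𝓝[>] (0:ℝ)) (𝓝 1) := by
    have base : Tendsto (fun s => 1 - h s₀ / h s) (𝓝[>] (0:ℝ)) (𝓝 1) := by
      have h1 : Tendsto (fun s => h s₀ / h s) (𝓝[>] (0:ℝ)) (𝓝 0) :=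
        Tendsto.div_atTop tendsto_const_nhds hlim1
      have h2 := (tendsto_const_nhds (x := (1:ℝ)) (f := 𝓝[>] (0:ℝ))).sub h1
      simpa using h2
    have sq : Tendsto (fun s => Real.sqrt (1 - h s₀ / h s)) (𝓝[>] (0:ℝ)) (𝓝 1) := by
      have := (Real.continuous_sqrt.tendsto 1).comp base
      simpa [Real.sqrt_one, Function.comp_def] using this
    apply sq.congr'
    filter_upwards [ev1, ev0, evI] with s h1 h0 hI
    have hne : h s ≠ 0 := ne_of_gt h0
    have e1 : 1 - h s₀ / h s = (h s - h s₀) / h s := by field_simp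
    rw [e1, Real.sqrt_div (by linarith) (h s), hbar_def1 s ⟨hI.1, hI.2.le⟩,
      max_eq_left (by linarith)]
  -- final limit
  refine ⟨hbarcont, key_le, hbar_ge1, hbarlim1, hbarlim2,
    h₀ * Real.exp L, mul_nonneg hh₀ (Real.exp_pos L).le, ?_⟩
  have Tprod : Tendsto (fun s => (Real.sqrt (hbar s) / Real.sqrt (h s)) *
      ((Real.sqrt (h s) * Real.exp (-(∫ t in s..1, Real.sqrt (h t)))) * Real.exp (D s)))
      (𝓝[>] (0:ℝ)) (𝓝 (1 * (h₀ * Real.exp L))) :=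
    T1.mul (hlim3.mul ((Real.continuous_exp.tendsto L).comp DL))
  rw [one_mul] at Tprod
  apply Tprod.congr'
  filter_upwards [ev0] with s h0
  have hsne : Real.sqrt (h s) ≠ 0 := by positivity
  have e2 : Real.exp (-(∫ t in s..1, Real.sqrt (h t))) * Real.exp (D s)
      = Real.exp (-(∫ t in s..1, Real.sqrt (hbar t))) := by
    rw [← Real.exp_add]
    congr 1
    simp only [hD_def]
    ring
  field_simp
  rw [← e2]
  ring
end
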